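/- arXiv:2405.20976 — 6 statements merged into one kernel-verified Lean document; each statement's English description precedes it below -/
import Mathlib

section
/- Let M be a preference matrix consistent with a finite list of voters {≻_1,…,≻_u,…,≻_m} each of which is α-rational. Then there exists a strict partial order ≻'_u contained in ≻_u (as a relation) whose comparability classes form a partition of the candidates into at most α disjoint chains (each chain totally ordered, and candidates in different chains incomparable), such that M is consistent with {≻_1,…,≻'_u,…,≻_m} and every voter in this new list is α-rational. -/
open scoped Classical

/-- A voter: a strict partial order on the set `C` of candidates. -/
structure Voter (C : Type) where
  rel : C → C → Prop
  irrefl : ∀ i, ¬ rel i i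
  trans : ∀ {i j k}, rel i j → rel j k → rel i k

namespace Voter

variable {C : Type}

/-- The voter strongly prefers `i` over `j`. -/
def strong (v : Voter C) (i j : C) : Prop := v.rel i j

/-- The voter weakly prefers `i` over `j`: strongly prefers, or is indifferent. -/
def weak (v : Voter C) (i j : C) : Prop := v.rel i j ∨ (¬ v.rel i j ∧ ¬ v.rel j i)

/-- A finite antichain of the voter's partial order. -/
def IsAntichainOf (v : Voter C) (A : Finset C) : Prop :=
  ∀ i ∈ A, ∀ j ∈ A, i ≠ j → ¬ v.rel i j ∧ ¬ v.rel j i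

/-- A voter is `α`-rational if every antichain of its partial order has size at most `α`. -/
def Rational (v : Voter C) (α : ℕ) : Prop :=
  ∀ A : Finset C, v.IsAntichainOf A → A.card ≤ α

end Voter

/-- Number of voters in the list `V` satisfying the predicate `P`. -/
noncomputable def countVoters {C : Type} (V : List (Voter C)) (P : Voter C → Prop) : ℕ :=
  (V.map fun v => if P v then 1 else 0).sum

/-- A (finite, nonempty) list of voters is consistent with the matrix `M` if the
rationality constraints hold for every ordered pair of distinct candidates. -/
def Consistent {C : Type} (M : C → C → ℝ) (V : List (Voter C)) : Prop :=
  V ≠ [] ∧ ∀ i j : C, i ≠ j →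
    (countVoters V (fun v => v.strong i j) : ℝ) / (V.length : ℝ) ≤ M i j ∧
      M i j ≤ (countVoters V (fun v => v.weak i j) : ℝ) / (V.length : ℝ)

/-- `M` is a preference matrix. -/
def IsPrefMatrix {C : Type} (M : C → C → ℝ) : Prop :=
  (∀ i, M i i = 0) ∧ (∀ i j, 0 ≤ M i j) ∧ (∀ i j : C, i ≠ j → M i j + M j i = 1)

/-- `M` is half-integral. -/
def HalfIntegral {C : Type} (M : C → C → ℝ) : Prop :=
  ∀ i j, M i j = 0 ∨ M i j = 1 / 2 ∨ M i j = 1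

/-- `M` is integral. -/
def Integral {C : Type} (M : C → C → ℝ) : Prop :=
  ∀ i j, M i j = 0 ∨ M i j = 1

/-- `M` is `α`-rationalizable: some finite nonempty list of `α`-rational voters is
consistent with `M`. -/
def Rationalizable {C : Type} (M : C → C → ℝ) (α : ℕ) : Prop :=
  ∃ V : List (Voter C), Consistent M V ∧ ∀ v ∈ V, v.Rational α

/-- The rationality number of `M`: the least `α` such that `M` is `α`-rationalizable. -/
noncomputable def rationalityNumber {C : Type} (M : C → C → ℝ) : ℕ :=
  sInf {α | Rationalizable M α}

/-- The unanimity graph of `M`: an edge between `i` and `j` iff `p i j = 1` or `p j i = 1`. -/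
def unanimityGraph {C : Type} (M : C → C → ℝ) : SimpleGraph C where
  Adj i j := i ≠ j ∧ (M i j = 1 ∨ M j i = 1)
  symm := by
    constructor
    intro i j h
    exact ⟨h.1.symm, h.2.symm⟩
  loopless := by
    constructor
    intro i h
    exact h.1 rfl

/-- The voting graph of `M`, as a relation: an arc from `i` to `j` iff `p i j = 1`. -/
def votingRel {C : Type} (M : C → C → ℝ) : C → C → Prop := fun i j => M i j = 1

/-- The relation `r` is acyclic on the set `S`: no directed cycle inside `S`. -/
def AcyclicOn {C : Type} (r : C → C → Prop) (S : Set C) : Prop :=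
  ∀ x, ¬ Relation.TransGen (fun a b => a ∈ S ∧ b ∈ S ∧ r a b) x x

/-- The dichromatic number of the digraph given by the relation `r`: the minimum number of
parts in a partition of the vertices into sets each inducing an acyclic subdigraph. -/
noncomputable def dichromaticNumber {C : Type} (r : C → C → Prop) : ℕ :=
  sInf {k | ∃ c : C → Fin k, ∀ m : Fin k, AcyclicOn r {x | c x = m}}

/-- `r` is a tournament: irreflexive with exactly one arc between distinct vertices. -/
def IsTournament {C : Type} (r : C → C → Prop) : Prop :=
  (∀ i, ¬ r i i) ∧ ∀ i j : C, i ≠ j → (r i j ↔ ¬ r j i)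

/-- The voter's partial order partitions the candidates into at most `α` disjoint chains:
two distinct candidates are comparable iff they lie in the same chain. -/
def ChainPartition {C : Type} (v : Voter C) (α : ℕ) : Prop :=
  ∃ c : C → ℕ, (∀ i, c i < α) ∧
    ∀ i j : C, i ≠ j → ((v.rel i j ∨ v.rel j i) ↔ c i = c j)

section Helpers

variable {C : Type}

/-- A finite nonempty set has a maximal element w.r.t. a transitive irreflexive relation. -/
lemma myExistsMaximal {r : C → C → Prop} (hirr : ∀ i, ¬ r i i)
    (htr : ∀ {i j k}, r i j → r j k → r i k) :
    ∀ S : Finset C, S.Nonempty → ∃ a ∈ S, ∀ b ∈ S, ¬ r a b := by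
  classical
  intro S
  induction S using Finset.induction_on with
  | empty => intro h; exact absurd h (by simp)
  | @insert x T hx ih =>
    intro _
    rcases T.eq_empty_or_nonempty with rfl | hT
    · exact ⟨x, by simp, by simpa using hirr x⟩
    · obtain ⟨a, haT, hamax⟩ := ih hT
      by_cases hax : r a x
      · refine ⟨x, by simp, ?_⟩
        intro b hb
        rcases Finset.mem_insert.mp hb with rfl | hb
        · exact hirr b
        · intro hxb; exact hamax b hb (htr hax hxb)
      · refine ⟨a, by simp [haT], ?_⟩
        intro b hb
        rcases Finset.mem_insert.mp hb with rfl | hb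
        · exact hax
        · exact hamax b hb

/-- A finite nonempty chain has a maximum. -/
lemma myChainMax {r : C → C → Prop} (htr : ∀ {i j k}, r i j → r j k → r i k) :
    ∀ S : Finset C, S.Nonempty → (∀ x ∈ S, ∀ y ∈ S, x = y ∨ r x y ∨ r y x) →
      ∃ a ∈ S, ∀ x ∈ S, x = a ∨ r x a := by
  classical
  intro S
  induction S using Finset.induction_on with
  | empty => intro h; exact absurd h (by simp)
  | @insert x T hx ih =>
    intro _ hch
    rcases T.eq_empty_or_nonempty with rfl | hT
    · exact ⟨x, by simp, by simp⟩
    · obtain ⟨a, haT, hamax⟩ := ih hT (fun p hp q hq =>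
        hch p (Finset.mem_insert_of_mem hp) q (Finset.mem_insert_of_mem hq))
      have hxa : x = a ∨ r x a ∨ r a x :=
        hch x (Finset.mem_insert_self _ _) a (Finset.mem_insert_of_mem haT)
      rcases hxa with rfl | hxa | hax
      · refine ⟨x, Finset.mem_insert_self _ _, ?_⟩
        intro y hy
        rcases Finset.mem_insert.mp hy with rfl | hy
        · exact Or.inl rfl
        · exact hamax y hy
      · refine ⟨a, Finset.mem_insert_of_mem haT, ?_⟩
        intro y hy
        rcases Finset.mem_insert.mp hy with rfl | hy
        · exact Or.inr hxa
        · exact hamax y hy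
      · refine ⟨x, Finset.mem_insert_self _ _, ?_⟩
        intro y hy
        rcases Finset.mem_insert.mp hy with rfl | hy
        · exact Or.inl rfl
        · rcases hamax y hy with rfl | hya
          · exact Or.inr hax
          · exact Or.inr (htr hya hax)

end Helpers

section DilworthProof

variable {C : Type}

/-- Finite Dilworth: a finite set whose antichains have size at most `α` can be
partitioned into at most `α` chains. -/
lemma myFinDilworth {r : C → C → Prop} (hirr : ∀ i, ¬ r i i)
    (htr : ∀ {i j k}, r i j → r j k → r i k) :
    ∀ (n : ℕ) (A : Finset C) (α : ℕ), A.card = n →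
      (∀ B ⊆ A, (∀ i ∈ B, ∀ j ∈ B, i ≠ j → ¬ r i j ∧ ¬ r j i) → B.card ≤ α) →
      ∃ c : C → ℕ, (∀ x ∈ A, c x < α) ∧
        ∀ i ∈ A, ∀ j ∈ A, c i = c j → i = j ∨ r i j ∨ r j i := by
  classical
  intro n
  induction n using Nat.strong_induction_on with
  | _ n ih =>
  intro A α hcard hW
  rcases A.eq_empty_or_nonempty with rfl | hA
  · exact ⟨fun _ => 0, by simp, by simp⟩
  have hα : 1 ≤ α := by
    obtain ⟨x0, hx0⟩ := hA
    have := hW {x0} (by simpa) (by simp)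
    simpa using this
  obtain ⟨a, haA, hamax⟩ := myExistsMaximal hirr htr A hA
  set A' := A.erase a with hA'def
  have hA'sub : A' ⊆ A := Finset.erase_subset _ _
  have hA'card : A'.card < n := by
    rw [← hcard, hA'def]; exact Finset.card_erase_lt_of_mem haA
  by_cases hbig : ∃ B ⊆ A', (∀ i ∈ B, ∀ j ∈ B, i ≠ j → ¬ r i j ∧ ¬ r j i) ∧ B.card = α
  · -- hard case: A' still has a maximum antichain of size α
    obtain ⟨c', hc'lt, hc'chain⟩ := ih A'.card hA'card A' α rfl
      (fun B hB hBa => hW B (hB.trans hA'sub) hBa)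
    -- every α-antichain of A' hits every color
    have hhit : ∀ B ⊆ A', (∀ i ∈ B, ∀ j ∈ B, i ≠ j → ¬ r i j ∧ ¬ r j i) → B.card = α →
        ∀ m < α, ∃ x ∈ B, c' x = m := by
      intro B hB hanti hBcard m hm
      have hinj : Set.InjOn c' ↑B := by
        intro i hi j hj hij
        by_contra hne
        rcases hc'chain i (hB hi) j (hB hj) hij with h | h | h
        · exact hne h
        · exact (hanti i hi j hj hne).1 h
        · exact (hanti i hi j hj hne).2 h
      have hsub : B.image c' ⊆ Finset.range α := by
        intro y hy
        obtain ⟨x, hx, rfl⟩ := Finset.mem_image.mp hy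
        exact Finset.mem_range.mpr (hc'lt x (hB hx))
      have heq : B.image c' = Finset.range α :=
        Finset.eq_of_subset_of_card_le hsub
          (by rw [Finset.card_image_of_injOn hinj, hBcard, Finset.card_range])
      have : m ∈ B.image c' := heq ▸ Finset.mem_range.mpr hm
      obtain ⟨x, hx, hcx⟩ := Finset.mem_image.mp this
      exact ⟨x, hx, hcx⟩
    -- for each color m, the set of elements of α-antichains of that color
    have hT : ∀ m : Fin α, ∃ b,
        (b ∈ A' ∧ c' b = (m : ℕ) ∧ ∃ B ⊆ A',
          (∀ i ∈ B, ∀ j ∈ B, i ≠ j → ¬ r i j ∧ ¬ r j i) ∧ B.card = α ∧ b ∈ B) ∧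
        (∀ x, (x ∈ A' ∧ c' x = (m : ℕ) ∧ ∃ B ⊆ A',
          (∀ i ∈ B, ∀ j ∈ B, i ≠ j → ¬ r i j ∧ ¬ r j i) ∧ B.card = α ∧ x ∈ B) →
          x = b ∨ r x b) := by
      intro m
      set P : C → Prop := fun x => x ∈ A' ∧ c' x = (m : ℕ) ∧ ∃ B ⊆ A',
          (∀ i ∈ B, ∀ j ∈ B, i ≠ j → ¬ r i j ∧ ¬ r j i) ∧ B.card = α ∧ x ∈ B with hP
      set T : Finset C := A'.filter P with hTdef
      have hTmem : ∀ x, x ∈ T ↔ P x := by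
        intro x
        constructor
        · intro hx; exact (Finset.mem_filter.mp hx).2
        · intro hx; exact Finset.mem_filter.mpr ⟨hx.1, hx⟩
      have hTne : T.Nonempty := by
        obtain ⟨B0, hB0sub, hB0anti, hB0card⟩ := hbig
        obtain ⟨x, hxB, hcx⟩ := hhit B0 hB0sub hB0anti hB0card (m : ℕ) m.isLt
        exact ⟨x, (hTmem x).mpr ⟨hB0sub hxB, hcx, B0, hB0sub, hB0anti, hB0card, hxB⟩⟩
      have hTchain : ∀ x ∈ T, ∀ y ∈ T, x = y ∨ r x y ∨ r y x := by
        intro x hx y hy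
        have hpx := (hTmem x).mp hx
        have hpy := (hTmem y).mp hy
        by_cases hxy : x = y
        · exact Or.inl hxy
        · exact hc'chain x hpx.1 y hpy.1 (hpx.2.1.trans hpy.2.1.symm)
      obtain ⟨b, hbT, hbmax⟩ := myChainMax (r := r) htr T hTne hTchain
      exact ⟨b, (hTmem b).mp hbT, fun x hx => hbmax x ((hTmem x).mpr hx)⟩
    choose am ham hammax using hT
    -- the am form an antichain
    have hnoarc : ∀ m l : Fin α, ¬ r (am m) (am l) := by
      intro m l harc
      obtain ⟨_, _, B, hBsub, hBanti, hBcard, hmem⟩ := ham l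
      obtain ⟨x, hxB, hcx⟩ := hhit B hBsub hBanti hBcard (m : ℕ) m.isLt
      have hxP : x = am m ∨ r x (am m) :=
        hammax m x ⟨hBsub hxB, hcx, B, hBsub, hBanti, hBcard, hxB⟩
      have hxl : r x (am l) := by
        rcases hxP with rfl | hxm
        · exact harc
        · exact htr hxm harc
      by_cases hxeq : x = am l
      · exact hirr _ (hxeq ▸ hxl)
      · exact (hBanti x hxB (am l) hmem hxeq).1 hxl
    have hamA' : ∀ m : Fin α, am m ∈ A' := fun m => (ham m).1
    have hamc : ∀ m : Fin α, c' (am m) = (m : ℕ) := fun m => (ham m).2.1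
    have haminj : Function.Injective am := by
      intro m l h
      have := (hamc m).symm.trans (h ▸ hamc l)
      exact Fin.ext this
    -- a is comparable to some am, necessarily am m below a
    have hcomp : ∃ m : Fin α, r (am m) a := by
      by_contra hnone
      push_neg at hnone
      set B1 : Finset C := insert a (Finset.image am Finset.univ) with hB1
      have hB1sub : B1 ⊆ A := by
        intro x hx
        rcases Finset.mem_insert.mp hx with rfl | hx
        · exact haA
        · obtain ⟨m, _, rfl⟩ := Finset.mem_image.mp hx
          exact hA'sub (hamA' m)
      have hB1anti : ∀ i ∈ B1, ∀ j ∈ B1, i ≠ j → ¬ r i j ∧ ¬ r j i := by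
        intro i hi j hj hij
        rcases Finset.mem_insert.mp hi with rfl | hi <;>
          rcases Finset.mem_insert.mp hj with h | hj
        · exact absurd h.symm hij
        · obtain ⟨m, _, rfl⟩ := Finset.mem_image.mp hj
          exact ⟨hamax _ (hA'sub (hamA' m)), hnone m⟩
        · obtain ⟨m, _, rfl⟩ := Finset.mem_image.mp hi
          subst h
          exact ⟨hnone m, hamax _ (hA'sub (hamA' m))⟩
        · obtain ⟨m, _, rfl⟩ := Finset.mem_image.mp hi
          obtain ⟨l, _, rfl⟩ := Finset.mem_image.mp hj
          exact ⟨hnoarc m l, hnoarc l m⟩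
      have hanotin : a ∉ Finset.image am Finset.univ := by
        intro h
        obtain ⟨m, _, hm⟩ := Finset.mem_image.mp h
        exact (Finset.mem_erase.mp (hamA' m)).1 hm
      have hB1card : B1.card = α + 1 := by
        rw [hB1, Finset.card_insert_of_notMem hanotin,
          Finset.card_image_of_injective _ haminj, Finset.card_univ, Fintype.card_fin]
      have := hW B1 hB1sub hB1anti
      omega
    obtain ⟨m, hma⟩ := hcomp
    -- the chain K
    set K : Finset C := insert a (A'.filter fun x => c' x = (m : ℕ) ∧ (x = am m ∨ r x (am m)))
      with hKdef
    have hKchain : ∀ x ∈ K, ∀ y ∈ K, x = y ∨ r x y ∨ r y x := by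
      have hbelow : ∀ x, x ∈ A'.filter (fun x => c' x = (m : ℕ) ∧ (x = am m ∨ r x (am m))) →
          r x a := by
        intro x hx
        obtain ⟨_, _, hle⟩ := Finset.mem_filter.mp hx
        rcases hle with rfl | hlt
        · exact hma
        · exact htr hlt hma
      intro x hx y hy
      rcases Finset.mem_insert.mp hx with rfl | hx <;>
        rcases Finset.mem_insert.mp hy with h | hy
      · exact Or.inl h.symm
      · exact Or.inr (Or.inr (hbelow y hy))
      · subst h; exact Or.inr (Or.inl (hbelow x hx))
      · have hx' := Finset.mem_filter.mp hx
        have hy' := Finset.mem_filter.mp hy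
        by_cases hxy : x = y
        · exact Or.inl hxy
        · exact hc'chain x hx'.1 y hy'.1 (hx'.2.1.trans hy'.2.1.symm)
    have hKsubA : K ⊆ A := by
      intro x hx
      rcases Finset.mem_insert.mp hx with rfl | hx
      · exact haA
      · exact hA'sub (Finset.mem_filter.mp hx).1
    have hrest : (A \ K).card < n := by
      rw [← hcard]
      apply Finset.card_lt_card
      constructor
      · exact Finset.sdiff_subset
      · intro hsub
        have := hsub haA
        exact (Finset.mem_sdiff.mp this).2 (Finset.mem_insert_self _ _)
    have hW'' : ∀ B ⊆ A \ K, (∀ i ∈ B, ∀ j ∈ B, i ≠ j → ¬ r i j ∧ ¬ r j i) →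
        B.card ≤ α - 1 := by
      intro B hB hanti
      have hle : B.card ≤ α := hW B (hB.trans Finset.sdiff_subset) hanti
      have hne : B.card ≠ α := by
        intro hBcard
        have hBA' : B ⊆ A' := by
          intro x hx
          have hx' := Finset.mem_sdiff.mp (hB hx)
          refine Finset.mem_erase.mpr ⟨?_, hx'.1⟩
          intro hxa
          exact hx'.2 (hxa ▸ Finset.mem_insert_self _ _)
        obtain ⟨x, hxB, hcx⟩ := hhit B hBA' hanti hBcard (m : ℕ) m.isLt
        have hxle : x = am m ∨ r x (am m) :=
          hammax m x ⟨hBA' hxB, hcx, B, hBA', hanti, hBcard, hxB⟩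
        have hxK : x ∈ K := Finset.mem_insert_of_mem
          (Finset.mem_filter.mpr ⟨hBA' hxB, hcx, hxle⟩)
        exact (Finset.mem_sdiff.mp (hB hxB)).2 hxK
      omega
    obtain ⟨c'', hc''lt, hc''chain⟩ := ih (A \ K).card hrest (A \ K) (α - 1) rfl hW''
    refine ⟨fun x => if x ∈ K then α - 1 else c'' x, ?_, ?_⟩
    · intro x hx
      by_cases hxK : x ∈ K
      · simp only [hxK, if_true]; omega
      · have : c'' x < α - 1 := hc''lt x (Finset.mem_sdiff.mpr ⟨hx, hxK⟩)
        simp only [hxK, if_false]; omega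
    · intro i hi j hj hcij
      by_cases hiK : i ∈ K <;> by_cases hjK : j ∈ K
      · exact hKchain i hiK j hjK
      · exfalso
        have : c'' j < α - 1 := hc''lt j (Finset.mem_sdiff.mpr ⟨hj, hjK⟩)
        simp only [hiK, hjK, if_true, if_false] at hcij
        omega
      · exfalso
        have : c'' i < α - 1 := hc''lt i (Finset.mem_sdiff.mpr ⟨hi, hiK⟩)
        simp only [hiK, hjK, if_true, if_false] at hcij
        omega
      · simp only [hiK, hjK, if_false] at hcij
        exact hc''chain i (Finset.mem_sdiff.mpr ⟨hi, hiK⟩) j (Finset.mem_sdiff.mpr ⟨hj, hjK⟩) hcij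
  · -- easy case: antichains of A' have size ≤ α - 1
    have hW' : ∀ B ⊆ A', (∀ i ∈ B, ∀ j ∈ B, i ≠ j → ¬ r i j ∧ ¬ r j i) →
        B.card ≤ α - 1 := by
      intro B hB hanti
      have h1 : B.card ≤ α := hW B (hB.trans hA'sub) hanti
      have h2 : B.card ≠ α := fun h => hbig ⟨B, hB, hanti, h⟩
      omega
    obtain ⟨c', h1, h2⟩ := ih A'.card hA'card A' (α - 1) rfl hW'
    refine ⟨fun x => if x = a then α - 1 else c' x, ?_, ?_⟩
    · intro x hx
      by_cases hxa : x = a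
      · simp only [hxa, if_true]; omega
      · have : c' x < α - 1 := h1 x (Finset.mem_erase.mpr ⟨hxa, hx⟩)
        simp only [hxa, if_false]; omega
    · intro i hi j hj hcij
      by_cases hia : i = a <;> by_cases hja : j = a
      · exact Or.inl (hia.trans hja.symm)
      · exfalso
        have : c' j < α - 1 := h1 j (Finset.mem_erase.mpr ⟨hja, hj⟩)
        simp only [hia, hja, if_true, if_false] at hcij
        omega
      · exfalso
        have : c' i < α - 1 := h1 i (Finset.mem_erase.mpr ⟨hia, hi⟩)
        simp only [hia, hja, if_true, if_false] at hcij
        omega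
      · simp only [hia, hja, if_false] at hcij
        exact h2 i (Finset.mem_erase.mpr ⟨hia, hi⟩) j (Finset.mem_erase.mpr ⟨hja, hj⟩) hcij

/-- Infinite Dilworth, via an ultrafilter compactness argument. -/
lemma myDilworth {r : C → C → Prop} (hirr : ∀ i, ¬ r i i)
    (htr : ∀ {i j k}, r i j → r j k → r i k) (α : ℕ) (hα : 1 ≤ α)
    (hW : ∀ B : Finset C, (∀ i ∈ B, ∀ j ∈ B, i ≠ j → ¬ r i j ∧ ¬ r j i) → B.card ≤ α) :
    ∃ c : C → Fin α, ∀ i j, c i = c j → i = j ∨ r i j ∨ r j i := by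
  classical
  have hfin : ∀ F : Finset C, ∃ c : C → Fin α,
      ∀ i ∈ F, ∀ j ∈ F, c i = c j → i = j ∨ r i j ∨ r j i := by
    intro F
    obtain ⟨c, hclt, hcchain⟩ := myFinDilworth hirr htr F.card F α rfl (fun B _ hB => hW B hB)
    refine ⟨fun x => if hx : x ∈ F then ⟨c x, hclt x hx⟩ else ⟨0, hα⟩, ?_⟩
    intro i hi j hj hcij
    simp only [hi, hj, dif_pos] at hcij
    exact hcchain i hi j hj (Fin.mk_eq_mk.mp hcij)
  choose cF hcF using hfin
  haveI : Nonempty (Finset C) := ⟨∅⟩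
  set U : Ultrafilter (Finset C) := Ultrafilter.of Filter.atTop with hU
  have hUle : (U : Filter (Finset C)) ≤ Filter.atTop := Ultrafilter.of_le _
  have hcolor : ∀ x : C, ∃ a : Fin α, {F | cF F x = a} ∈ U := by
    intro x
    obtain ⟨a, ha⟩ := (U.map (fun F => cF F x)).eq_pure_of_finite
    refine ⟨a, ?_⟩
    have : {a} ∈ U.map (fun F => cF F x) := by rw [ha]; exact Filter.mem_pure.mpr rfl
    simpa [Ultrafilter.mem_map, Set.preimage, Set.mem_singleton_iff] using this
  choose c hc using hcolor
  refine ⟨c, ?_⟩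
  intro i j hcij
  have h1 : {F | cF F i = c i} ∈ U := hc i
  have h2 : {F | cF F j = c j} ∈ U := hc j
  have h3 : {F : Finset C | {i, j} ⊆ F} ∈ U := by
    apply hUle
    exact Filter.mem_atTop ({i, j} : Finset C)
  have hne : ({F | cF F i = c i} ∩ ({F | cF F j = c j} ∩ {F : Finset C | {i, j} ⊆ F})).Nonempty := by
    apply Ultrafilter.nonempty_of_mem
    exact Filter.inter_mem h1 (Filter.inter_mem h2 h3)
  obtain ⟨F, hFi, hFj, hFij⟩ := hne
  have hiF : i ∈ F := hFij (by simp)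
  have hjF : j ∈ F := hFij (by simp)
  exact hcF F i hiF j hjF (by rw [hFi, hFj, hcij])

end DilworthProof

section Counting

variable {C : Type}

lemma countVoters_set_le (P : Voter C → Prop) (v' : Voter C) :
    ∀ (V : List (Voter C)) (u : ℕ) (hu : u < V.length),
      (P v' → P (V.get ⟨u, hu⟩)) → countVoters (V.set u v') P ≤ countVoters V P := by
  intro V
  induction V with
  | nil => intro u hu; simp at hu
  | cons a t ih =>
    intro u hu himp
    cases u with
    | zero =>
      simp only [List.set_cons_zero, countVoters, List.map_cons, List.sum_cons]
      have : (if P v' then 1 else 0) ≤ (if P a then 1 else 0) := by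
        by_cases h : P v'
        · have ha : P a := by simpa using himp h
          simp [h, ha]
        · simp [h]
      omega
    | succ u' =>
      simp only [List.set_cons_succ, countVoters, List.map_cons, List.sum_cons]
      have := ih u' (by simpa using hu) himp
      simp only [countVoters] at this
      omega

lemma countVoters_set_ge (P : Voter C → Prop) (v' : Voter C) :
    ∀ (V : List (Voter C)) (u : ℕ) (hu : u < V.length),
      (P (V.get ⟨u, hu⟩) → P v') → countVoters V P ≤ countVoters (V.set u v') P := by
  intro V
  induction V with
  | nil => intro u hu; simp at hu
  | cons a t ih =>
    intro u hu himp
    cases u with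
    | zero =>
      simp only [List.set_cons_zero, countVoters, List.map_cons, List.sum_cons]
      have : (if P a then 1 else 0) ≤ (if P v' then 1 else 0) := by
        by_cases h : P a
        · have hb : P v' := himp (by simpa using h)
          simp [h, hb]
        · simp [h]
      omega
    | succ u' =>
      simp only [List.set_cons_succ, countVoters, List.map_cons, List.sum_cons]
      have := ih u' (by simpa using hu) himp
      simp only [countVoters] at this
      omega

end Counting

/-- any voter in a consistent list of `α`-rational voters can be replaced by
a suborder that partitions the candidates into at most `α` disjoint chains, keeping
consistency and `α`-rationality. -/
theorem exists_chain_replacement {C : Type} (M : C → C → ℝ) (hM : IsPrefMatrix M)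
    (α : ℕ) (V : List (Voter C)) (hCons : Consistent M V) (hRat : ∀ v ∈ V, v.Rational α)
    (u : ℕ) (hu : u < V.length) :
    ∃ v' : Voter C,
      (∀ i j, v'.rel i j → (V.get ⟨u, hu⟩).rel i j) ∧
      ChainPartition v' α ∧
      Consistent M (V.set u v') ∧
      ∀ w ∈ V.set u v', w.Rational α := by
    classical
  set v : Voter C := V.get ⟨u, hu⟩ with hv
  have hvmem : v ∈ V := V.get_mem ⟨u, hu⟩
  have hvrat : v.Rational α := hRat v hvmem
  have hirr : ∀ i, ¬ v.rel i i := v.irrefl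
  have htr : ∀ {i j k}, v.rel i j → v.rel j k → v.rel i k := v.trans
  have hasymm : ∀ {i j}, v.rel i j → ¬ v.rel j i := fun {i j} h h' => hirr i (htr h h')
  -- a coloring of the candidates into at most α chains of v
  have hcex : ∃ c : C → ℕ, (∀ i, c i < α) ∧
      (∀ i j, c i = c j → i = j ∨ v.rel i j ∨ v.rel j i) := by
    by_cases hC : Nonempty C
    · have hα : 1 ≤ α := by
        obtain ⟨x0⟩ := hC
        have := hvrat {x0} (by
          intro i hi j hj hij
          simp only [Finset.mem_singleton] at hi hj
          exact absurd (hi.trans hj.symm) hij)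
        simpa using this
      obtain ⟨c, hc⟩ := myDilworth hirr htr α hα (fun B hB => hvrat B hB)
      exact ⟨fun x => (c x).val, fun i => (c i).isLt, fun i j h => hc i j (Fin.ext h)⟩
    · exact ⟨fun _ => 0, fun i => absurd ⟨i⟩ hC, fun i j _ => absurd ⟨i⟩ hC⟩
  obtain ⟨c, hclt, hcchain⟩ := hcex
  set v' : Voter C :=
    { rel := fun i j => v.rel i j ∧ c i = c j
      irrefl := fun i h => hirr i h.1
      trans := fun {i j k} h1 h2 => ⟨htr h1.1 h2.1, h1.2.trans h2.2⟩ } with hv'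
  have hsub : ∀ i j, v'.rel i j → v.rel i j := fun i j h => h.1
  have hv'rat : v'.Rational α := by
    intro A hA
    have hinj : Set.InjOn c ↑A := by
      intro i hi j hj hcij
      by_contra hne
      rcases hcchain i j hcij with h | h | h
      · exact hne h
      · exact (hA i hi j hj hne).1 ⟨h, hcij⟩
      · exact (hA i hi j hj hne).2 ⟨h, hcij.symm⟩
    calc A.card = (A.image c).card := (Finset.card_image_of_injOn hinj).symm
      _ ≤ (Finset.range α).card := Finset.card_le_card (by
          intro y hy
          obtain ⟨x, _, rfl⟩ := Finset.mem_image.mp hy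
          exact Finset.mem_range.mpr (hclt x))
      _ = α := Finset.card_range α
  refine ⟨v', hsub, ?_, ?_, ?_⟩
  · -- chain partition
    refine ⟨c, hclt, ?_⟩
    intro i j hij
    constructor
    · rintro (h | h)
      · exact h.2
      · exact h.2.symm
    · intro h
      rcases hcchain i j h with rfl | hr | hr
      · exact absurd rfl hij
      · exact Or.inl ⟨hr, h⟩
      · exact Or.inr ⟨hr, h.symm⟩
  · -- consistency
    obtain ⟨hne, hcons⟩ := hCons
    have hlenpos : 0 < V.length := lt_of_le_of_lt (Nat.zero_le u) hu
    have hlen : (V.set u v').length = V.length := List.length_set ..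
    constructor
    · intro h
      rw [h] at hlen
      simp at hlen
      omega
    · intro i j hij
      obtain ⟨hlo, hhi⟩ := hcons i j hij
      have hnpos : (0 : ℝ) < (V.length : ℝ) := by exact_mod_cast hlenpos
      have hs : countVoters (V.set u v') (fun w => w.strong i j) ≤
          countVoters V (fun w => w.strong i j) :=
        countVoters_set_le _ v' V u hu (fun h => hsub i j h)
      have hwimp : v.weak i j → v'.weak i j := by
        intro h
        by_cases hij' : v'.rel i j
        · exact Or.inl hij'
        · refine Or.inr ⟨hij', fun hji => ?_⟩
          rcases h with h | h
          · exact hasymm h hji.1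
          · exact h.2 hji.1
      have hw : countVoters V (fun w => w.weak i j) ≤
          countVoters (V.set u v') (fun w => w.weak i j) :=
        countVoters_set_ge _ v' V u hu hwimp
      rw [hlen]
      constructor
      · exact le_trans ((div_le_div_iff_of_pos_right hnpos).mpr (by exact_mod_cast hs)) hlo
      · exact le_trans hhi ((div_le_div_iff_of_pos_right hnpos).mpr (by exact_mod_cast hw))
  · -- rationality
    intro w hw
    rcases List.mem_or_eq_of_mem_set hw with hwV | rfl
    · exact hRat w hwV
    · exact hv'rat
end

section
/- If a preference matrix M is α-rationalizable, then M is consistent with a finite list of α-rational voters each of whose strict partial orders partitions the candidates into at most α disjoint chains (each chain totally ordered, and candidates in different chains incomparable). -/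
open scoped Classical

section Dilworth

variable {C : Type} (r : C → C → Prop)

/-- `A` is an antichain of `r`. -/
def IsAC (A : Finset C) : Prop := ∀ x ∈ A, ∀ y ∈ A, x ≠ y → ¬ r x y ∧ ¬ r y x

/-- Max antichain size within `S`. -/
noncomputable def mA (S : Finset C) : ℕ :=
  (S.powerset.filter (IsAC r)).sup Finset.card

lemma isAC_subset {A B : Finset C} (h : A ⊆ B) (hB : IsAC r B) : IsAC r A :=
  fun x hx y hy hxy => hB x (h hx) y (h hy) hxy

lemma card_le_mA {A S : Finset C} (hAS : A ⊆ S) (hA : IsAC r A) : A.card ≤ mA r S :=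
  Finset.le_sup (by simp [Finset.mem_filter, Finset.mem_powerset, hAS, hA])

lemma mA_mono {S T : Finset C} (h : S ⊆ T) : mA r S ≤ mA r T := by
  apply Finset.sup_le
  intro A hA
  simp only [Finset.mem_filter, Finset.mem_powerset] at hA
  exact card_le_mA r (hA.1.trans h) hA.2

lemma mA_le {S : Finset C} {k : ℕ} (h : ∀ A ⊆ S, IsAC r A → A.card ≤ k) :
    mA r S ≤ k := by
  apply Finset.sup_le
  intro A hA
  simp only [Finset.mem_filter, Finset.mem_powerset] at hA
  exact h A hA.1 hA.2

lemma exists_mA (S : Finset C) : ∃ A ⊆ S, IsAC r A ∧ A.card = mA r S := by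
  have hne : (S.powerset.filter (IsAC r)).Nonempty := by
    refine ⟨∅, ?_⟩
    simp [Finset.mem_filter, IsAC]
  obtain ⟨A, hA, hcard⟩ := Finset.exists_mem_eq_sup _ hne Finset.card
  simp only [Finset.mem_filter, Finset.mem_powerset] at hA
  exact ⟨A, hA.1, hA.2, hcard.symm⟩

lemma one_le_mA {S : Finset C} {x : C} (hx : x ∈ S) : 1 ≤ mA r S := by
  have := card_le_mA r (A := {x}) (S := S) (by simpa using hx)
    (by intro a ha b hb hab; simp at ha hb; exact absurd (ha.trans hb.symm) hab)
  simpa using this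

lemma mA_erase_le {S : Finset C} (a : C) : mA r S ≤ mA r (S.erase a) + 1 := by
  obtain ⟨A, hAS, hAC, hcard⟩ := exists_mA r S
  have h1 : (A.erase a).card ≤ mA r (S.erase a) :=
    card_le_mA r (fun x hx => by
      rw [Finset.mem_erase] at hx ⊢; exact ⟨hx.1, hAS hx.2⟩)
      (isAC_subset r (Finset.erase_subset _ _) hAC)
  have h2 : A.card ≤ (A.erase a).card + 1 := by
    by_cases ha : a ∈ A
    · rw [Finset.card_erase_of_mem ha]; omega
    · rw [Finset.erase_eq_of_notMem ha]; omega
  omega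

lemma exists_maximal_rel (hirr : ∀ x, ¬ r x x) (htr : Transitive r)
    {S : Finset C} (hS : S.Nonempty) : ∃ a ∈ S, ∀ y ∈ S, ¬ r a y := by
  classical
  induction S using Finset.induction_on with
  | empty => exact absurd hS (by simp)
  | @insert b S hb ih =>
    by_cases hSne : S.Nonempty
    · obtain ⟨a, haS, hamax⟩ := ih hSne
      by_cases hr : r a b
      · refine ⟨b, Finset.mem_insert_self _ _, ?_⟩
        intro y hy
        rcases Finset.mem_insert.1 hy with rfl | hy
        · exact hirr y
        · intro hby; exact hamax y hy (htr hr hby)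
      · refine ⟨a, Finset.mem_insert_of_mem haS, ?_⟩
        intro y hy
        rcases Finset.mem_insert.1 hy with rfl | hy
        · exact hr
        · exact hamax y hy
    · refine ⟨b, Finset.mem_insert_self _ _, ?_⟩
      intro y hy
      rcases Finset.mem_insert.1 hy with rfl | hy
      · exact hirr y
      · exact absurd ⟨y, hy⟩ hSne

end Dilworth

theorem dilworth_aux {C : Type} (r : C → C → Prop) (hirr : ∀ x, ¬ r x x)
    (htr : Transitive r) :
    ∀ n (S : Finset C), S.card ≤ n →
      ∃ f : C → ℕ, (∀ x ∈ S, f x < mA r S) ∧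
        (∀ x ∈ S, ∀ y ∈ S, x ≠ y → f x = f y → r x y ∨ r y x) := by
  intro n
  induction n with
  | zero =>
    intro S hS
    have : S = ∅ := Finset.card_eq_zero.1 (Nat.le_zero.1 hS)
    subst this
    exact ⟨fun _ => 0, by simp, by simp⟩
  | succ n ih =>
    intro S hS
    rcases S.eq_empty_or_nonempty with rfl | hSne
    · exact ⟨fun _ => 0, by simp, by simp⟩
    obtain ⟨a, haS, hamax⟩ := exists_maximal_rel r hirr htr hSne
    set S' := S.erase a with hS'def
    have hS'card : S'.card ≤ n := by
      rw [hS'def, Finset.card_erase_of_mem haS]; omega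
    set k := mA r S with hk
    set k' := mA r S' with hk'
    have hk'le : k' ≤ k := mA_mono r (Finset.erase_subset _ _)
    have hklek : k ≤ k' + 1 := mA_erase_le r a
    have hk1 : 1 ≤ k := one_le_mA r haS
    obtain ⟨f', hf'lt, hf'ch⟩ := ih S' hS'card
    by_cases hcase : k = k' + 1
    · refine ⟨fun x => if x = a then k' else f' x, ?_, ?_⟩
      · intro x hx
        by_cases hxa : x = a
        · simp only [if_pos hxa]; omega
        · have hx' : x ∈ S' := Finset.mem_erase.2 ⟨hxa, hx⟩
          simp only [if_neg hxa]
          exact lt_of_lt_of_le (hf'lt x hx') (by omega)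
      · intro x hx y hy hxy hfxy
        by_cases hxa : x = a <;> by_cases hya : y = a
        · exact absurd (hxa.trans hya.symm) hxy
        · exfalso
          have hy' : y ∈ S' := Finset.mem_erase.2 ⟨hya, hy⟩
          simp only [if_pos hxa, if_neg hya] at hfxy
          have := hf'lt y hy'
          omega
        · exfalso
          have hx' : x ∈ S' := Finset.mem_erase.2 ⟨hxa, hx⟩
          simp only [if_neg hxa, if_pos hya] at hfxy
          have := hf'lt x hx'
          omega
        · have hx' : x ∈ S' := Finset.mem_erase.2 ⟨hxa, hx⟩
          have hy' : y ∈ S' := Finset.mem_erase.2 ⟨hya, hy⟩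
          simp only [if_neg hxa, if_neg hya] at hfxy
          exact hf'ch x hx' y hy' hxy hfxy
    · -- hard case: k = k'
      have hkk' : k = k' := by omega
      have hsurj : ∀ W ⊆ S', IsAC r W → W.card = k → ∀ i < k, ∃ w ∈ W, f' w = i := by
        intro W hWS hWAC hWcard i hi
        have hinj : Set.InjOn f' ↑W := by
          intro x hx y hy hxy
          rw [Finset.mem_coe] at hx hy
          by_contra hne
          rcases hf'ch x (hWS hx) y (hWS hy) hne hxy with h | h
          · exact (hWAC x hx y hy hne).1 h
          · exact (hWAC x hx y hy hne).2 h
        have him : W.image f' ⊆ Finset.range k := by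
          intro j hj
          simp only [Finset.mem_image] at hj
          obtain ⟨w, hw, rfl⟩ := hj
          exact Finset.mem_range.2 (lt_of_lt_of_le (hf'lt w (hWS hw)) (le_of_eq hkk'.symm))
        have hcardim : (W.image f').card = k := by
          rw [Finset.card_image_of_injOn hinj]; exact hWcard
        have heq : W.image f' = Finset.range k :=
          Finset.eq_of_subset_of_card_le him (by rw [hcardim, Finset.card_range])
        have : i ∈ W.image f' := by rw [heq]; exact Finset.mem_range.2 hi
        simpa [Finset.mem_image] using this
      obtain ⟨W₀, hW₀S, hW₀AC, hW₀card⟩ := exists_mA r S'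
      have hW₀k : W₀.card = k := by rw [hW₀card]; omega
      set B : ℕ → Finset C := fun i =>
        S'.filter (fun x => f' x = i ∧ ∃ W ⊆ S', IsAC r W ∧ W.card = k ∧ x ∈ W) with hBdef
      have hmemB : ∀ i, ∀ W ⊆ S', IsAC r W → W.card = k → ∀ w ∈ W, f' w = i → w ∈ B i := by
        intro i W hWS hWAC hWc w hw hwf
        simp only [hBdef, Finset.mem_filter]
        exact ⟨hWS hw, hwf, W, hWS, hWAC, hWc, hw⟩
      have hBne : ∀ i < k, (B i).Nonempty := by
        intro i hi
        obtain ⟨w, hwW, hwf⟩ := hsurj W₀ hW₀S hW₀AC hW₀k i hi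
        exact ⟨w, hmemB i W₀ hW₀S hW₀AC hW₀k w hwW hwf⟩
      have hgex : ∀ i, ∃ gi : C, i < k → gi ∈ B i ∧ (∀ y ∈ B i, ¬ r gi y) := by
        intro i
        by_cases hi : i < k
        · obtain ⟨gi, hgB, hgmax⟩ := exists_maximal_rel r hirr htr (hBne i hi)
          exact ⟨gi, fun _ => ⟨hgB, hgmax⟩⟩
        · exact ⟨a, fun hh => absurd hh hi⟩
      choose g hgspec using hgex
      have hgB : ∀ i < k, g i ∈ B i := fun i hi => (hgspec i hi).1
      have hgS' : ∀ i < k, g i ∈ S' := fun i hi => (Finset.mem_filter.1 (hgB i hi)).1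
      have hgf : ∀ i < k, f' (g i) = i := fun i hi => (Finset.mem_filter.1 (hgB i hi)).2.1
      have hggreat : ∀ i < k, ∀ y ∈ B i, y = g i ∨ r y (g i) := by
        intro i hi y hy
        by_cases hne : y = g i
        · exact Or.inl hne
        · refine Or.inr ?_
          have hyS' : y ∈ S' := (Finset.mem_filter.1 hy).1
          have hyf : f' y = i := (Finset.mem_filter.1 hy).2.1
          rcases hf'ch y hyS' (g i) (hgS' i hi) hne (by rw [hyf, hgf i hi]) with h | h
          · exact h
          · exact absurd h ((hgspec i hi).2 y hy)
      have hgpair : ∀ i, i < k → ∀ j, j < k → i ≠ j → ¬ r (g i) (g j) := by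
        intro i hi j hj hij hr
        obtain ⟨-, -, W, hWS, hWAC, hWc, hgjW⟩ := Finset.mem_filter.1 (hgB j hj)
        obtain ⟨w, hwW, hwf⟩ := hsurj W hWS hWAC hWc i hi
        have hwB : w ∈ B i := hmemB i W hWS hWAC hWc w hwW hwf
        have hw' : w = g i ∨ r w (g i) := hggreat i hi w hwB
        have hrwgj : r w (g j) := by
          rcases hw' with rfl | hlt
          · exact hr
          · exact htr hlt hr
        have hwne : w ≠ g j := by rintro rfl; exact hirr _ hrwgj
        exact (hWAC w hwW (g j) hgjW hwne).1 hrwgj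
      have hginj : ∀ i < k, ∀ j < k, g i = g j → i = j := by
        intro i hi j hj hgij
        have h1 := hgf i hi
        rw [hgij, hgf j hj] at h1
        exact h1.symm
      have hexi : ∃ i, i < k ∧ r (g i) a := by
        by_contra hno
        push_neg at hno
        set A := (Finset.range k).image g with hAdef
        have hmemA : ∀ x, x ∈ A ↔ ∃ i, i < k ∧ g i = x := by
          intro x
          simp [hAdef, Finset.mem_image, Finset.mem_range]
        have haA : a ∉ A := by
          intro hmem
          obtain ⟨i, hi, hgi⟩ := (hmemA a).1 hmem
          have h2 : g i ∈ S' := hgS' i hi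
          rw [hgi] at h2
          exact (Finset.mem_erase.1 h2).1 rfl
        have hAC : IsAC r (insert a A) := by
          intro x hx y hy hxy
          rcases Finset.mem_insert.1 hx with rfl | hxA
          · rcases Finset.mem_insert.1 hy with rfl | hyA
            · exact absurd rfl hxy
            · obtain ⟨j, hj, rfl⟩ := (hmemA y).1 hyA
              exact ⟨fun hcon => hamax (g j) (Finset.mem_of_mem_erase (hgS' j hj)) hcon,
                fun hcon => hno j hj hcon⟩
          · rcases Finset.mem_insert.1 hy with rfl | hyA
            · obtain ⟨i, hi, rfl⟩ := (hmemA x).1 hxA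
              exact ⟨fun hcon => hno i hi hcon,
                fun hcon => hamax (g i) (Finset.mem_of_mem_erase (hgS' i hi)) hcon⟩
            · obtain ⟨i, hi, rfl⟩ := (hmemA x).1 hxA
              obtain ⟨j, hj, rfl⟩ := (hmemA y).1 hyA
              have hij : i ≠ j := fun hcon => hxy (by rw [hcon])
              exact ⟨hgpair i hi j hj hij, hgpair j hj i hi hij.symm⟩
        have hsub : insert a A ⊆ S := by
          intro x hx
          rcases Finset.mem_insert.1 hx with rfl | hxA
          · exact haS
          · obtain ⟨i, hi, rfl⟩ := (hmemA x).1 hxA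
            exact Finset.mem_of_mem_erase (hgS' i hi)
        have hcard : (insert a A).card = k + 1 := by
          rw [Finset.card_insert_of_notMem haA, hAdef]
          rw [Finset.card_image_of_injOn, Finset.card_range]
          intro i hi j hj hgij
          rw [Finset.coe_range, Set.mem_Iio] at hi hj
          exact hginj i hi j hj hgij
        have := card_le_mA r hsub hAC
        omega
      obtain ⟨i, hik, hgia⟩ := hexi
      set L := S'.filter (fun z => f' z = i ∧ (z = g i ∨ r z (g i))) with hLdef
      set K := insert a L with hKdef
      have haL : a ∉ L := fun hcon =>
        (Finset.mem_erase.1 (Finset.mem_filter.1 hcon).1).1 rfl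
      have hKS : K ⊆ S := by
        intro x hx
        rcases Finset.mem_insert.1 hx with rfl | hxL
        · exact haS
        · exact Finset.mem_of_mem_erase (Finset.mem_filter.1 hxL).1
      have hKchain : ∀ x ∈ K, ∀ y ∈ K, x ≠ y → r x y ∨ r y x := by
        intro x hx y hy hxy
        rcases Finset.mem_insert.1 hx with rfl | hxL
        · rcases Finset.mem_insert.1 hy with rfl | hyL
          · exact absurd rfl hxy
          · refine Or.inr ?_
            obtain ⟨hyS', hyf, hyg⟩ := Finset.mem_filter.1 hyL
            rcases hyg with rfl | hyr
            · exact hgia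
            · exact htr hyr hgia
        · rcases Finset.mem_insert.1 hy with rfl | hyL
          · refine Or.inl ?_
            obtain ⟨hxS', hxf, hxg⟩ := Finset.mem_filter.1 hxL
            rcases hxg with rfl | hxr
            · exact hgia
            · exact htr hxr hgia
          · obtain ⟨hxS', hxf, -⟩ := Finset.mem_filter.1 hxL
            obtain ⟨hyS', hyf, -⟩ := Finset.mem_filter.1 hyL
            exact hf'ch x hxS' y hyS' hxy (hxf.trans hyf.symm)
      set S'' := S \ K with hS''def
      have hS''sub : S'' ⊆ S' := by
        intro x hx
        obtain ⟨hxS, hxK⟩ := Finset.mem_sdiff.1 hx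
        exact Finset.mem_erase.2 ⟨fun hcon => hxK (hcon ▸ Finset.mem_insert_self a L), hxS⟩
      have hS''card : S''.card ≤ n :=
        le_trans (Finset.card_le_card hS''sub) hS'card
      have hS''mA : mA r S'' ≤ k - 1 := by
        apply mA_le
        intro W hWS'' hWAC
        by_contra hcard
        push_neg at hcard
        have hWleS : W.card ≤ k := card_le_mA r (fun x hx => (Finset.mem_sdiff.1 (hWS'' hx)).1) hWAC
        have hWk : W.card = k := by omega
        have hWS' : W ⊆ S' := hWS''.trans hS''sub
        obtain ⟨w, hwW, hwf⟩ := hsurj W hWS' hWAC hWk i hik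
        have hwB : w ∈ B i := hmemB i W hWS' hWAC hWk w hwW hwf
        have hwL : w ∈ L := Finset.mem_filter.2 ⟨hWS' hwW, hwf, hggreat i hik w hwB⟩
        exact (Finset.mem_sdiff.1 (hWS'' hwW)).2 (Finset.mem_insert_of_mem hwL)
      obtain ⟨f'', hf''lt, hf''ch⟩ := ih S'' hS''card
      refine ⟨fun x => if x ∈ K then k - 1 else f'' x, ?_, ?_⟩
      · intro x hx
        by_cases hxK : x ∈ K
        · simp only [if_pos hxK]; omega
        · have hx'' : x ∈ S'' := Finset.mem_sdiff.2 ⟨hx, hxK⟩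
          simp only [if_neg hxK]
          have := hf''lt x hx''
          omega
      · intro x hx y hy hxy hf
        by_cases hxK : x ∈ K <;> by_cases hyK : y ∈ K
        · exact hKchain x hxK y hyK hxy
        · exfalso
          have hy'' : y ∈ S'' := Finset.mem_sdiff.2 ⟨hy, hyK⟩
          simp only [if_pos hxK, if_neg hyK] at hf
          have := hf''lt y hy''
          omega
        · exfalso
          have hx'' : x ∈ S'' := Finset.mem_sdiff.2 ⟨hx, hxK⟩
          simp only [if_neg hxK, if_pos hyK] at hf
          have := hf''lt x hx''
          omega
        · have hx'' : x ∈ S'' := Finset.mem_sdiff.2 ⟨hx, hxK⟩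
          have hy'' : y ∈ S'' := Finset.mem_sdiff.2 ⟨hy, hyK⟩
          simp only [if_neg hxK, if_neg hyK] at hf
          exact hf''ch x hx'' y hy'' hxy hf

lemma ultrafilter_exists_eq {β γ : Type*} [Finite γ] (U : Ultrafilter β) (f : β → γ) :
    ∃ m, {S | f S = m} ∈ U := by
  by_contra hno
  push_neg at hno
  have h1 : ∀ m : γ, {S | f S = m}ᶜ ∈ U := fun m =>
    (Ultrafilter.compl_mem_iff_notMem).2 (hno m)
  have h2 : (⋂ m : γ, {S | f S = m}ᶜ) ∈ U := Filter.iInter_mem.2 h1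
  have h3 : (⋂ m : γ, {S | f S = m}ᶜ) = ∅ := by
    ext S
    simp
  rw [h3] at h2
  exact U.empty_notMem h2

theorem dilworth_inf {C : Type} (r : C → C → Prop) (hirr : ∀ x, ¬ r x x)
    (htr : Transitive r) (α : ℕ) (hα : 0 < α)
    (hbd : ∀ A : Finset C, IsAC r A → A.card ≤ α) :
    ∃ c : C → ℕ, (∀ x, c x < α) ∧ ∀ x y, x ≠ y → c x = c y → r x y ∨ r y x := by
  have hfin : ∀ S : Finset C, ∃ f : C → ℕ, (∀ x, f x < α) ∧
      (∀ x ∈ S, ∀ y ∈ S, x ≠ y → f x = f y → r x y ∨ r y x) := by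
    intro S
    obtain ⟨f, hflt, hfch⟩ := dilworth_aux r hirr htr S.card S le_rfl
    have hmAle : mA r S ≤ α := mA_le r (fun A _ hA => hbd A hA)
    refine ⟨fun x => if x ∈ S then f x else 0, ?_, ?_⟩
    · intro x; by_cases hx : x ∈ S
      · simp only [if_pos hx]; exact lt_of_lt_of_le (hflt x hx) hmAle
      · simp only [if_neg hx]; exact hα
    · intro x hx y hy hxy hf
      simp only [if_pos hx, if_pos hy] at hf
      exact hfch x hx y hy hxy hf
  choose F hFlt hFch using hfin
  haveI : (Filter.atTop : Filter (Finset C)).NeBot := Filter.atTop_neBot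
  obtain ⟨U, hU⟩ := Filter.exists_ultrafilter_le (Filter.atTop : Filter (Finset C))
  have hc : ∀ x : C, ∃ m : Fin α, {S | (⟨F S x, hFlt S x⟩ : Fin α) = m} ∈ U :=
    fun x => ultrafilter_exists_eq U _
  choose cm hcm using hc
  refine ⟨fun x => (cm x).val, fun x => (cm x).isLt, ?_⟩
  intro x y hxy hcxy
  have hx : {S | F S x = (cm x).val} ∈ U := by
    filter_upwards [hcm x] with S hS
    exact congrArg Fin.val hS
  have hy : {S | F S y = (cm y).val} ∈ U := by
    filter_upwards [hcm y] with S hS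
    exact congrArg Fin.val hS
  have hmem : {S : Finset C | x ∈ S ∧ y ∈ S} ∈ U := by
    have h1 : Set.Ici ({x, y} : Finset C) ∈ (Filter.atTop : Filter (Finset C)) :=
      Filter.Ici_mem_atTop _
    filter_upwards [hU h1] with S hS
    rw [Set.mem_Ici] at hS
    exact ⟨hS (by simp), hS (by simp)⟩
  obtain ⟨S, ⟨⟨hSfx, hSfy⟩, hSx, hSy⟩⟩ :=
    Ultrafilter.nonempty_of_mem (Filter.inter_mem (Filter.inter_mem hx hy) hmem)
  apply hFch S x hSx y hSy hxy
  simp only [Set.mem_setOf_eq] at hSfx hSfy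
  rw [hSfx, hSfy]
  exact hcxy

section Chainify

variable {C : Type}

noncomputable def chainColor (α : ℕ) (v : Voter C) : C → ℕ :=
  if h : ∃ c : C → ℕ, (∀ x, c x < α) ∧
      ∀ x y : C, x ≠ y → c x = c y → (v.rel x y ∨ v.rel y x)
  then Classical.choose h else fun _ => 0

noncomputable def chainify (α : ℕ) (v : Voter C) : Voter C where
  rel i j := v.rel i j ∧ chainColor α v i = chainColor α v j
  irrefl i h := v.irrefl i h.1
  trans h1 h2 := ⟨v.trans h1.1 h2.1, h1.2.trans h2.2⟩

lemma exists_color (α : ℕ) (v : Voter C) (hv : v.Rational α) :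
    ∃ c : C → ℕ, (∀ x, c x < α) ∧
      ∀ x y : C, x ≠ y → c x = c y → (v.rel x y ∨ v.rel y x) := by
  cases isEmpty_or_nonempty C with
  | inl hE => exact ⟨fun _ => 0, fun x => (hE.false x).elim, fun x => (hE.false x).elim⟩
  | inr hN =>
    have hα : 0 < α := by
      obtain ⟨x⟩ := hN
      have h1 := hv {x} ?_
      · exact Nat.lt_of_lt_of_le Nat.zero_lt_one (by simpa using h1)
      · intro a ha b hb hab
        simp only [Finset.mem_singleton] at ha hb
        exact absurd (ha.trans hb.symm) hab
    exact dilworth_inf v.rel v.irrefl (fun _ _ _ h1 h2 => v.trans h1 h2) α hα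
      (fun A hA => hv A hA)

lemma chainColor_spec (α : ℕ) (v : Voter C) (hv : v.Rational α) :
    (∀ x, chainColor α v x < α) ∧
      ∀ x y : C, x ≠ y → chainColor α v x = chainColor α v y →
        (v.rel x y ∨ v.rel y x) := by
  have h := exists_color α v hv
  simp only [chainColor]
  rw [dif_pos h]
  exact Classical.choose_spec h

lemma chainify_strong (α : ℕ) (v : Voter C) (i j : C) :
    (chainify α v).strong i j → v.strong i j := fun h => h.1

lemma chainify_weak (α : ℕ) (v : Voter C) (i j : C) (h : v.weak i j) :
    (chainify α v).weak i j := by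
  rcases h with h | ⟨h1, h2⟩
  · by_cases hc : chainColor α v i = chainColor α v j
    · exact Or.inl ⟨h, hc⟩
    · exact Or.inr ⟨fun h' => hc h'.2, fun h' => hc h'.2.symm⟩
  · exact Or.inr ⟨fun h' => h1 h'.1, fun h' => h2 h'.1⟩

lemma chainify_rational (α : ℕ) (v : Voter C) (hv : v.Rational α) :
    (chainify α v).Rational α := by
  intro A hA
  obtain ⟨hlt, hch⟩ := chainColor_spec α v hv
  have hsub : ∀ x ∈ A, chainColor α v x ∈ Finset.range α :=
    fun x _ => Finset.mem_range.2 (hlt x)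
  have hinj : Set.InjOn (chainColor α v) ↑A := by
    intro x hx y hy hxy
    rw [Finset.mem_coe] at hx hy
    by_contra hne
    rcases hch x y hne hxy with h | h
    · exact (hA x hx y hy hne).1 ⟨h, hxy⟩
    · exact (hA x hx y hy hne).2 ⟨h, hxy.symm⟩
  calc A.card ≤ (Finset.range α).card := Finset.card_le_card_of_injOn _ hsub hinj
  _ = α := Finset.card_range α

lemma chainify_chainPartition (α : ℕ) (v : Voter C) (hv : v.Rational α) :
    ChainPartition (chainify α v) α := by
  obtain ⟨hlt, hch⟩ := chainColor_spec α v hv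
  refine ⟨chainColor α v, hlt, ?_⟩
  intro i j hij
  constructor
  · rintro (h | h)
    · exact h.2
    · exact h.2.symm
  · intro hc
    rcases hch i j hij hc with h | h
    · exact Or.inl ⟨h, hc⟩
    · exact Or.inr ⟨h, hc.symm⟩

lemma countVoters_map_le (V : List (Voter C)) (t : Voter C → Voter C)
    (P Q : Voter C → Prop) (h : ∀ v ∈ V, P (t v) → Q v) :
    countVoters (V.map t) P ≤ countVoters V Q := by
  unfold countVoters
  rw [List.map_map]
  apply List.sum_le_sum
  intro v hvV
  simp only [Function.comp_apply]
  by_cases hp : P (t v)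
  · simp [hp, h v hvV hp]
  · simp [hp]

lemma countVoters_le_map (V : List (Voter C)) (t : Voter C → Voter C)
    (P Q : Voter C → Prop) (h : ∀ v ∈ V, Q v → P (t v)) :
    countVoters V Q ≤ countVoters (V.map t) P := by
  unfold countVoters
  rw [List.map_map]
  apply List.sum_le_sum
  intro v hvV
  simp only [Function.comp_apply]
  by_cases hq : Q v
  · simp [hq, h v hvV hq]
  · simp [hq]

end Chainify

/-- an `α`-rationalizable matrix is consistent with a list of `α`-rational
voters whose partial orders each partition the candidates into at most `α` disjoint
chains. -/
theorem rationalizable_iff_chains {C : Type} (M : C → C → ℝ) (hM : IsPrefMatrix M)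
    (α : ℕ) (h : Rationalizable M α) :
    ∃ V : List (Voter C), Consistent M V ∧
      ∀ v ∈ V, v.Rational α ∧ ChainPartition v α := by
  obtain ⟨V, ⟨hVne, hVc⟩, hrat⟩ := h
  refine ⟨V.map (chainify α), ⟨?_, ?_⟩, ?_⟩
  · intro hc
    exact hVne (by simpa using hc)
  · intro i j hij
    obtain ⟨hle, hge⟩ := hVc i j hij
    have hn : (0:ℝ) < (V.length : ℝ) := by
      exact_mod_cast List.length_pos_iff.2 hVne
    have hlen : (V.map (chainify α)).length = V.length := List.length_map _
    have h1 : countVoters (V.map (chainify α)) (fun v => v.strong i j)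
        ≤ countVoters V (fun v => v.strong i j) :=
      countVoters_map_le V _ _ _ (fun v _ hp => chainify_strong α v i j hp)
    have h2 : countVoters V (fun v => v.weak i j)
        ≤ countVoters (V.map (chainify α)) (fun v => v.weak i j) :=
      countVoters_le_map V _ _ _ (fun v _ hq => chainify_weak α v i j hq)
    constructor
    · rw [hlen]
      calc ((countVoters (V.map (chainify α)) (fun v => v.strong i j) : ℝ)) / (V.length : ℝ)
          ≤ ((countVoters V (fun v => v.strong i j) : ℝ)) / (V.length : ℝ) := by
            gcongr
        _ ≤ M i j := hle
    · rw [hlen]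
      calc M i j ≤ ((countVoters V (fun v => v.weak i j) : ℝ)) / (V.length : ℝ) := hge
        _ ≤ ((countVoters (V.map (chainify α)) (fun v => v.weak i j) : ℝ)) / (V.length : ℝ) := by
            gcongr
  · intro v hv
    rw [List.mem_map] at hv
    obtain ⟨w, hwV, rfl⟩ := hv
    exact ⟨chainify_rational α w (hrat w hwV), chainify_chainPartition α w (hrat w hwV)⟩
end

section
/- Let M be a half-integral preference matrix and let G_1,…,G_t be the connected components of its unanimity graph G_M. For each ℓ, let M_ℓ be the principal submatrix of M induced by the candidates of G_ℓ. Then the rationality number of M equals the maximum over ℓ of the rationality number of M_ℓ: α(M) = max_ℓ α(M_ℓ). -/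
open scoped Classical

-- ===== auxiliary lemmas =====
section Aux
variable {C : Type}

lemma countVoters_congr {V : List (Voter C)} {P Q : Voter C → Prop}
    (h : ∀ v, P v ↔ Q v) : countVoters V P = countVoters V Q := by
  unfold countVoters
  congr 1
  apply List.map_congr_left
  intro v _
  simp only [h v]

lemma countVoters_map {D : Type} (g : Voter D → Voter C) (V : List (Voter D))
    (P : Voter C → Prop) :
    countVoters (V.map g) P = countVoters V (fun v => P (g v)) := by
  unfold countVoters
  rw [List.map_map]
  rfl

lemma countVoters_append (V W : List (Voter C)) (P : Voter C → Prop) :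
    countVoters (V ++ W) P = countVoters V P + countVoters W P := by
  unfold countVoters
  rw [List.map_append, List.sum_append]

lemma countVoters_bind {β : Type} (l : List β) (g : β → List (Voter C))
    (P : Voter C → Prop) :
    countVoters (l.flatMap g) P = (l.map (fun x => countVoters (g x) P)).sum := by
  induction l with
  | nil => simp [countVoters]
  | cons a t ih => simp [List.flatMap_cons, countVoters_append, ih]

lemma countVoters_eq_sum_fin (V : List (Voter C)) (P : Voter C → Prop) :
    countVoters V P = ∑ x : Fin V.length, if P (V.get x) then 1 else 0 := by
  induction V with
  | nil => simp [countVoters]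
  | cons a l ih =>
      simp only [countVoters, List.map_cons, List.sum_cons] at ih ⊢
      rw [ih]
      simp only [List.length_cons]
      rw [Fin.sum_univ_succ]
      rfl

lemma Voter.Rational.mono {v : Voter C} {a b : ℕ} (h : v.Rational a) (hab : a ≤ b) :
    v.Rational b := fun A hA => le_trans (h A hA) hab

lemma rationalizable_mono {M : C → C → ℝ} {a b : ℕ} (hab : a ≤ b)
    (h : Rationalizable M a) : Rationalizable M b := by
  obtain ⟨V, hc, hr⟩ := h
  exact ⟨V, hc, fun v hv => (hr v hv).mono hab⟩

/-- the all-indifferent voter -/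
def indiffVoter (C : Type) : Voter C :=
  ⟨fun _ _ => False, fun _ h => h, fun h => h.elim⟩

lemma rationalizable_card [Fintype C] (M : C → C → ℝ) (hM : IsPrefMatrix M) :
    Rationalizable M (Fintype.card C) := by
  refine ⟨[indiffVoter C], ⟨by simp, ?_⟩, ?_⟩
  · intro i j hij
    have h1 : countVoters [indiffVoter C] (fun v => v.strong i j) = 0 := by
      simp [countVoters, Voter.strong, indiffVoter]
    have h2 : countVoters [indiffVoter C] (fun v => v.weak i j) = 1 := by
      simp [countVoters, Voter.weak, indiffVoter]
    rw [h1, h2]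
    have hji := hM.2.1 j i
    have hsum := hM.2.2 i j hij
    constructor
    · simpa using hM.2.1 i j
    · simp only [List.length_singleton, Nat.cast_one]
      rw [div_one]
      linarith
  · intro v hv A hA
    simp only [List.mem_singleton] at hv
    subst hv
    exact le_trans (Finset.card_le_univ A) (le_of_eq Finset.card_univ)

lemma isPrefMatrix_sub (M : C → C → ℝ) (hM : IsPrefMatrix M) (S : Set C) :
    IsPrefMatrix (fun i j : S => M i.1 j.1) :=
  ⟨fun i => hM.1 i.1, fun i j => hM.2.1 i.1 j.1,
   fun i j hij => hM.2.2 i.1 j.1 (fun h => hij (Subtype.ext h))⟩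

/-- restriction of a voter to a subset -/
def Voter.restrict (v : Voter C) (S : Set C) : Voter S :=
  ⟨fun a b => v.rel a.1 b.1, fun a => v.irrefl a.1, fun h1 h2 => v.trans h1 h2⟩

lemma rationalizable_restrict {M : C → C → ℝ} {α : ℕ} (S : Set C)
    (h : Rationalizable M α) : Rationalizable (fun i j : S => M i.1 j.1) α := by
  obtain ⟨V, ⟨hne, hcons⟩, hrat⟩ := h
  refine ⟨V.map (fun v => v.restrict S), ⟨by simpa using hne, ?_⟩, ?_⟩
  · intro i j hij
    have hij' : i.1 ≠ j.1 := fun h => hij (Subtype.ext h)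
    have h1 := hcons i.1 j.1 hij'
    rw [countVoters_map, countVoters_map, List.length_map]
    have e1 : countVoters V (fun v => (v.restrict S).strong i j)
        = countVoters V (fun v => v.strong i.1 j.1) := countVoters_congr (fun v => Iff.rfl)
    have e2 : countVoters V (fun v => (v.restrict S).weak i j)
        = countVoters V (fun v => v.weak i.1 j.1) := countVoters_congr (fun v => Iff.rfl)
    rw [e1, e2]
    exact h1
  · intro v hv
    simp only [List.mem_map] at hv
    obtain ⟨w, hw, rfl⟩ := hv
    intro A hA
    have hc : (A.map ⟨Subtype.val, Subtype.val_injective⟩).card ≤ α := by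
      apply hrat w hw
      intro a ha b hb hab
      simp only [Finset.mem_map, Function.Embedding.coeFn_mk] at ha hb
      obtain ⟨a', ha', rfl⟩ := ha
      obtain ⟨b', hb', rfl⟩ := hb
      exact hA a' ha' b' hb' (fun h => hab (congrArg Subtype.val h))
    simpa using hc

lemma sum_pi_eval {ι : Type} [Fintype ι] [DecidableEq ι] (n : ι → ℕ) (K₀ : ι)
    (c : Fin (n K₀) → ℕ) :
    (∑ f : ∀ K, Fin (n K), c (f K₀)) =
      (∏ K ∈ Finset.univ.erase K₀, n K) * ∑ x : Fin (n K₀), c x := by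
  classical
  set F : ∀ K, Fin (n K) → ℕ := Function.update (fun K (_ : Fin (n K)) => 1) K₀ c with hF
  have hF0 : F K₀ = c := Function.update_self _ _ _
  have hFne : ∀ K, K ≠ K₀ → F K = fun _ => 1 := fun K hK => Function.update_of_ne hK _ _
  have key : ∀ f : ∀ K, Fin (n K), c (f K₀) = ∏ K, F K (f K) := by
    intro f
    rw [Finset.prod_eq_single K₀]
    · rw [hF0]
    · intro K _ hK; rw [hFne K hK]
    · intro h; exact absurd (Finset.mem_univ K₀) h
  rw [Finset.sum_congr rfl fun f _ => key f, ← Fintype.prod_sum F,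
    ← Finset.mul_prod_erase Finset.univ _ (Finset.mem_univ K₀), hF0]
  have hrest : ∀ K ∈ Finset.univ.erase K₀, (∑ x : Fin (n K), F K x) = n K := by
    intro K hK
    rw [hFne K (Finset.ne_of_mem_erase hK)]
    simp
  rw [Finset.prod_congr rfl hrest, mul_comm]

lemma cross_half {C : Type} (M : C → C → ℝ) (hM : IsPrefMatrix M) (hHalf : HalfIntegral M)
    {i j : C}
    (hne : (unanimityGraph M).connectedComponentMk i ≠ (unanimityGraph M).connectedComponentMk j) :
    M i j = 1 / 2 := by
  have hij : i ≠ j := fun h => hne (by rw [h])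
  rcases hHalf i j with h0 | h | h1
  · have h1' : M j i = 1 := by have := hM.2.2 i j hij; linarith
    have hadj : (unanimityGraph M).Adj i j := ⟨hij, Or.inr h1'⟩
    exact absurd (SimpleGraph.ConnectedComponent.sound hadj.reachable) hne
  · exact h
  · have hadj : (unanimityGraph M).Adj i j := ⟨hij, Or.inl h1⟩
    exact absurd (SimpleGraph.ConnectedComponent.sound hadj.reachable) hne

/-- The relation of a combined voter. -/
def combRel {C : Type} (M : C → C → ℝ)
    (u : ∀ K : (unanimityGraph M).ConnectedComponent, Voter K.supp)
    (idx : (unanimityGraph M).ConnectedComponent → ℕ) (b : Bool) (i j : C) : Prop :=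
  (∃ (K : (unanimityGraph M).ConnectedComponent) (hi : i ∈ K.supp) (hj : j ∈ K.supp),
      (u K).rel ⟨i, hi⟩ ⟨j, hj⟩) ∨
  ((unanimityGraph M).connectedComponentMk i ≠ (unanimityGraph M).connectedComponentMk j ∧
    (if b then
        idx ((unanimityGraph M).connectedComponentMk i) <
          idx ((unanimityGraph M).connectedComponentMk j)
      else
        idx ((unanimityGraph M).connectedComponentMk j) <
          idx ((unanimityGraph M).connectedComponentMk i)))

lemma combRel_mk_eq {C : Type} {M : C → C → ℝ}
    {u : ∀ K : (unanimityGraph M).ConnectedComponent, Voter K.supp}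
    {K : (unanimityGraph M).ConnectedComponent} {i j : C}
    (h : ∃ (hi : i ∈ K.supp) (hj : j ∈ K.supp), (u K).rel ⟨i, hi⟩ ⟨j, hj⟩) :
    (unanimityGraph M).connectedComponentMk i = K ∧
      (unanimityGraph M).connectedComponentMk j = K := by
  obtain ⟨hi, hj, -⟩ := h
  exact ⟨(SimpleGraph.ConnectedComponent.mem_supp_iff _ _).mp hi,
    (SimpleGraph.ConnectedComponent.mem_supp_iff _ _).mp hj⟩

/-- The combined voter. -/
def combVoter {C : Type} (M : C → C → ℝ)
    (u : ∀ K : (unanimityGraph M).ConnectedComponent, Voter K.supp)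
    (idx : (unanimityGraph M).ConnectedComponent → ℕ) (hidx : Function.Injective idx)
    (b : Bool) : Voter C where
  rel := combRel M u idx b
  irrefl := by
    intro i h
    rcases h with ⟨K, hi, hj, hr⟩ | ⟨hne, -⟩
    · exact (u K).irrefl ⟨i, hi⟩ hr
    · exact hne rfl
  trans := by
    intro i j k h1 h2
    rcases h1 with ⟨K, hi, hj, hr⟩ | ⟨hne, hlt⟩
    · have hKi : (unanimityGraph M).connectedComponentMk i = K :=
        (SimpleGraph.ConnectedComponent.mem_supp_iff _ _).mp hi
      have hKj : (unanimityGraph M).connectedComponentMk j = K :=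
        (SimpleGraph.ConnectedComponent.mem_supp_iff _ _).mp hj
      rcases h2 with ⟨K', hj', hk', hr'⟩ | ⟨hne', hlt'⟩
      · have hKj' : (unanimityGraph M).connectedComponentMk j = K' :=
          (SimpleGraph.ConnectedComponent.mem_supp_iff _ _).mp hj'
        have hKK : K' = K := hKj' ▸ hKj
        subst hKK
        exact Or.inl ⟨_, hi, hk', (u _).trans hr hr'⟩
      · refine Or.inr ⟨?_, ?_⟩
        · rw [hKi, ← hKj]; exact hne'
        · rw [hKi, ← hKj]; exact hlt'
    · rcases h2 with ⟨K', hj', hk', hr'⟩ | ⟨hne', hlt'⟩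
      · have hKj' : (unanimityGraph M).connectedComponentMk j = K' :=
          (SimpleGraph.ConnectedComponent.mem_supp_iff _ _).mp hj'
        have hKk' : (unanimityGraph M).connectedComponentMk k = K' :=
          (SimpleGraph.ConnectedComponent.mem_supp_iff _ _).mp hk'
        refine Or.inr ⟨?_, ?_⟩
        · rw [hKk', ← hKj']; exact hne
        · rw [hKk', ← hKj']; exact hlt
      · refine Or.inr ⟨?_, ?_⟩
        · intro hik
          cases b with
          | true =>
              simp only [if_true] at hlt hlt'
              rw [hik] at hlt
              exact absurd (lt_trans hlt' hlt) (lt_irrefl _)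
          | false =>
              simp only [if_neg Bool.false_ne_true] at hlt hlt'
              rw [hik] at hlt
              exact absurd (lt_trans hlt hlt') (lt_irrefl _)
        · cases b with
          | true =>
              simp only [if_true] at hlt hlt' ⊢
              exact lt_trans hlt hlt'
          | false =>
              simp only [if_neg Bool.false_ne_true] at hlt hlt' ⊢
              exact lt_trans hlt' hlt

lemma combVoter_rel_same {C : Type} {M : C → C → ℝ}
    {u : ∀ K : (unanimityGraph M).ConnectedComponent, Voter K.supp}
    {idx : (unanimityGraph M).ConnectedComponent → ℕ} {hidx : Function.Injective idx}
    {b : Bool} {i j : C} {K : (unanimityGraph M).ConnectedComponent}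
    (hi : i ∈ K.supp) (hj : j ∈ K.supp) :
    (combVoter M u idx hidx b).rel i j ↔ (u K).rel ⟨i, hi⟩ ⟨j, hj⟩ := by
  constructor
  · intro h
    rcases h with ⟨K', hi', hj', hr⟩ | ⟨hne, -⟩
    · have e : K' = K := by
        rw [← (SimpleGraph.ConnectedComponent.mem_supp_iff K' i).mp hi',
          (SimpleGraph.ConnectedComponent.mem_supp_iff K i).mp hi]
      subst e
      exact hr
    · exact absurd (by
        rw [(SimpleGraph.ConnectedComponent.mem_supp_iff K i).mp hi,
          (SimpleGraph.ConnectedComponent.mem_supp_iff K j).mp hj]) hne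
  · intro h
    exact Or.inl ⟨K, hi, hj, h⟩

lemma combVoter_rel_cross {C : Type} {M : C → C → ℝ}
    {u : ∀ K : (unanimityGraph M).ConnectedComponent, Voter K.supp}
    {idx : (unanimityGraph M).ConnectedComponent → ℕ} {hidx : Function.Injective idx}
    {b : Bool} {i j : C}
    (hne : (unanimityGraph M).connectedComponentMk i ≠ (unanimityGraph M).connectedComponentMk j) :
    (combVoter M u idx hidx b).rel i j ↔
      (if b then
          idx ((unanimityGraph M).connectedComponentMk i) <
            idx ((unanimityGraph M).connectedComponentMk j)
        else
          idx ((unanimityGraph M).connectedComponentMk j) <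
            idx ((unanimityGraph M).connectedComponentMk i)) := by
  constructor
  · intro h
    rcases h with ⟨K', hi', hj', -⟩ | ⟨-, h⟩
    · exact absurd (by
        rw [(SimpleGraph.ConnectedComponent.mem_supp_iff K' i).mp hi',
          (SimpleGraph.ConnectedComponent.mem_supp_iff K' j).mp hj']) hne
    · exact h
  · intro h
    exact Or.inr ⟨hne, h⟩

lemma rationalizable_glue {C : Type} [Fintype C] (M : C → C → ℝ)
    (hM : IsPrefMatrix M) (hHalf : HalfIntegral M) (α : ℕ)
    [Fintype (unanimityGraph M).ConnectedComponent]
    (V : ∀ K : (unanimityGraph M).ConnectedComponent, List (Voter K.supp))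
    (hVcons : ∀ K, Consistent (fun i j : K.supp => M i.1 j.1) (V K))
    (hVrat : ∀ K, ∀ v ∈ V K, v.Rational α)
    (idx : (unanimityGraph M).ConnectedComponent → ℕ) (hidx : Function.Injective idx) :
    Rationalizable M α := by
  classical
  set w : (∀ K : (unanimityGraph M).ConnectedComponent, Fin (V K).length) → Bool → Voter C :=
    fun f b => combVoter M (fun K => (V K).get (f K)) idx hidx b with hw
  set Vc : List (Voter C) :=
    (Finset.univ :
        Finset (∀ K : (unanimityGraph M).ConnectedComponent, Fin (V K).length)).toList.flatMap
      (fun f => [w f true, w f false]) with hVc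
  have hNpos : 0 < ∏ K, (V K).length :=
    Finset.prod_pos (fun K _ => List.length_pos_iff.mpr (hVcons K).1)
  have hlen : Vc.length = 2 * ∏ K, (V K).length := by
    rw [hVc, List.length_flatMap, Finset.sum_map_toList]
    simp only [Function.comp, List.length_cons, List.length_singleton]
    rw [Finset.sum_const, Finset.card_univ, Fintype.card_pi]
    simp [mul_comm]
  have hVcne : Vc ≠ [] := by
    apply List.ne_nil_of_length_pos
    rw [hlen]
    exact Nat.mul_pos (by norm_num) hNpos
  have hcount : ∀ P : Voter C → Prop,
      countVoters Vc P =
        ∑ f : ∀ K : (unanimityGraph M).ConnectedComponent, Fin (V K).length,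
          ((if P (w f true) then 1 else 0) + (if P (w f false) then 1 else 0)) := by
    intro P
    rw [hVc, countVoters_bind, Finset.sum_map_toList]
    refine Finset.sum_congr rfl fun f _ => ?_
    simp [countVoters]
  have hratio : ∀ (K₀ : (unanimityGraph M).ConnectedComponent) (c : ℕ),
      ((2 * ((∏ K ∈ Finset.univ.erase K₀, (V K).length) * c) : ℕ) : ℝ) / (Vc.length : ℝ)
        = (c : ℝ) / ((V K₀).length : ℝ) := by
    intro K₀ c
    have hsplit : (∏ K, (V K).length)
        = (V K₀).length * ∏ K ∈ Finset.univ.erase K₀, (V K).length :=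
      (Finset.mul_prod_erase _ _ (Finset.mem_univ K₀)).symm
    have hEpos : 0 < ∏ K ∈ Finset.univ.erase K₀, (V K).length :=
      Finset.prod_pos fun K _ => List.length_pos_iff.mpr (hVcons K).1
    have hnpos : 0 < (V K₀).length := List.length_pos_iff.mpr (hVcons K₀).1
    rw [hlen, hsplit]
    rw [div_eq_div_iff
      (Nat.cast_ne_zero.mpr (Nat.mul_pos (by norm_num) (Nat.mul_pos hnpos hEpos)).ne')
      (Nat.cast_ne_zero.mpr hnpos.ne')]
    push_cast
    ring
  have hwithin : ∀ (K₀ : (unanimityGraph M).ConnectedComponent)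
      (Q : Voter K₀.supp → Prop) (P : Voter C → Prop),
      (∀ f b, P (w f b) ↔ Q ((V K₀).get (f K₀))) →
      (countVoters Vc P : ℝ) / (Vc.length : ℝ)
        = (countVoters (V K₀) Q : ℝ) / ((V K₀).length : ℝ) := by
    intro K₀ Q P hPQ
    have hc : countVoters Vc P
        = 2 * ((∏ K ∈ Finset.univ.erase K₀, (V K).length) * countVoters (V K₀) Q) := by
      rw [hcount P]
      have e1 : ∀ f, ((if P (w f true) then 1 else 0) + (if P (w f false) then 1 else 0))
          = 2 * (if Q ((V K₀).get (f K₀)) then 1 else 0) := by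
        intro f
        rw [if_congr (hPQ f true) rfl rfl, if_congr (hPQ f false) rfl rfl]
        ring
      rw [Finset.sum_congr rfl fun f _ => e1 f, ← Finset.mul_sum,
        sum_pi_eval (fun K => (V K).length) K₀
          (fun x => if Q ((V K₀).get x) then 1 else 0),
        ← countVoters_eq_sum_fin]
    rw [hc]
    exact hratio K₀ _
  refine ⟨Vc, ⟨hVcne, ?_⟩, ?_⟩
  · intro i j hij
    by_cases hK : (unanimityGraph M).connectedComponentMk i
        = (unanimityGraph M).connectedComponentMk j
    · -- same component
      have hi : i ∈ ((unanimityGraph M).connectedComponentMk i).supp :=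
        (SimpleGraph.ConnectedComponent.mem_supp_iff _ _).mpr rfl
      have hj : j ∈ ((unanimityGraph M).connectedComponentMk i).supp :=
        (SimpleGraph.ConnectedComponent.mem_supp_iff _ _).mpr hK.symm
      have hij' : (⟨i, hi⟩ : ((unanimityGraph M).connectedComponentMk i).supp) ≠ ⟨j, hj⟩ :=
        fun h => hij (congrArg Subtype.val h)
      obtain ⟨h1, h2⟩ := (hVcons _).2 ⟨i, hi⟩ ⟨j, hj⟩ hij'
      have hcw : ∀ f b, (w f b).weak i j
          ↔ ((V ((unanimityGraph M).connectedComponentMk i)).get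
              (f ((unanimityGraph M).connectedComponentMk i))).weak ⟨i, hi⟩ ⟨j, hj⟩ := by
        intro f b
        have r1 := combVoter_rel_same (M := M) (u := fun K => (V K).get (f K)) (idx := idx)
          (hidx := hidx) (b := b) hi hj
        have r2 := combVoter_rel_same (M := M) (u := fun K => (V K).get (f K)) (idx := idx)
          (hidx := hidx) (b := b) hj hi
        exact or_congr r1 (and_congr (not_congr r1) (not_congr r2))
      constructor
      · rw [hwithin _ (fun v => v.strong ⟨i, hi⟩ ⟨j, hj⟩) _
          (fun f b => combVoter_rel_same hi hj)]
        exact h1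
      · rw [hwithin _ (fun v => v.weak ⟨i, hi⟩ ⟨j, hj⟩) _ hcw]
        exact h2
    · -- cross component
      have hM2 := cross_half M hM hHalf hK
      have hidxne : idx ((unanimityGraph M).connectedComponentMk i)
          ≠ idx ((unanimityGraph M).connectedComponentMk j) := fun h => hK (hidx h)
      have hrel : ∀ f b, (w f b).rel i j ↔
          (if b then
              idx ((unanimityGraph M).connectedComponentMk i) <
                idx ((unanimityGraph M).connectedComponentMk j)
            else
              idx ((unanimityGraph M).connectedComponentMk j) <
                idx ((unanimityGraph M).connectedComponentMk i)) :=
        fun f b => combVoter_rel_cross hK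
      have hrel' : ∀ f b, (w f b).rel j i ↔
          (if b then
              idx ((unanimityGraph M).connectedComponentMk j) <
                idx ((unanimityGraph M).connectedComponentMk i)
            else
              idx ((unanimityGraph M).connectedComponentMk i) <
                idx ((unanimityGraph M).connectedComponentMk j)) :=
        fun f b => combVoter_rel_cross (Ne.symm hK)
      have hone : ∀ (P : Voter C → Prop), (∀ f b, P (w f b) ↔ (w f b).rel i j) →
          countVoters Vc P = ∏ K, (V K).length := by
        intro P hPr
        rw [hcount P]
        have e1 : ∀ f, ((if P (w f true) then 1 else 0) + (if P (w f false) then 1 else 0))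
            = 1 := by
          intro f
          rw [if_congr ((hPr f true).trans (hrel f true)) rfl rfl,
            if_congr ((hPr f false).trans (hrel f false)) rfl rfl]
          simp only [if_true, if_neg Bool.false_ne_true]
          rcases lt_or_gt_of_ne hidxne with h | h
          · rw [if_pos h, if_neg (asymm h)]
          · rw [if_neg (asymm h), if_pos h]
        rw [Finset.sum_congr rfl fun f _ => e1 f, Finset.sum_const, Finset.card_univ,
          Fintype.card_pi]
        simp
      have hhalf : ((∏ K, (V K).length : ℕ) : ℝ) / (Vc.length : ℝ) = 1 / 2 := by
        rw [hlen]
        rw [div_eq_div_iff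
          (Nat.cast_ne_zero.mpr (Nat.mul_pos (by norm_num) hNpos).ne') two_ne_zero]
        push_cast
        ring
      have hweak : ∀ f b, (w f b).weak i j ↔ (w f b).rel i j := by
        intro f b
        have htot : (w f b).rel i j ∨ (w f b).rel j i := by
          rw [hrel f b, hrel' f b]
          cases b
          · simp only [if_neg Bool.false_ne_true]
            rcases lt_or_gt_of_ne hidxne with h | h
            · exact Or.inr h
            · exact Or.inl h
          · simp only [if_true]
            rcases lt_or_gt_of_ne hidxne with h | h
            · exact Or.inl h
            · exact Or.inr h
        constructor
        · rintro (h | ⟨h1, h2⟩)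
          · exact h
          · rcases htot with h | h
            · exact absurd h h1
            · exact absurd h h2
        · exact Or.inl
      have hS : countVoters Vc (fun v => v.strong i j) = ∏ K, (V K).length :=
        hone _ (fun f b => Iff.rfl)
      have hW : countVoters Vc (fun v => v.weak i j) = ∏ K, (V K).length :=
        hone _ hweak
      rw [hS, hW, hhalf, hM2]
      exact ⟨le_refl _, le_refl _⟩
  · -- rationality
    intro v hv
    rw [hVc, List.mem_flatMap] at hv
    obtain ⟨f, -, hv⟩ := hv
    have hv' : v = w f true ∨ v = w f false := by simpa using hv
    obtain ⟨b, rfl⟩ : ∃ b, v = w f b := by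
      rcases hv' with h | h
      · exact ⟨true, h⟩
      · exact ⟨false, h⟩
    intro A hA
    rcases A.eq_empty_or_nonempty with rfl | ⟨x₀, hx₀⟩
    · simp
    · have hsame : ∀ x ∈ A, (unanimityGraph M).connectedComponentMk x
          = (unanimityGraph M).connectedComponentMk x₀ := by
        intro x hx
        by_contra hnex
        have hxx : x ≠ x₀ := fun h => hnex (by rw [h])
        have h2 := hA x hx x₀ hx₀ hxx
        have htot : (w f b).rel x x₀ ∨ (w f b).rel x₀ x := by
          rw [combVoter_rel_cross (u := fun K => (V K).get (f K)) hnex,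
            combVoter_rel_cross (u := fun K => (V K).get (f K)) (Ne.symm hnex)]
          have hidxne : idx ((unanimityGraph M).connectedComponentMk x)
              ≠ idx ((unanimityGraph M).connectedComponentMk x₀) := fun h => hnex (hidx h)
          cases b
          · simp only [if_neg Bool.false_ne_true]
            rcases lt_or_gt_of_ne hidxne with h | h
            · exact Or.inr h
            · exact Or.inl h
          · simp only [if_true]
            rcases lt_or_gt_of_ne hidxne with h | h
            · exact Or.inl h
            · exact Or.inr h
        rcases htot with h | h
        · exact h2.1 h
        · exact h2.2 h
      have hmem : ∀ x ∈ A, x ∈ ((unanimityGraph M).connectedComponentMk x₀).supp :=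
        fun x hx => (SimpleGraph.ConnectedComponent.mem_supp_iff _ _).mpr (hsame x hx)
      set B : Finset (((unanimityGraph M).connectedComponentMk x₀).supp) :=
        A.attach.map ⟨fun x => ⟨x.1, hmem x.1 x.2⟩, by
          intro a b h
          apply Subtype.ext
          have h' := congrArg Subtype.val h
          exact h'⟩ with hB
      have hBanti : ((V ((unanimityGraph M).connectedComponentMk x₀)).get
          (f ((unanimityGraph M).connectedComponentMk x₀))).IsAntichainOf B := by
        intro p hp q hq hpq
        rw [hB] at hp hq
        simp only [Finset.mem_map, Finset.mem_attach, Function.Embedding.coeFn_mk,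
          true_and] at hp hq
        obtain ⟨⟨x, hx⟩, rfl⟩ := hp
        obtain ⟨⟨y, hy⟩, rfl⟩ := hq
        have hxy : x ≠ y := fun h => hpq (Subtype.ext h)
        have h2 := hA x hx y hy hxy
        constructor
        · intro hr
          exact h2.1 ((combVoter_rel_same (hmem x hx) (hmem y hy)).mpr hr)
        · intro hr
          exact h2.2 ((combVoter_rel_same (hmem y hy) (hmem x hx)).mpr hr)
      have hcard : A.card = B.card := by
        rw [hB, Finset.card_map, Finset.card_attach]
      rw [hcard]
      exact hVrat _ _ (List.get_mem _ _) B hBanti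

end Aux


/-- the rationality number of a half-integral preference matrix equals the
maximum of the rationality numbers of the principal submatrices induced by the connected
components of its unanimity graph. -/
theorem rationalityNumber_eq_iSup_components {C : Type} [Fintype C]
    (M : C → C → ℝ) (hM : IsPrefMatrix M) (hHalf : HalfIntegral M) :
    rationalityNumber M =
      ⨆ K : (unanimityGraph M).ConnectedComponent,
        rationalityNumber (fun i j : K.supp => M i.1 j.1) := by
  classical
  haveI : Finite (unanimityGraph M).ConnectedComponent := Quot.finite _
  haveI : Fintype (unanimityGraph M).ConnectedComponent := Fintype.ofFinite _
  apply le_antisymm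
  · apply Nat.sInf_le
    have hsub : ∀ K : (unanimityGraph M).ConnectedComponent,
        Rationalizable (fun i j : K.supp => M i.1 j.1)
          (rationalityNumber (fun i j : K.supp => M i.1 j.1)) := fun K =>
      Nat.sInf_mem (s := {α | Rationalizable (fun i j : K.supp => M i.1 j.1) α}) ⟨_, rationalizable_card _ (isPrefMatrix_sub M hM _)⟩
    choose V hVcons hVrat using hsub
    refine rationalizable_glue M hM hHalf _ V hVcons ?_
      (fun K => ((Fintype.equivFin _) K : ℕ))
      (fun a b h => (Fintype.equivFin _).injective (Fin.ext h))
    intro K v hv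
    refine (hVrat K v hv).mono ?_
    exact le_ciSup (f := fun K : (unanimityGraph M).ConnectedComponent =>
      rationalityNumber (fun i j : K.supp => M i.1 j.1))
      (Set.Finite.bddAbove (Set.finite_range _)) K
  · rcases isEmpty_or_nonempty (unanimityGraph M).ConnectedComponent with h | h
    · rw [ciSup_of_empty]
      exact bot_le
    · refine ciSup_le fun K => ?_
      have hmem : Rationalizable M (rationalityNumber M) :=
        Nat.sInf_mem (s := {α | Rationalizable M α}) ⟨_, rationalizable_card M hM⟩
      exact Nat.sInf_le (rationalizable_restrict K.supp hmem)
end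

section
/- Let M be a half-integral preference matrix and let k = χ(G_M) be the chromatic number of its unanimity graph. Then M is k-rationalizable; in fact, there exist two k-rational voters consistent with M. Consequently α(M) ≤ χ(G_M). -/
open scoped Classical

-- Auxiliary count lemmas
private lemma countVoters_pair {C : Type} (a b : Voter C) (P : Voter C → Prop) :
    countVoters [a, b] P = (if P a then 1 else 0) + (if P b then 1 else 0) := by
  simp [countVoters]

private lemma countVoters_pair_two {C : Type} (a b : Voter C) (P : Voter C → Prop)
    (ha : P a) (hb : P b) : countVoters [a, b] P = 2 := by
  rw [countVoters_pair, if_pos ha, if_pos hb]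

private lemma countVoters_pair_zero {C : Type} (a b : Voter C) (P : Voter C → Prop)
    (ha : ¬ P a) (hb : ¬ P b) : countVoters [a, b] P = 0 := by
  rw [countVoters_pair, if_neg ha, if_neg hb]

private lemma countVoters_pair_one_left {C : Type} (a b : Voter C) (P : Voter C → Prop)
    (ha : P a) (hb : ¬ P b) : countVoters [a, b] P = 1 := by
  rw [countVoters_pair, if_pos ha, if_neg hb]

private lemma countVoters_pair_one_right {C : Type} (a b : Voter C) (P : Voter C → Prop)
    (ha : ¬ P a) (hb : P b) : countVoters [a, b] P = 1 := by
  rw [countVoters_pair, if_neg ha, if_pos hb]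

/-- a half-integral preference matrix is `k`-rationalizable for
`k = χ(G_M)`, in fact using only two `k`-rational voters; hence `α(M) ≤ χ(G_M)`. -/
theorem rationalityNumber_le_chromaticNumber {C : Type} [Fintype C]
    (M : C → C → ℝ) (hM : IsPrefMatrix M) (hHalf : HalfIntegral M)
    (k : ℕ) (hk : (unanimityGraph M).chromaticNumber = (k : ℕ∞)) :
    (∃ v₁ v₂ : Voter C, v₁.Rational k ∧ v₂.Rational k ∧ Consistent M [v₁, v₂]) ∧
      Rationalizable M k ∧ rationalityNumber M ≤ k := by
  -- Get a proper coloring with k colors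
  have hcol : (unanimityGraph M).Colorable k := by
    rw [← SimpleGraph.chromaticNumber_le_iff_colorable, hk]
  obtain ⟨col⟩ := hcol
  -- A fixed linear order on C
  let e : C ≃ Fin (Fintype.card C) := Fintype.equivFin C
  -- Within a color class, all off-diagonal entries are 1/2
  have hhalfclass : ∀ i j : C, i ≠ j → col i = col j → M i j = 1 / 2 := by
    intro i j hij hc
    have hadj : ¬ (unanimityGraph M).Adj i j := by
      intro h; exact col.valid h hc
    have hno : ¬ (M i j = 1 ∨ M j i = 1) := fun h => hadj ⟨hij, h⟩
    push_neg at hno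
    rcases hHalf i j with h0 | h | h1
    · exfalso
      have hsum := hM.2.2 i j hij
      rcases hHalf j i with g0 | g | g1
      · rw [h0, g0] at hsum; norm_num at hsum
      · rw [h0, g] at hsum; norm_num at hsum
      · exact hno.2 g1
    · exact h
    · exact absurd h1 hno.1
  -- The two voters
  let v₁ : Voter C := ⟨fun i j => col i = col j ∧ e i < e j,
    fun i h => lt_irrefl _ h.2,
    fun h₁ h₂ => ⟨h₁.1.trans h₂.1, h₁.2.trans h₂.2⟩⟩
  let v₂ : Voter C := ⟨fun i j => col i = col j ∧ e j < e i,
    fun i h => lt_irrefl _ h.2,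
    fun h₁ h₂ => ⟨h₁.1.trans h₂.1, h₂.2.trans h₁.2⟩⟩
  -- Rationality: antichains inject into colors
  have hrat : ∀ v : Voter C,
      (∀ i j : C, i ≠ j → col i = col j → v.rel i j ∨ v.rel j i) → v.Rational k := by
    intro v hv A hA
    have hinj : Set.InjOn col A := by
      intro i hi j hj hcij
      by_contra hij
      rcases hv i j hij hcij with h | h
      · exact (hA i hi j hj hij).1 h
      · exact (hA i hi j hj hij).2 h
    calc A.card ≤ (Finset.univ : Finset (Fin k)).card :=
          Finset.card_le_card_of_injOn col (fun _ _ => Finset.mem_univ _) hinj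
      _ = k := by simp
  have hrat1 : v₁.Rational k := by
    apply hrat
    intro i j hij hc
    have hne : e i ≠ e j := fun h => hij (e.injective h)
    rcases lt_or_gt_of_ne hne with h | h
    · exact Or.inl ⟨hc, h⟩
    · exact Or.inr ⟨hc.symm, h⟩
  have hrat2 : v₂.Rational k := by
    apply hrat
    intro i j hij hc
    have hne : e i ≠ e j := fun h => hij (e.injective h)
    rcases lt_or_gt_of_ne hne with h | h
    · exact Or.inr ⟨hc.symm, h⟩
    · exact Or.inl ⟨hc, h⟩
  -- Consistency
  have hcons : Consistent M [v₁, v₂] := by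
    refine ⟨by simp, ?_⟩
    intro i j hij
    have hlen : (([v₁, v₂] : List (Voter C)).length : ℝ) = 2 := by norm_num
    rw [hlen]
    by_cases hc : col i = col j
    · -- same color class: M i j = 1/2, exactly one voter strongly prefers each way
      have hMij := hhalfclass i j hij hc
      have hne : e i ≠ e j := fun h => hij (e.injective h)
      rcases lt_or_gt_of_ne hne with h | h
      · have hs : countVoters [v₁, v₂] (fun v => v.strong i j) = 1 :=
          countVoters_pair_one_left _ _ _ ⟨hc, h⟩
            (fun hh => absurd (hh.2.trans h) (lt_irrefl _))
        have hw : countVoters [v₁, v₂] (fun v => v.weak i j) = 1 := by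
          apply countVoters_pair_one_left
          · exact Or.inl ⟨hc, h⟩
          · intro hh
            rcases hh with h1 | h2
            · exact absurd (h1.2.trans h) (lt_irrefl _)
            · exact h2.2 ⟨hc.symm, h⟩
        rw [hs, hw, hMij]; norm_num
      · have hs : countVoters [v₁, v₂] (fun v => v.strong i j) = 1 :=
          countVoters_pair_one_right _ _ _
            (fun hh => absurd (hh.2.trans h) (lt_irrefl _)) ⟨hc, h⟩
        have hw : countVoters [v₁, v₂] (fun v => v.weak i j) = 1 := by
          apply countVoters_pair_one_right
          · intro hh
            rcases hh with h1 | h2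
            · exact absurd (h1.2.trans h) (lt_irrefl _)
            · exact h2.2 ⟨hc.symm, h⟩
          · exact Or.inl ⟨hc, h⟩
        rw [hs, hw, hMij]; norm_num
    · -- different color classes: both voters indifferent on {i,j}
      have hs : countVoters [v₁, v₂] (fun v => v.strong i j) = 0 :=
        countVoters_pair_zero _ _ _ (fun hh => hc hh.1) (fun hh => hc hh.1)
      have hw : countVoters [v₁, v₂] (fun v => v.weak i j) = 2 := by
        apply countVoters_pair_two
        · exact Or.inr ⟨fun hh => hc hh.1, fun hh => hc hh.1.symm⟩
        · exact Or.inr ⟨fun hh => hc hh.1, fun hh => hc hh.1.symm⟩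
      rw [hs, hw]
      constructor
      · simpa using hM.2.1 i j
      · rcases hHalf i j with h | h | h <;> rw [h] <;> norm_num
  have hRz : Rationalizable M k :=
    ⟨[v₁, v₂], hcons, by
      intro v hv
      rcases List.mem_pair.mp hv with rfl | rfl
      · exact hrat1
      · exact hrat2⟩
  exact ⟨⟨v₁, v₂, hrat1, hrat2, hcons⟩, hRz, Nat.sInf_le hRz⟩
end

section
/- For every positive integer k there exists a half-integral preference matrix M whose unanimity graph has chromatic number χ(G_M)=k and whose rationality number satisfies α(M) ≥ k/5. -/
open scoped Classical

namespace RatAux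

open Finset

/-- The group of a candidate: its value divided by the group size `N`. -/
def grpOf (N : ℕ) {n : ℕ} (x : Fin n) : ℕ := x.val / N

/-- The arc relation determined by a boolean function on ordered pairs. -/
def ArcOf {n : ℕ} (f : Fin n × Fin n → Bool) (x y : Fin n) : Prop :=
  (x < y ∧ f (x, y) = true) ∨ (y < x ∧ f (y, x) = false)

lemma arc_total {n : ℕ} (f : Fin n × Fin n → Bool) {x y : Fin n} (h : x ≠ y) :
    ArcOf f x y ∨ ArcOf f y x := by
  rcases lt_or_gt_of_ne h with hlt | hgt
  · rcases Bool.eq_false_or_eq_true (f (x, y)) with hb | hb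
    · exact Or.inl (Or.inl ⟨hlt, hb⟩)
    · exact Or.inr (Or.inr ⟨hlt, hb⟩)
  · rcases Bool.eq_false_or_eq_true (f (y, x)) with hb | hb
    · exact Or.inr (Or.inl ⟨hgt, hb⟩)
    · exact Or.inl (Or.inr ⟨hgt, hb⟩)
  

lemma arc_asymm {n : ℕ} (f : Fin n × Fin n → Bool) {x y : Fin n} :
    ArcOf f x y → ArcOf f y x → False := by
  rintro (⟨h1, h2⟩ | ⟨h1, h2⟩) (⟨h3, h4⟩ | ⟨h3, h4⟩)
  · exact absurd h3 (asymm h1)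
  · rw [h2] at h4; simp at h4
  · rw [h4] at h2; simp at h2
  · exact absurd h3 (asymm h1)

/-- Sort a pair. -/
def sp {n : ℕ} (x y : Fin n) : Fin n × Fin n := if x < y then (x, y) else (y, x)

lemma sp_comm {n : ℕ} (x y : Fin n) (h : x ≠ y) : sp x y = sp y x := by
  rcases lt_or_gt_of_ne h with hlt | hgt
  · simp [sp, hlt, asymm hlt]
  · simp [sp, hgt, asymm hgt]

lemma sp_eq {n : ℕ} {x y x' y' : Fin n} (h : sp x y = sp x' y') :
    (x = x' ∧ y = y') ∨ (x = y' ∧ y = x') := by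
  unfold sp at h
  split_ifs at h with h1 h2 h2 <;>
    simp only [Prod.mk.injEq] at h <;> tauto

/-- `f` is a good orientation: no injective sequence of length `5N+1` is
forward-oriented on all cross-group pairs. -/
def GoodF (k N : ℕ) (f : Fin (k * N) × Fin (k * N) → Bool) : Prop :=
  ∀ u : Fin (5 * N + 1) → Fin (k * N), Function.Injective u →
    ¬ (∀ i j : Fin (5 * N + 1), i < j → grpOf N (u i) ≠ grpOf N (u j) →
        ArcOf f (u i) (u j))

section Counting

variable {k N : ℕ}

/-- The set of orientations compatible with a fixed forward-ordered sequence `u`. -/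
noncomputable def FSet (k N : ℕ) (u : Fin (5 * N + 1) → Fin (k * N)) :
    Finset (Fin (k * N) × Fin (k * N) → Bool) :=
  univ.filter (fun f => ∀ i j : Fin (5 * N + 1), i < j →
    grpOf N (u i) ≠ grpOf N (u j) → ArcOf f (u i) (u j))

lemma cardF_le (hN : 0 < N) (u : Fin (5 * N + 1) → Fin (k * N))
    (hu : Function.Injective u) :
    10 * N ^ 2 ≤ k * N * (k * N) ∧
      (FSet k N u).card ≤ 2 ^ (k * N * (k * N) - 10 * N ^ 2) := by
  -- cross and same-group ordered index pairs
  set OffC : Finset (Fin (5 * N + 1) × Fin (5 * N + 1)) :=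
    (univ : Finset (Fin (5 * N + 1))).offDiag.filter
      (fun q => ¬ grpOf N (u q.1) = grpOf N (u q.2)) with hOffC
  set OffS : Finset (Fin (5 * N + 1) × Fin (5 * N + 1)) :=
    (univ : Finset (Fin (5 * N + 1))).offDiag.filter
      (fun q => grpOf N (u q.1) = grpOf N (u q.2)) with hOffS
  have hsplit : OffS.card + OffC.card = 25 * N ^ 2 + 5 * N := by
    rw [hOffS, hOffC, Finset.card_filter_add_card_filter_not]
    rw [Finset.offDiag_card, Finset.card_univ, Fintype.card_fin]
    have : (5 * N + 1) * (5 * N + 1) = 25 * N ^ 2 + 5 * N + (5 * N + 1) := by ring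
    omega
  -- same-group pairs are few
  have hOffS_le : OffS.card ≤ N * (5 * N + 1) := by
    have key := Finset.card_le_mul_card_image_of_maps_to
      (f := fun q : Fin (5 * N + 1) × Fin (5 * N + 1) => q.1) (s := OffS) (t := univ)
      (fun a _ => mem_univ _) N ?_
    · calc OffS.card ≤ N * (univ : Finset (Fin (5 * N + 1))).card := key
        _ = N * (5 * N + 1) := by rw [Finset.card_univ, Fintype.card_fin]
    · intro i _
      -- fiber over i injects into range N via the residue of the second coordinate
      refine le_trans (Finset.card_le_card_of_injOn (fun q => (u q.2).val % N) ?_ ?_)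
        (le_of_eq (Finset.card_range N))
      · intro q hq
        exact mem_range.mpr (Nat.mod_lt _ hN)
      · intro q hq q' hq' hmod
        simp only [coe_filter, Set.mem_setOf_eq, hOffS, mem_filter, Finset.mem_offDiag,
          mem_univ, true_and] at hq hq'
        obtain ⟨⟨hne, hgrp⟩, h1⟩ := hq
        obtain ⟨⟨hne2, hgrp2⟩, h12⟩ := hq'
        have hdiv : (u q.2).val / N = (u q'.2).val / N := by
          have e1 : grpOf N (u q.2) = grpOf N (u i) := by rw [← h1]; exact hgrp.symm
          have e2 : grpOf N (u q'.2) = grpOf N (u i) := by rw [← h12]; exact hgrp2.symm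
          have := e1.trans e2.symm
          simpa [grpOf] using this
        have hval : (u q.2).val = (u q'.2).val := by
          have hmod2 : (u q.2).val % N = (u q'.2).val % N := hmod
          conv_lhs => rw [← Nat.div_add_mod (u q.2).val N]
          conv_rhs => rw [← Nat.div_add_mod (u q'.2).val N]
          rw [hdiv, hmod2]
        have h2 : q.2 = q'.2 := hu (Fin.ext hval)
        exact Prod.ext (h1.trans h12.symm) h2
  -- cross pairs are many
  have hOffC_ge : 20 * N ^ 2 ≤ OffC.card := by
    have h5 : N * (5 * N + 1) = 5 * N ^ 2 + N := by ring
    omega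
  -- the set of sorted cross vertex pairs
  set T : Finset (Fin (k * N) × Fin (k * N)) :=
    OffC.image (fun q => sp (u q.1) (u q.2)) with hT
  have hT_ge : 10 * N ^ 2 ≤ T.card := by
    have h2 : OffC.card ≤ 2 * T.card := by
      apply Finset.card_le_mul_card_image
      intro p hp
      obtain ⟨q0, hq0, hq0p⟩ := mem_image.mp hp
      have hsub : OffC.filter (fun q => sp (u q.1) (u q.2) = p) ⊆ {q0, (q0.2, q0.1)} := by
        intro q hq
        simp only [mem_filter] at hq
        obtain ⟨hqOffC, hqp⟩ := hq
        rcases sp_eq (hqp.trans hq0p.symm) with ⟨e1, e2⟩ | ⟨e1, e2⟩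
        · have hq' : q = q0 := Prod.ext (hu e1) (hu e2)
          simp [hq']
        · have hq' : q = (q0.2, q0.1) := Prod.ext (hu e1) (hu e2)
          simp [hq']
      calc (OffC.filter (fun q => sp (u q.1) (u q.2) = p)).card
          ≤ ({q0, (q0.2, q0.1)} : Finset (Fin (5 * N + 1) × Fin (5 * N + 1))).card :=
            Finset.card_le_card hsub
        _ ≤ 2 := (Finset.card_insert_le _ _).trans (by simp)
    omega
  have hT_le : T.card ≤ k * N * (k * N) := by
    calc T.card ≤ (univ : Finset (Fin (k * N) × Fin (k * N))).card :=
        Finset.card_le_card (subset_univ _)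
      _ = k * N * (k * N) := by rw [Finset.card_univ, Fintype.card_prod, Fintype.card_fin]
  refine ⟨le_trans hT_ge hT_le, ?_⟩
  -- every member of FSet is determined on T
  set req : Fin (k * N) × Fin (k * N) → Bool :=
    fun p => decide (∃ i j : Fin (5 * N + 1), i < j ∧ u i = p.1 ∧ u j = p.2) with hreq
  have hdet : ∀ f ∈ FSet k N u, ∀ p ∈ T, f p = req p := by
    intro f hf p hp
    simp only [FSet, mem_filter, mem_univ, true_and] at hf
    obtain ⟨q, hqOffC, hqp⟩ := mem_image.mp hp
    simp only [hOffC, mem_filter, Finset.mem_offDiag, mem_univ, true_and] at hqOffC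
    obtain ⟨hne, hgrp⟩ := hqOffC
    obtain ⟨i, j, hij, hgij, hpij⟩ :
        ∃ i j : Fin (5 * N + 1), i < j ∧ grpOf N (u i) ≠ grpOf N (u j) ∧
          sp (u i) (u j) = p := by
      rcases lt_or_gt_of_ne hne with hlt | hgt
      · exact ⟨q.1, q.2, hlt, hgrp, hqp⟩
      · refine ⟨q.2, q.1, hgt, fun h => hgrp h.symm, ?_⟩
        rw [← hqp]
        exact (sp_comm _ _ (fun h => hne (hu h))).symm
    have harc := hf i j hij hgij
    have huij : u i ≠ u j := fun h => hij.ne (hu h)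
    rcases lt_or_gt_of_ne huij with hlt | hgt
    · have hpeq : p = (u i, u j) := by rw [← hpij]; simp [sp, hlt]
      have hfp : f p = true := by
        rcases harc with ⟨-, h2⟩ | ⟨h1, -⟩
        · rw [hpeq]; exact h2
        · exact absurd h1 (asymm hlt)
      have hreqp : req p = true := by
        rw [hreq]
        exact decide_eq_true ⟨i, j, hij, by rw [hpeq], by rw [hpeq]⟩
      rw [hfp, hreqp]
    · have hpeq : p = (u j, u i) := by
        rw [← hpij]; simp [sp, asymm hgt]
      have hfp : f p = false := by
        rcases harc with ⟨h1, -⟩ | ⟨-, h2⟩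
        · exact absurd h1 (asymm hgt)
        · rw [hpeq]; exact h2
      have hreqp : req p = false := by
        rw [hreq]
        apply decide_eq_false
        rintro ⟨a, b, hab, h1, h2⟩
        rw [hpeq] at h1 h2
        have e1 : a = j := hu h1
        have e2 : b = i := hu h2
        rw [e1, e2] at hab
        exact absurd hij (asymm hab)
      rw [hfp, hreqp]
  -- restriction to the complement of T is injective on FSet
  have hinj : Function.Injective
      (fun f : {f // f ∈ FSet k N u} => (fun p : {p // p ∈ Tᶜ} => f.val p.val)) := by
    intro f g hfg
    apply Subtype.ext
    funext p
    by_cases hp : p ∈ T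
    · rw [hdet f.val f.property p hp, hdet g.val g.property p hp]
    · exact congrFun hfg ⟨p, Finset.mem_compl.mpr hp⟩
  have hcard := Fintype.card_le_of_injective _ hinj
  rw [Fintype.card_coe] at hcard
  have hcard2 : Fintype.card ({p // p ∈ Tᶜ} → Bool) = 2 ^ (k * N * (k * N) - T.card) := by
    rw [Fintype.card_fun, Fintype.card_coe, Fintype.card_bool, Finset.card_compl,
      Fintype.card_prod, Fintype.card_fin]
  rw [hcard2] at hcard
  exact hcard.trans (Nat.pow_le_pow_right (by norm_num) (Nat.sub_le_sub_left hT_ge _))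

end Counting

lemma twelve_mul_lt (m : ℕ) (hm : 6 ≤ m) : 12 * m < 10 * 2 ^ m := by
  induction m with
  | zero => omega
  | succ p ih =>
    rcases Nat.lt_or_ge p 6 with hp | hp
    · interval_cases p <;> norm_num
    · have h2 : (64 : ℕ) ≤ 2 ^ p := by
        calc (64 : ℕ) = 2 ^ 6 := by norm_num
          _ ≤ 2 ^ p := Nat.pow_le_pow_right (by norm_num) hp
      have := ih (by omega)
      have hpow : 2 ^ (p + 1) = 2 * 2 ^ p := by ring
      omega

lemma exists_goodF (k : ℕ) : ∃ f : Fin (k * 2 ^ k) × Fin (k * 2 ^ k) → Bool,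
    GoodF k (2 ^ k) f := by
  set N := 2 ^ k with hNdef
  have hN : 0 < N := Nat.pow_pos (by norm_num)
  by_contra hcon
  push_neg at hcon
  -- every orientation has a bad sequence
  have hcon' : ∀ f : Fin (k * N) × Fin (k * N) → Bool,
      ∃ u : Fin (5 * N + 1) → Fin (k * N), Function.Injective u ∧ f ∈ FSet k N u := by
    intro f
    have h := hcon f
    rw [GoodF] at h
    push_neg at h
    obtain ⟨u, hu, hprop⟩ := h
    exact ⟨u, hu, by simp only [FSet, mem_filter, mem_univ, true_and]; exact hprop⟩
  set 𝒰 : Finset (Fin (5 * N + 1) → Fin (k * N)) :=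
    univ.filter Function.Injective with h𝒰
  have hcover : (univ : Finset (Fin (k * N) × Fin (k * N) → Bool)) ⊆
      𝒰.biUnion (fun u => FSet k N u) := by
    intro f _
    obtain ⟨u, hu, hf⟩ := hcon' f
    exact Finset.mem_biUnion.mpr ⟨u, by simp [h𝒰, hu], hf⟩
  have htotal : 2 ^ (k * N * (k * N)) ≤ ∑ u ∈ 𝒰, (FSet k N u).card := by
    calc 2 ^ (k * N * (k * N))
        = (univ : Finset (Fin (k * N) × Fin (k * N) → Bool)).card := by
          rw [Finset.card_univ, Fintype.card_fun, Fintype.card_bool, Fintype.card_prod,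
            Fintype.card_fin]
      _ ≤ (𝒰.biUnion (fun u => FSet k N u)).card := Finset.card_le_card hcover
      _ ≤ ∑ u ∈ 𝒰, (FSet k N u).card := Finset.card_biUnion_le
  rcases 𝒰.eq_empty_or_nonempty with hemp | ⟨u0, hu0⟩
  · rw [hemp] at htotal
    simp at htotal
  · have hu0inj : Function.Injective u0 := by
      simp only [h𝒰, mem_filter] at hu0; exact hu0.2
    have hk6 : 6 ≤ k := by
      have hle : 5 * N + 1 ≤ k * N := by
        have := Fintype.card_le_of_injective u0 hu0inj
        simpa using this
      by_contra hlt
      have : k * N ≤ 5 * N := Nat.mul_le_mul_right N (by omega)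
      omega
    obtain ⟨hE, -⟩ := cardF_le hN u0 hu0inj
    have hbound : ∀ u ∈ 𝒰, (FSet k N u).card ≤ 2 ^ (k * N * (k * N) - 10 * N ^ 2) := by
      intro u hu
      simp only [h𝒰, mem_filter] at hu
      exact (cardF_le hN u hu.2).2
    have hsum : ∑ u ∈ 𝒰, (FSet k N u).card ≤
        𝒰.card * 2 ^ (k * N * (k * N) - 10 * N ^ 2) := by
      calc ∑ u ∈ 𝒰, (FSet k N u).card
          ≤ 𝒰.card • 2 ^ (k * N * (k * N) - 10 * N ^ 2) :=
            Finset.sum_le_card_nsmul _ _ _ hbound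
        _ = 𝒰.card * 2 ^ (k * N * (k * N) - 10 * N ^ 2) := by rw [smul_eq_mul]
    have h𝒰card : 𝒰.card ≤ (k * N) ^ (5 * N + 1) := by
      calc 𝒰.card ≤ (univ : Finset (Fin (5 * N + 1) → Fin (k * N))).card :=
          Finset.card_le_card (Finset.filter_subset _ _)
        _ = (k * N) ^ (5 * N + 1) := by
          rw [Finset.card_univ, Fintype.card_fun, Fintype.card_fin, Fintype.card_fin]
    -- numeric bound: (k*N)^(5N+1) < 2^(10 N^2)
    have hnum : (k * N) ^ (5 * N + 1) < 2 ^ (10 * N ^ 2) := by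
      have hkN : k * N ≤ 2 ^ (2 * k) := by
        calc k * N ≤ 2 ^ k * N := Nat.mul_le_mul_right N (Nat.le_of_lt (Nat.lt_two_pow_self (n := k)))
          _ = 2 ^ (2 * k) := by rw [hNdef, ← pow_add]; ring_nf
      calc (k * N) ^ (5 * N + 1) ≤ (2 ^ (2 * k)) ^ (5 * N + 1) :=
            Nat.pow_le_pow_left hkN _
        _ = 2 ^ (2 * k * (5 * N + 1)) := by rw [← pow_mul]
        _ < 2 ^ (10 * N ^ 2) := by
            apply Nat.pow_lt_pow_right (by norm_num)
            have h12 : 12 * k < 10 * 2 ^ k := twelve_mul_lt k hk6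
            have hkN' : k ≤ 2 ^ k := Nat.le_of_lt (Nat.lt_two_pow_self (n := k))
            have hexp : 2 * k * (5 * N + 1) = 10 * k * N + 2 * k := by ring
            have hsq : 10 * N ^ 2 = 10 * N * N := by ring
            rw [hexp, hsq, hNdef]
            calc 10 * k * 2 ^ k + 2 * k ≤ 10 * k * 2 ^ k + 2 * 2 ^ k := by
                  have := Nat.mul_le_mul_left 2 hkN'; omega
              _ = (10 * k + 2) * 2 ^ k := by ring
              _ < 10 * 2 ^ k * 2 ^ k := by
                  apply Nat.mul_lt_mul_of_lt_of_le _ (le_refl (2 ^ k)) hN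
                  omega
    have hfinal : 𝒰.card * 2 ^ (k * N * (k * N) - 10 * N ^ 2) < 2 ^ (k * N * (k * N)) := by
      calc 𝒰.card * 2 ^ (k * N * (k * N) - 10 * N ^ 2)
          ≤ (k * N) ^ (5 * N + 1) * 2 ^ (k * N * (k * N) - 10 * N ^ 2) :=
            Nat.mul_le_mul_right _ h𝒰card
        _ < 2 ^ (10 * N ^ 2) * 2 ^ (k * N * (k * N) - 10 * N ^ 2) := by
            apply Nat.mul_lt_mul_of_lt_of_le hnum (le_refl _)
            exact Nat.pow_pos (by norm_num)
        _ = 2 ^ (k * N * (k * N)) := by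
            rw [← pow_add, Nat.add_sub_cancel' hE]
    omega


section VoterAux

open Finset

/-- Height of `x`: the largest size of a chain of the voter's order ending at `x`. -/
noncomputable def heightOf {n : ℕ} (v : Voter (Fin n)) (x : Fin n) : ℕ :=
  ((univ : Finset (Finset (Fin n))).filter
    (fun A => x ∈ A ∧ (∀ a ∈ A, ∀ b ∈ A, a ≠ b → v.rel a b ∨ v.rel b a) ∧
      (∀ a ∈ A, a = x ∨ v.rel a x))).sup Finset.card

lemma singleton_mem_heightSet {n : ℕ} (v : Voter (Fin n)) (x : Fin n) :
    ({x} : Finset (Fin n)) ∈ (univ : Finset (Finset (Fin n))).filter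
      (fun A => x ∈ A ∧ (∀ a ∈ A, ∀ b ∈ A, a ≠ b → v.rel a b ∨ v.rel b a) ∧
        (∀ a ∈ A, a = x ∨ v.rel a x)) := by
  rw [mem_filter]
  refine ⟨mem_univ _, Finset.mem_singleton_self x, ?_, ?_⟩
  · intro a ha b hb hab
    rw [Finset.mem_singleton] at ha hb
    exact absurd (ha.trans hb.symm) hab
  · intro a ha
    rw [Finset.mem_singleton] at ha
    exact Or.inl ha

lemma one_le_heightOf {n : ℕ} (v : Voter (Fin n)) (x : Fin n) : 1 ≤ heightOf v x := by
  have := Finset.le_sup (f := Finset.card) (singleton_mem_heightSet v x)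
  rwa [Finset.card_singleton] at this

lemma heightOf_le {n : ℕ} (v : Voter (Fin n)) (L : ℕ)
    (hL : ∀ A : Finset (Fin n), (∀ a ∈ A, ∀ b ∈ A, a ≠ b → v.rel a b ∨ v.rel b a) →
      A.card ≤ L) (x : Fin n) : heightOf v x ≤ L := by
  apply Finset.sup_le
  intro A hA
  simp only [mem_filter, mem_univ, true_and] at hA
  exact hL A hA.2.1

lemma heightOf_lt_of_rel {n : ℕ} (v : Voter (Fin n)) {a b : Fin n} (hab : v.rel a b) :
    heightOf v a < heightOf v b := by
  have hne : ((univ : Finset (Finset (Fin n))).filter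
      (fun A => a ∈ A ∧ (∀ x ∈ A, ∀ y ∈ A, x ≠ y → v.rel x y ∨ v.rel y x) ∧
        (∀ x ∈ A, x = a ∨ v.rel x a))).Nonempty := ⟨{a}, singleton_mem_heightSet v a⟩
  obtain ⟨A0, hA0, hA0sup⟩ := Finset.exists_mem_eq_sup _ hne Finset.card
  simp only [mem_filter, mem_univ, true_and] at hA0
  obtain ⟨haA0, hchain0, hend0⟩ := hA0
  have hbA0 : b ∉ A0 := by
    intro hb
    rcases hend0 b hb with hba | hba
    · exact v.irrefl a (hba ▸ hab)
    · exact v.irrefl a (v.trans hab hba)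
  have hmem : insert b A0 ∈ (univ : Finset (Finset (Fin n))).filter
      (fun A => b ∈ A ∧ (∀ x ∈ A, ∀ y ∈ A, x ≠ y → v.rel x y ∨ v.rel y x) ∧
        (∀ x ∈ A, x = b ∨ v.rel x b)) := by
    simp only [mem_filter, mem_univ, true_and]
    have hrelb : ∀ x ∈ A0, v.rel x b := by
      intro x hx
      rcases hend0 x hx with h | h
      · exact h ▸ hab
      · exact v.trans h hab
    refine ⟨Finset.mem_insert_self _ _, ?_, ?_⟩
    · intro x hx y hy hxy
      rcases Finset.mem_insert.mp hx with hx' | hx' <;>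
        rcases Finset.mem_insert.mp hy with hy' | hy'
      · exact absurd (hx'.trans hy'.symm) hxy
      · exact Or.inr (hx' ▸ hrelb y hy')
      · exact Or.inl (hy' ▸ hrelb x hx')
      · exact hchain0 x hx' y hy' hxy
    · intro x hx
      rcases Finset.mem_insert.mp hx with hx' | hx'
      · exact Or.inl hx'
      · exact Or.inr (hrelb x hx')
  have hle := Finset.le_sup (f := Finset.card) hmem
  rw [Finset.card_insert_of_notMem hbA0] at hle
  calc heightOf v a = A0.card := hA0sup
    _ < A0.card + 1 := Nat.lt_succ_self _
    _ ≤ heightOf v b := hle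

/-- Every list `V` satisfying `P` for no member has zero count. -/
lemma countVoters_eq_zero_iff {C : Type} (V : List (Voter C)) (P : Voter C → Prop) :
    countVoters V P = 0 ↔ ∀ v ∈ V, ¬ P v := by
  induction V with
  | nil => simp [countVoters]
  | cons hd tl ih =>
    simp only [countVoters, List.map_cons, List.sum_cons, List.mem_cons] at *
    constructor
    · intro h w hw
      rcases hw with hw | hw
      · intro hP
        rw [hw] at hP
        rw [if_pos hP] at h
        omega
      · have h2 : (tl.map fun v => if P v then 1 else 0).sum = 0 := by
          split_ifs at h with h1 <;> omega
        exact ih.mp h2 w hw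
    · intro h
      rw [if_neg (h hd (Or.inl rfl))]
      simp only [Nat.zero_add]
      exact ih.mpr (fun w hw => h w (Or.inr hw))

end VoterAux

section Matrix

open Finset

/-- The half-integral preference matrix built from an orientation `f`. -/
noncomputable def Mmat (k N : ℕ) (f : Fin (k * N) × Fin (k * N) → Bool) :
    Fin (k * N) → Fin (k * N) → ℝ := fun x y =>
  if x = y then 0 else if grpOf N x = grpOf N y then 1 / 2
    else if ArcOf f x y then 1 else 0

variable {k N : ℕ} {f : Fin (k * N) × Fin (k * N) → Bool}

lemma Mmat_arc {x y : Fin (k * N)} (hg : grpOf N x ≠ grpOf N y) (ha : ArcOf f x y) :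
    Mmat k N f x y = 1 := by
  have hxy : x ≠ y := fun h => hg (by rw [h])
  simp only [Mmat, if_neg hxy, if_neg hg, if_pos ha]

lemma Mmat_notarc {x y : Fin (k * N)} (hg : grpOf N x ≠ grpOf N y) (ha : ¬ ArcOf f x y) :
    Mmat k N f x y = 0 := by
  have hxy : x ≠ y := fun h => hg (by rw [h])
  simp only [Mmat, if_neg hxy, if_neg hg, if_neg ha]

lemma Mmat_same {x y : Fin (k * N)} (hxy : x ≠ y) (hg : grpOf N x = grpOf N y) :
    Mmat k N f x y = 1 / 2 := by
  simp only [Mmat, if_neg hxy, if_pos hg]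

lemma Mmat_prefMatrix : IsPrefMatrix (Mmat k N f) := by
  refine ⟨fun i => by simp [Mmat], fun i j => ?_, fun i j hij => ?_⟩
  · unfold Mmat
    split_ifs <;> norm_num
  · by_cases hg : grpOf N i = grpOf N j
    · rw [Mmat_same hij hg, Mmat_same (Ne.symm hij) hg.symm]
      norm_num
    · have hg' : grpOf N j ≠ grpOf N i := fun h => hg h.symm
      rcases arc_total f hij with ha | ha
      · rw [Mmat_arc hg ha, Mmat_notarc hg' (fun h => arc_asymm f ha h)]
        norm_num
      · rw [Mmat_arc hg' ha, Mmat_notarc hg (fun h => arc_asymm f h ha)]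
        norm_num

lemma Mmat_halfIntegral : HalfIntegral (Mmat k N f) := by
  intro i j
  unfold Mmat
  split_ifs <;> simp

lemma Mmat_adj {x y : Fin (k * N)} :
    (unanimityGraph (Mmat k N f)).Adj x y ↔ grpOf N x ≠ grpOf N y := by
  constructor
  · rintro ⟨hxy, h1 | h1⟩
    · intro hg
      rw [Mmat_same hxy hg] at h1
      norm_num at h1
    · intro hg
      rw [Mmat_same (Ne.symm hxy) hg.symm] at h1
      norm_num at h1
  · intro hg
    have hxy : x ≠ y := fun h => hg (by rw [h])
    refine ⟨hxy, ?_⟩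
    rcases arc_total f hxy with ha | ha
    · exact Or.inl (Mmat_arc hg ha)
    · exact Or.inr (Mmat_arc (fun h => hg h.symm) ha)

lemma Mmat_chromatic (hk : 0 < k) (hN : 0 < N) :
    (unanimityGraph (Mmat k N f)).chromaticNumber = (k : ℕ∞) := by
  have hcol : (unanimityGraph (Mmat k N f)).Colorable k := by
    refine ⟨SimpleGraph.Coloring.mk
      (fun x => ⟨grpOf N x, (Nat.div_lt_iff_lt_mul hN).mpr x.isLt⟩) ?_⟩
    intro a b hab
    have := Mmat_adj.mp hab
    exact fun h => this (congrArg Fin.val h)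
  refine le_antisymm hcol.chromaticNumber_le ?_
  rw [SimpleGraph.le_chromaticNumber_iff_forall_surjective]
  intro C
  set ι : Fin k → Fin (k * N) := fun g => ⟨g.val * N, by
    exact (Nat.mul_lt_mul_right hN).mpr g.isLt⟩ with hι
  have hgrpι : ∀ g, grpOf N (ι g) = g.val := by
    intro g
    simp only [hι, grpOf]
    exact Nat.mul_div_cancel _ hN
  have hinj : Function.Injective (C ∘ ι) := by
    intro g g' hgg
    by_contra hne
    have hadj : (unanimityGraph (Mmat k N f)).Adj (ι g) (ι g') := by
      rw [Mmat_adj, hgrpι, hgrpι]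
      exact fun h => hne (Fin.ext h)
    exact C.valid hadj hgg
  have hsurj : Function.Surjective (C ∘ ι) := Finite.surjective_of_injective hinj
  intro c
  obtain ⟨g, hg⟩ := hsurj c
  exact ⟨ι g, hg⟩

end Matrix

section KeyBound

open Finset

variable {k N : ℕ} {f : Fin (k * N) × Fin (k * N) → Bool}

/-- Chains of a voter compatible with a good orientation are short. -/
lemma chain_card_le (hN : 0 < N) (hgood : GoodF k N f) (v : Voter (Fin (k * N)))
    (hnorev : ∀ x y : Fin (k * N), grpOf N x ≠ grpOf N y → ArcOf f x y → ¬ v.rel y x)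
    (A : Finset (Fin (k * N)))
    (hA : ∀ a ∈ A, ∀ b ∈ A, a ≠ b → v.rel a b ∨ v.rel b a) :
    A.card ≤ 5 * N := by
  by_contra hcon
  push_neg at hcon
  obtain ⟨B, hBA, hBcard⟩ := Finset.exists_subset_card_eq (Nat.succ_le_of_lt hcon)
  have hB : ∀ a ∈ B, ∀ b ∈ B, a ≠ b → v.rel a b ∨ v.rel b a :=
    fun a ha b hb => hA a (hBA ha) b (hBA hb)
  set p : Fin (k * N) → ℕ := fun x => (B.filter (fun y => v.rel y x)).card with hp
  have hmono : ∀ a ∈ B, ∀ b, v.rel a b → p a < p b := by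
    intro a ha b hab
    apply Finset.card_lt_card
    rw [Finset.ssubset_def]
    constructor
    · intro y hy
      rw [Finset.mem_filter] at hy ⊢
      exact ⟨hy.1, v.trans hy.2 hab⟩
    · intro hcon2
      have : a ∈ B.filter (fun y => v.rel y a) :=
        hcon2 (Finset.mem_filter.mpr ⟨ha, hab⟩)
      exact v.irrefl a (Finset.mem_filter.mp this).2
  have hplt : ∀ a ∈ B, p a < 5 * N + 1 := by
    intro a ha
    have hsub : B.filter (fun y => v.rel y a) ⊆ B.erase a := by
      intro y hy
      rw [Finset.mem_filter] at hy
      exact Finset.mem_erase.mpr ⟨fun h => v.irrefl a (h ▸ hy.2), hy.1⟩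
    have := Finset.card_le_card hsub
    rw [Finset.card_erase_of_mem ha, hBcard] at this
    simp only [hp]
    omega
  have hinjOn : Set.InjOn p B := by
    intro a ha b hb hpab
    by_contra hne
    rcases hB a ha b hb hne with h | h
    · exact absurd hpab (Nat.ne_of_lt (hmono a ha b h))
    · exact absurd hpab.symm (Nat.ne_of_lt (hmono b hb a h))
  have himg : B.image p = Finset.range (5 * N + 1) := by
    apply Finset.eq_of_subset_of_card_le
    · intro m hm
      obtain ⟨a, ha, hpa⟩ := Finset.mem_image.mp hm
      exact Finset.mem_range.mpr (hpa ▸ hplt a ha)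
    · rw [Finset.card_range, Finset.card_image_of_injOn hinjOn, hBcard]
  have hex : ∀ i : Fin (5 * N + 1), ∃ x, x ∈ B ∧ p x = i.val := by
    intro i
    have : i.val ∈ B.image p := himg ▸ Finset.mem_range.mpr i.isLt
    exact Finset.mem_image.mp this
  choose u huB hup using hex
  have huinj : Function.Injective u := by
    intro i j hij
    apply Fin.ext
    rw [← hup i, ← hup j, hij]
  have huord : ∀ i j : Fin (5 * N + 1), i < j → v.rel (u i) (u j) := by
    intro i j hij
    have hne : u i ≠ u j := fun h => absurd (Fin.ext (by rw [← hup i, ← hup j, h]) : i = j)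
      (Fin.ne_of_lt hij)
    rcases hB (u i) (huB i) (u j) (huB j) hne with h | h
    · exact h
    · have := hmono (u j) (huB j) (u i) h
      rw [hup i, hup j] at this
      exact absurd hij (by omega)
  apply hgood u huinj
  intro i j hij hg
  rcases arc_total f (fun h => hg (by rw [h]) : u i ≠ u j) with ha | ha
  · exact ha
  · exact absurd (huord i j hij) (hnorev (u j) (u i) (Ne.symm hg) ha)

/-- The central lower bound: any rationalizability degree `α` satisfies `k ≤ 5α`. -/
lemma key_bound (hN : 0 < N) (hgood : GoodF k N f) (α : ℕ)
    (h : Rationalizable (Mmat k N f) α) : k ≤ 5 * α := by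
  obtain ⟨V, ⟨hVne, hcons⟩, hrat⟩ := h
  obtain ⟨v, hv⟩ := List.exists_mem_of_ne_nil V hVne
  have hlen : (0 : ℝ) < (V.length : ℝ) := by
    have := List.length_pos_iff.mpr hVne
    exact_mod_cast this
  have hnorev : ∀ x y : Fin (k * N), grpOf N x ≠ grpOf N y → ArcOf f x y → ¬ v.rel y x := by
    intro x y hg harc
    have hyx0 : Mmat k N f y x = 0 :=
      Mmat_notarc (fun h2 => hg h2.symm) (fun h2 => arc_asymm f harc h2)
    have hc := (hcons y x (fun h2 => hg (by rw [h2]))).1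
    rw [hyx0] at hc
    have h0 : (0 : ℝ) ≤ (countVoters V (fun w => w.strong y x) : ℝ) / (V.length : ℝ) :=
      div_nonneg (Nat.cast_nonneg _) (le_of_lt hlen)
    have heq : (countVoters V (fun w => w.strong y x) : ℝ) / (V.length : ℝ) = 0 :=
      le_antisymm hc h0
    rw [div_eq_zero_iff] at heq
    have hcount : countVoters V (fun w => w.strong y x) = 0 := by
      rcases heq with h1 | h1
      · exact_mod_cast h1
      · exact absurd h1 (ne_of_gt hlen)
    exact (countVoters_eq_zero_iff V _).mp hcount v hv
  have hchain : ∀ A : Finset (Fin (k * N)),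
      (∀ a ∈ A, ∀ b ∈ A, a ≠ b → v.rel a b ∨ v.rel b a) → A.card ≤ 5 * N :=
    chain_card_le hN hgood v hnorev
  -- Mirsky-type argument: levels of the height function are antichains
  have hfib : ∀ i : ℕ, ((univ : Finset (Fin (k * N))).filter
      (fun x => heightOf v x = i)).card ≤ α := by
    intro i
    apply hrat v hv
    intro x hx y hy hxy
    simp only [mem_filter, mem_univ, true_and] at hx hy
    constructor
    · intro hr
      have := heightOf_lt_of_rel v hr
      omega
    · intro hr
      have := heightOf_lt_of_rel v hr
      omega
  have hcardsum : (univ : Finset (Fin (k * N))).card =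
      ∑ i ∈ Finset.Icc 1 (5 * N), ((univ : Finset (Fin (k * N))).filter
        (fun x => heightOf v x = i)).card := by
    apply Finset.card_eq_sum_card_fiberwise
    intro x _
    rw [Finset.mem_coe, Finset.mem_Icc]
    exact ⟨one_le_heightOf v x, heightOf_le v (5 * N) hchain x⟩
  have hsum_le : ∑ i ∈ Finset.Icc 1 (5 * N), ((univ : Finset (Fin (k * N))).filter
      (fun x => heightOf v x = i)).card ≤ (5 * N) * α := by
    calc ∑ i ∈ Finset.Icc 1 (5 * N), ((univ : Finset (Fin (k * N))).filter
          (fun x => heightOf v x = i)).card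
        ≤ (Finset.Icc 1 (5 * N)).card • α :=
          Finset.sum_le_card_nsmul _ _ _ (fun i _ => hfib i)
      _ = (5 * N) * α := by rw [smul_eq_mul, Nat.card_Icc, Nat.add_sub_cancel]
  have hn : k * N ≤ 5 * N * α := by
    have := hcardsum ▸ hsum_le
    rwa [Finset.card_univ, Fintype.card_fin] at this
  have : k * N ≤ 5 * α * N := by
    calc k * N ≤ 5 * N * α := hn
      _ = 5 * α * N := by ring
  exact Nat.le_of_mul_le_mul_right this hN

/-- The trivial totally-indifferent voter shows the matrix is rationalizable at level `k*N`. -/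
lemma Mmat_rationalizable : Rationalizable (Mmat k N f) (k * N) := by
  set v0 : Voter (Fin (k * N)) := ⟨fun _ _ => False, fun _ h => h, fun h _ => h.elim⟩ with hv0
  refine ⟨[v0], ⟨by simp, ?_⟩, ?_⟩
  · intro i j hij
    have hstrong : countVoters [v0] (fun w => w.strong i j) = 0 := by
      rw [countVoters_eq_zero_iff]
      intro w hw
      simp only [List.mem_singleton] at hw
      rw [hw]
      exact fun h => h
    have hweak : countVoters [v0] (fun w => w.weak i j) = 1 := by
      simp only [countVoters, List.map_cons, List.map_nil, List.sum_cons, List.sum_nil]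
      rw [if_pos]
      · simp
      · exact Or.inr ⟨fun h => h, fun h => h⟩
    rw [hstrong, hweak]
    simp only [List.length_singleton, Nat.cast_one, Nat.cast_zero, zero_div, div_one]
    constructor
    · exact Mmat_prefMatrix.2.1 i j
    · rcases Mmat_halfIntegral (f := f) i j with h | h | h <;> rw [h] <;> norm_num
  · intro w hw
    simp only [List.mem_singleton] at hw
    intro A hA
    calc A.card ≤ Fintype.card (Fin (k * N)) := Finset.card_le_univ A
      _ = k * N := Fintype.card_fin _

end KeyBound

end RatAux

/-- for every positive `k` there is a half-integral preference matrix whose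
unanimity graph has chromatic number `k` and whose rationality number is at least `k/5`. -/
theorem exists_halfIntegral_lower_bound (k : ℕ) (hk : 0 < k) :
    ∃ (n : ℕ) (M : Fin n → Fin n → ℝ), IsPrefMatrix M ∧ HalfIntegral M ∧
      (unanimityGraph M).chromaticNumber = (k : ℕ∞) ∧
      (k : ℝ) / 5 ≤ (rationalityNumber M : ℝ) := by
  obtain ⟨f, hf⟩ := RatAux.exists_goodF k
  have hN : 0 < 2 ^ k := Nat.pow_pos (by norm_num)
  refine ⟨k * 2 ^ k, RatAux.Mmat k (2 ^ k) f, RatAux.Mmat_prefMatrix, RatAux.Mmat_halfIntegral,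
    RatAux.Mmat_chromatic hk hN, ?_⟩
  have hne : Set.Nonempty {α | Rationalizable (RatAux.Mmat k (2 ^ k) f) α} :=
    ⟨k * 2 ^ k, RatAux.Mmat_rationalizable⟩
  have hmem : Rationalizable (RatAux.Mmat k (2 ^ k) f)
      (rationalityNumber (RatAux.Mmat k (2 ^ k) f)) := Nat.sInf_mem hne
  have hk5 : k ≤ 5 * rationalityNumber (RatAux.Mmat k (2 ^ k) f) :=
    RatAux.key_bound hN hf _ hmem
  rw [div_le_iff₀ (by norm_num : (0:ℝ) < 5)]
  calc (k : ℝ) ≤ 5 * (rationalityNumber (RatAux.Mmat k (2 ^ k) f) : ℝ) := by exact_mod_cast hk5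
    _ = (rationalityNumber (RatAux.Mmat k (2 ^ k) f) : ℝ) * 5 := by ring
end

section
/- (Main theorem for half-integral matrices) Every half-integral preference matrix M satisfies α(M) ≤ χ(G_M), and for every positive integer k there exists a half-integral preference matrix M with χ(G_M)=k and (1/5)·χ(G_M) ≤ α(M). -/
open scoped Classical

section AuxCount

variable {C : Type}

lemma countVoters_nil (P : Voter C → Prop) : countVoters [] P = 0 := by
  simp [countVoters]

lemma countVoters_cons (v : Voter C) (V : List (Voter C)) (P : Voter C → Prop) :
    countVoters (v :: V) P = (if P v then 1 else 0) + countVoters V P := by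
  simp [countVoters]

lemma countVoters_le_length (V : List (Voter C)) (P : Voter C → Prop) :
    countVoters V P ≤ V.length := by
  induction V with
  | nil => simp [countVoters_nil]
  | cons v V ih =>
      rw [countVoters_cons, List.length_cons]
      split <;> omega

lemma countVoters_eq_length (V : List (Voter C)) (P : Voter C → Prop)
    (h : ∀ v ∈ V, P v) : countVoters V P = V.length := by
  induction V with
  | nil => simp [countVoters_nil]
  | cons v V ih =>
      rw [countVoters_cons, List.length_cons, if_pos (h v (by simp)),
        ih (fun w hw => h w (by simp [hw]))]
      omega

lemma one_le_countVoters {V : List (Voter C)} {P : Voter C → Prop} {v : Voter C}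
    (hv : v ∈ V) (hP : P v) : 1 ≤ countVoters V P := by
  induction V with
  | nil => simp at hv
  | cons w V ih =>
      rw [countVoters_cons]
      rcases List.mem_cons.mp hv with h | h
      · subst h; rw [if_pos hP]; omega
      · have := ih h; omega

end AuxCount

section AuxChain

variable {α : Type} [DecidableEq α] (r : α → α → Prop)

lemma aux_exists_rel_maximal
    (htrans : ∀ {a b c}, r a b → r b c → r a c) (hirr : ∀ a, ¬ r a a) :
    ∀ (m : ℕ) (S : Finset α), S.card = m → S.Nonempty →
      (∀ x ∈ S, ∀ y ∈ S, x ≠ y → r x y ∨ r y x) →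
      ∃ x ∈ S, ∀ y ∈ S, y ≠ x → ¬ r y x := by
  intro m
  induction m with
  | zero =>
      intro S hc hne _
      rw [Finset.card_eq_zero] at hc
      subst hc
      exact absurd hne (by simp)
  | succ m ih =>
      intro S hc hne hcomp
      obtain ⟨a, ha⟩ := hne
      by_cases hS : (S.erase a).Nonempty
      · obtain ⟨x, hx, hmax⟩ := ih (S.erase a)
          (by rw [Finset.card_erase_of_mem ha, hc]; rfl) hS
          (fun u hu v hv huv =>
            hcomp u (Finset.mem_of_mem_erase hu) v (Finset.mem_of_mem_erase hv) huv)
        have hxS : x ∈ S := Finset.mem_of_mem_erase hx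
        have hax : a ≠ x := fun h => (Finset.ne_of_mem_erase hx) h.symm
        rcases hcomp a ha x hxS hax with h1 | h2
        · refine ⟨a, ha, ?_⟩
          intro y hy _ hra
          have hyx : r y x := htrans hra h1
          by_cases hyxeq : y = x
          · subst hyxeq; exact hirr y hyx
          · have hya : y ≠ a := fun h => hirr a (h ▸ hra)
            exact hmax y (Finset.mem_erase.mpr ⟨hya, hy⟩) hyxeq hyx
        · refine ⟨x, hxS, ?_⟩
          intro y hy hyx hr
          by_cases hya : y = a
          · subst hya; exact hirr y (htrans hr h2)
          · exact hmax y (Finset.mem_erase.mpr ⟨hya, hy⟩) hyx hr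
      · have hSa : S = {a} := by
          apply Finset.eq_singleton_iff_unique_mem.mpr
          refine ⟨ha, fun y hy => ?_⟩
          by_contra hne'
          exact hS ⟨y, Finset.mem_erase.mpr ⟨hne', hy⟩⟩
        refine ⟨a, ha, ?_⟩
        intro y hy hya
        rw [hSa, Finset.mem_singleton] at hy
        exact absurd hy hya

lemma aux_exists_sorted_list
    (htrans : ∀ {a b c}, r a b → r b c → r a c) (hirr : ∀ a, ¬ r a a) :
    ∀ (m : ℕ) (S : Finset α), S.card = m →
      (∀ x ∈ S, ∀ y ∈ S, x ≠ y → r x y ∨ r y x) →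
      ∃ l : List α, l.Nodup ∧ l.toFinset = S ∧ l.Pairwise r := by
  intro m
  induction m with
  | zero =>
      intro S hc _
      rw [Finset.card_eq_zero] at hc
      exact ⟨[], by simp, by simp [hc], by simp⟩
  | succ m ih =>
      intro S hc hcomp
      have hne : S.Nonempty := Finset.card_pos.mp (by omega)
      obtain ⟨x, hxS, hmax⟩ := aux_exists_rel_maximal r htrans hirr _ S hc hne hcomp
      obtain ⟨l, hnd, htf, hpw⟩ := ih (S.erase x)
        (by rw [Finset.card_erase_of_mem hxS, hc]; rfl)
        (fun u hu v hv huv =>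
          hcomp u (Finset.mem_of_mem_erase hu) v (Finset.mem_of_mem_erase hv) huv)
      refine ⟨x :: l, ?_, ?_, ?_⟩
      · rw [List.nodup_cons]
        refine ⟨fun hx => ?_, hnd⟩
        rw [← List.mem_toFinset, htf] at hx
        exact (Finset.notMem_erase x S) hx
      · rw [List.toFinset_cons, htf, Finset.insert_erase hxS]
      · refine List.Pairwise.cons ?_ hpw
        intro y hy
        have hyS : y ∈ S.erase x := by rw [← htf]; exact List.mem_toFinset.mpr hy
        have hyS' := Finset.mem_of_mem_erase hyS
        have hyx : y ≠ x := Finset.ne_of_mem_erase hyS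
        rcases hcomp x hxS y hyS' (Ne.symm hyx) with h | h
        · exact h
        · exact absurd h (hmax y hyS' hyx)

end AuxChain
section AuxCounting

variable {β : Type} [Fintype β] [DecidableEq β]

lemma aux_card_constrained (T : Finset β) (g : β → Bool) :
    (Finset.univ.filter (fun O : β → Bool => ∀ p ∈ T, O p = g p)).card
      = 2 ^ (Fintype.card β - T.card) := by
  have e : {O : β → Bool // ∀ p ∈ T, O p = g p} ≃
      (((Finset.univ : Finset β) \ T : Finset β) → Bool) :=
    { toFun := fun O q => O.1 q.1
      invFun := fun u =>
        ⟨fun p => if hp : p ∈ T then g p else u ⟨p, by simp [hp]⟩,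
         fun p hp => by simp [hp]⟩
      left_inv := fun O => by
        apply Subtype.ext
        funext p
        by_cases hp : p ∈ T
        · simp [hp, O.2 p hp]
        · simp [hp]
      right_inv := fun u => by
        funext q
        have hq : ¬ (q.1 ∈ T) := by
          have := q.2
          simp only [Finset.mem_sdiff, Finset.mem_univ, true_and] at this
          exact this
        simp [hq] }
  have h1 : (Finset.univ.filter (fun O : β → Bool => ∀ p ∈ T, O p = g p)).card
      = Fintype.card {O : β → Bool // ∀ p ∈ T, O p = g p} :=
    (Fintype.card_subtype _).symm
  rw [h1, Fintype.card_congr e, Fintype.card_fun, Fintype.card_bool, Fintype.card_coe,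
    Finset.card_sdiff_of_subset (Finset.subset_univ T), Finset.card_univ]

lemma aux_card_constrained_mul (T : Finset β) (g : β → Bool) :
    (Finset.univ.filter (fun O : β → Bool => ∀ p ∈ T, O p = g p)).card * 2 ^ T.card
      = 2 ^ (Fintype.card β) := by
  rw [aux_card_constrained, ← pow_add,
    Nat.sub_add_cancel (by rw [← Finset.card_univ]; exact Finset.card_le_univ T)]

end AuxCounting

section AuxSwap

variable {s : ℕ}

lemma aux_two_mul_filter_lt (P : Finset (Fin s × Fin s))
    (hsymm : ∀ p ∈ P, (p.2, p.1) ∈ P) (hirr : ∀ p ∈ P, p.1 ≠ p.2) :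
    2 * (P.filter (fun p => p.1 < p.2)).card = P.card := by
  have hsplit := Finset.card_filter_add_card_filter_not
    (s := P) (p := fun p => p.1 < p.2)
  have hbij : (P.filter (fun p => p.1 < p.2)).card
      = (P.filter (fun p => ¬ p.1 < p.2)).card := by
    refine Finset.card_bij' (fun p _ => (p.2, p.1)) (fun p _ => (p.2, p.1))
      ?_ ?_ ?_ ?_
    · intro p hp
      rw [Finset.mem_filter] at hp ⊢
      exact ⟨hsymm p hp.1, by simp; omega⟩
    · intro p hp
      rw [Finset.mem_filter] at hp ⊢
      refine ⟨hsymm p hp.1, ?_⟩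
      have := hirr p hp.1
      simp only
      rcases lt_or_gt_of_ne this with h | h
      · exact absurd h hp.2
      · exact h
    · intro p _; rfl
    · intro p _; rfl
  omega

end AuxSwap

section AuxArith

lemma aux_arith (k P S2 : ℕ) (hk : 1 ≤ k)
    (h1 : 2 * P + S2 + (5 * k + 1) = (5 * k + 1) * (5 * k + 1))
    (h2 : S2 ≤ (5 * k + 1) * (k - 1)) :
    10 * (k * k) + 2 * k + 1 ≤ P := by
  obtain ⟨k', rfl⟩ : ∃ k', k = k' + 1 := ⟨k - 1, by omega⟩
  have h2' : S2 ≤ (5 * (k' + 1) + 1) * k' := by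
    have : k' + 1 - 1 = k' := by omega
    rw [this] at h2
    exact h2
  nlinarith [sq_nonneg k']

end AuxArith
section AuxOrient

def auxPart (k : ℕ) (a : Fin (k * k)) : ℕ := (a : ℕ) / k

def auxArc (k : ℕ) (O : Fin (k * k) × Fin (k * k) → Bool) (x y : Fin (k * k)) : Prop :=
  auxPart k x ≠ auxPart k y ∧
    (if (x : ℕ) < (y : ℕ) then O (x, y) = true else O (y, x) = false)

def auxAligned (k : ℕ) (O : Fin (k * k) × Fin (k * k) → Bool)
    (f : Fin (5 * k + 1) → Fin (k * k)) : Prop :=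
  ∀ i j : Fin (5 * k + 1), i < j → auxPart k (f i) ≠ auxPart k (f j) →
    auxArc k O (f i) (f j)

lemma auxPart_lt {k : ℕ} (hk : 0 < k) (a : Fin (k * k)) : auxPart k a < k := by
  have := a.isLt
  exact Nat.div_lt_iff_lt_mul hk |>.mpr (by omega)

lemma aux_eq_of_part_mod {k : ℕ} (hk : 0 < k) {x y : Fin (k * k)}
    (h1 : auxPart k x = auxPart k y) (h2 : (x : ℕ) % k = (y : ℕ) % k) : x = y := by
  apply Fin.ext
  have hx := Nat.div_add_mod (x : ℕ) k
  have hy := Nat.div_add_mod (y : ℕ) k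
  unfold auxPart at h1
  rw [h1] at hx
  omega

lemma aux_val_ne {k : ℕ} {x y : Fin (k * k)}
    (h : auxPart k x ≠ auxPart k y) : (x : ℕ) ≠ (y : ℕ) := by
  intro hv
  exact h (by unfold auxPart; rw [hv])

/-- Exactly one direction of an arc holds across parts. -/
lemma auxArc_iff_not {k : ℕ} (O : Fin (k * k) × Fin (k * k) → Bool) {x y : Fin (k * k)}
    (h : auxPart k x ≠ auxPart k y) : auxArc k O x y ↔ ¬ auxArc k O y x := by
  have hne := aux_val_ne h
  unfold auxArc
  rcases Nat.lt_or_ge (x : ℕ) (y : ℕ) with hlt | hge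
  · have hnlt : ¬ ((y : ℕ) < (x : ℕ)) := by omega
    rw [if_pos hlt, if_neg hnlt]
    simp [h, Ne.symm h]
  · have hlt : (y : ℕ) < (x : ℕ) := by omega
    have hnlt : ¬ ((x : ℕ) < (y : ℕ)) := by omega
    rw [if_neg hnlt, if_pos hlt]
    simp [h, Ne.symm h]

lemma aux_diag_card (s : ℕ) :
    (Finset.univ.filter (fun p : Fin s × Fin s => ¬ p.1 ≠ p.2)).card = s := by
  have h : (Finset.univ.filter (fun p : Fin s × Fin s => ¬ p.1 ≠ p.2))
      = Finset.univ.image (fun i : Fin s => (i, i)) := by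
    ext p
    simp only [Finset.mem_filter, Finset.mem_univ, true_and, Finset.mem_image, not_not]
    constructor
    · intro h; exact ⟨p.1, Prod.ext rfl h⟩
    · rintro ⟨i, rfl⟩; rfl
  rw [h, Finset.card_image_of_injective _ (fun a b hab => (Prod.ext_iff.mp hab).1),
    Finset.card_univ, Fintype.card_fin]

/-- The off-diagonal pairs. -/
def auxOD (s : ℕ) : Finset (Fin s × Fin s) :=
  Finset.univ.filter (fun p => p.1 ≠ p.2)

/-- Cross-part increasing pairs for an injection `f`. -/
def auxP1 (k : ℕ) (f : Fin (5 * k + 1) → Fin (k * k)) :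
    Finset (Fin (5 * k + 1) × Fin (5 * k + 1)) :=
  Finset.univ.filter (fun p => p.1 < p.2 ∧ auxPart k (f p.1) ≠ auxPart k (f p.2))

/-- Same-part off-diagonal pairs for `f`. -/
def auxSAME (k : ℕ) (f : Fin (5 * k + 1) → Fin (k * k)) :
    Finset (Fin (5 * k + 1) × Fin (5 * k + 1)) :=
  (auxOD (5 * k + 1)).filter (fun p => auxPart k (f p.1) = auxPart k (f p.2))

lemma auxOD_card (s : ℕ) : (auxOD s).card + s = s * s := by
  have hsplit := Finset.card_filter_add_card_filter_not
    (s := (Finset.univ : Finset (Fin s × Fin s))) (p := fun p => p.1 ≠ p.2)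
  have hdiag := aux_diag_card s
  have hcu : (Finset.univ : Finset (Fin s × Fin s)).card = s * s := by
    simp [Finset.card_univ]
  unfold auxOD
  omega

lemma auxOD_swap (s : ℕ) :
    2 * (((auxOD s).filter (fun p => p.1 < p.2)).card) = (auxOD s).card := by
  apply aux_two_mul_filter_lt
  · intro p hp
    unfold auxOD at hp ⊢
    rw [Finset.mem_filter] at hp ⊢
    exact ⟨Finset.mem_univ _, (Ne.symm hp.2 : p.2 ≠ p.1)⟩
  · intro p hp
    unfold auxOD at hp
    rw [Finset.mem_filter] at hp
    exact hp.2

lemma auxSAME_swap (k : ℕ) (f : Fin (5 * k + 1) → Fin (k * k)) :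
    2 * (((auxSAME k f).filter (fun p => p.1 < p.2)).card) = (auxSAME k f).card := by
  apply aux_two_mul_filter_lt
  · intro p hp
    unfold auxSAME auxOD at hp ⊢
    rw [Finset.mem_filter, Finset.mem_filter] at hp ⊢
    exact ⟨⟨Finset.mem_univ _, Ne.symm hp.1.2⟩, hp.2.symm⟩
  · intro p hp
    unfold auxSAME auxOD at hp
    rw [Finset.mem_filter, Finset.mem_filter] at hp
    exact hp.1.2

lemma auxSAME_card (k : ℕ) (hk : 0 < k) (f : Fin (5 * k + 1) → Fin (k * k))
    (hf : Function.Injective f) :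
    (auxSAME k f).card ≤ (5 * k + 1) * (k - 1) := by
  classical
  have hfib : ∀ j : Fin (5 * k + 1),
      ((auxSAME k f).filter (fun p => p.2 = j)).card ≤ k - 1 := by
    intro j
    have hDjBound : (Finset.univ.filter (fun i : Fin (5 * k + 1) =>
        i ≠ j ∧ auxPart k (f i) = auxPart k (f j))).card + 1 ≤ k := by
      have hins : (insert j (Finset.univ.filter (fun i : Fin (5 * k + 1) =>
          i ≠ j ∧ auxPart k (f i) = auxPart k (f j)))).card ≤ (Finset.range k).card := by
        apply Finset.card_le_card_of_injOn (fun i => (f i : ℕ) % k)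
        · intro i _
          rw [Finset.mem_coe, Finset.mem_range]
          exact Nat.mod_lt _ hk
        · intro i1 h1 i2 h2 hmod
          have h1' := Finset.mem_coe.mp h1
          have h2' := Finset.mem_coe.mp h2
          have hpart : ∀ i ∈ insert j (Finset.univ.filter (fun i : Fin (5 * k + 1) =>
              i ≠ j ∧ auxPart k (f i) = auxPart k (f j))),
              auxPart k (f i) = auxPart k (f j) := by
            intro i hi
            rcases Finset.mem_insert.mp hi with rfl | hi
            · rfl
            · exact (Finset.mem_filter.mp hi).2.2
          exact hf (aux_eq_of_part_mod hk
            (x := f i1) (y := f i2)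
            (by rw [hpart i1 h1', hpart i2 h2']) hmod)
      rw [Finset.card_insert_of_notMem (by
          rw [Finset.mem_filter]; rintro ⟨-, h, -⟩; exact h rfl),
        Finset.card_range] at hins
      omega
    have hinj : ((auxSAME k f).filter (fun p => p.2 = j)).card ≤
        (Finset.univ.filter (fun i : Fin (5 * k + 1) =>
          i ≠ j ∧ auxPart k (f i) = auxPart k (f j))).card := by
      apply Finset.card_le_card_of_injOn (fun p => p.1)
      · intro p hp
        have hp' := Finset.mem_coe.mp hp
        unfold auxSAME auxOD at hp'
        rw [Finset.mem_filter, Finset.mem_filter, Finset.mem_filter] at hp'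
        obtain ⟨⟨⟨-, hne⟩, hsame⟩, h2⟩ := hp'
        rw [h2] at hne hsame
        rw [Finset.mem_coe, Finset.mem_filter]
        exact ⟨Finset.mem_univ _, hne, hsame⟩
      · intro p hp p' hp' h1
        have hpm := Finset.mem_coe.mp hp
        have hpm' := Finset.mem_coe.mp hp'
        rw [Finset.mem_filter] at hpm hpm'
        exact Prod.ext h1 (hpm.2.trans hpm'.2.symm)
    omega
  have hmap : (auxSAME k f).card
      = ∑ j : Fin (5 * k + 1), ((auxSAME k f).filter (fun p => p.2 = j)).card := by
    apply Finset.card_eq_sum_card_fiberwise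
    intro p _
    exact Finset.mem_univ _
  rw [hmap]
  calc ∑ j : Fin (5 * k + 1), ((auxSAME k f).filter (fun p => p.2 = j)).card
      ≤ ∑ _j : Fin (5 * k + 1), (k - 1) := Finset.sum_le_sum (fun j _ => hfib j)
    _ = (5 * k + 1) * (k - 1) := by
        rw [Finset.sum_const, Finset.card_univ, Fintype.card_fin, smul_eq_mul]

lemma aux_P1_large (k : ℕ) (hk : 0 < k) (f : Fin (5 * k + 1) → Fin (k * k))
    (hf : Function.Injective f) :
    10 * (k * k) + 2 * k + 1 ≤ (auxP1 k f).card := by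
  classical
  have hODswap := auxOD_swap (5 * k + 1)
  have hODcard := auxOD_card (5 * k + 1)
  have hSAMEswap := auxSAME_swap k f
  have hSAMEcard := auxSAME_card k hk f hf
  have hLTsplit :
      (((auxOD (5 * k + 1)).filter (fun p => p.1 < p.2)).filter
          (fun p => auxPart k (f p.1) ≠ auxPart k (f p.2))).card +
      (((auxOD (5 * k + 1)).filter (fun p => p.1 < p.2)).filter
          (fun p => ¬ auxPart k (f p.1) ≠ auxPart k (f p.2))).card
        = ((auxOD (5 * k + 1)).filter (fun p => p.1 < p.2)).card :=
    Finset.card_filter_add_card_filter_not _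
  have hP1eq : auxP1 k f = ((auxOD (5 * k + 1)).filter (fun p => p.1 < p.2)).filter
      (fun p => auxPart k (f p.1) ≠ auxPart k (f p.2)) := by
    unfold auxP1 auxOD
    ext p
    simp only [Finset.mem_filter, Finset.mem_univ, true_and]
    constructor
    · rintro ⟨h1, h2⟩; exact ⟨⟨ne_of_lt h1, h1⟩, h2⟩
    · rintro ⟨⟨-, h1⟩, h2⟩; exact ⟨h1, h2⟩
  have hXeq : ((auxOD (5 * k + 1)).filter (fun p => p.1 < p.2)).filter
      (fun p => ¬ auxPart k (f p.1) ≠ auxPart k (f p.2))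
      = (auxSAME k f).filter (fun p => p.1 < p.2) := by
    unfold auxSAME auxOD
    ext p
    simp only [Finset.mem_filter, Finset.mem_univ, true_and, not_not]
    tauto
  rw [hXeq, ← hP1eq] at hLTsplit
  have e1 : 2 * (auxP1 k f).card + (auxSAME k f).card + (5 * k + 1)
      = (5 * k + 1) * (5 * k + 1) := by omega
  exact aux_arith k (auxP1 k f).card (auxSAME k f).card hk e1 hSAMEcard

end AuxOrient
section AuxOrient2

lemma aux_key (k : ℕ) (hk : 0 < k) (f : Fin (5 * k + 1) → Fin (k * k))
    (hf : Function.Injective f) :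
    (Finset.univ.filter
      (fun O : Fin (k * k) × Fin (k * k) → Bool => auxAligned k O f)).card
        * 2 ^ (10 * (k * k) + 2 * k + 1)
      ≤ 2 ^ (Fintype.card (Fin (k * k) × Fin (k * k))) := by
  classical
  set point : Fin (5 * k + 1) × Fin (5 * k + 1) → Fin (k * k) × Fin (k * k) :=
    fun p => if ((f p.1 : ℕ)) < ((f p.2 : ℕ)) then (f p.1, f p.2) else (f p.2, f p.1)
    with hpoint
  set T : Finset (Fin (k * k) × Fin (k * k)) := (auxP1 k f).image point with hT
  set g : Fin (k * k) × Fin (k * k) → Bool :=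
    fun q => if (∃ i j : Fin (5 * k + 1), i < j ∧ f i = q.1 ∧ f j = q.2) then true else false
    with hg
  have hsub : (Finset.univ.filter
        (fun O : Fin (k * k) × Fin (k * k) → Bool => auxAligned k O f)) ⊆
      (Finset.univ.filter
        (fun O : Fin (k * k) × Fin (k * k) → Bool => ∀ q ∈ T, O q = g q)) := by
    intro O hO
    rw [Finset.mem_filter] at hO ⊢
    refine ⟨Finset.mem_univ _, ?_⟩
    intro q hq
    rw [hT, Finset.mem_image] at hq
    obtain ⟨p, hp, rfl⟩ := hq
    unfold auxP1 at hp
    rw [Finset.mem_filter] at hp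
    obtain ⟨-, hlt, hcross⟩ := hp
    have harc := hO.2 p.1 p.2 hlt hcross
    rcases harc with ⟨-, hval⟩
    by_cases hvlt : ((f p.1 : ℕ)) < ((f p.2 : ℕ))
    · rw [if_pos hvlt] at hval
      rw [hpoint]
      simp only [if_pos hvlt]
      rw [hval, hg]
      have hex : (∃ i j : Fin (5 * k + 1), i < j ∧ f i = f p.1 ∧ f j = f p.2) :=
        ⟨p.1, p.2, hlt, rfl, rfl⟩
      simp only [if_pos hex]
    · rw [if_neg hvlt] at hval
      rw [hpoint]
      simp only [if_neg hvlt]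
      rw [hval, hg]
      have hex : ¬ (∃ i j : Fin (5 * k + 1), i < j ∧ f i = f p.2 ∧ f j = f p.1) := by
        rintro ⟨i, j, hij, hi, hj⟩
        have hi' : i = p.2 := hf hi
        have hj' : j = p.1 := hf hj
        subst hi'; subst hj'
        exact absurd hlt (by omega)
      simp only [if_neg hex]
  have hcardT : T.card = (auxP1 k f).card := by
    rw [hT]
    apply Finset.card_image_of_injOn
    intro p hp p' hp' hpp
    have hpm := Finset.mem_coe.mp hp
    have hpm' := Finset.mem_coe.mp hp'
    unfold auxP1 at hpm hpm'
    rw [Finset.mem_filter] at hpm hpm'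
    obtain ⟨-, hlt, hcr⟩ := hpm
    obtain ⟨-, hlt', hcr'⟩ := hpm'
    rw [hpoint] at hpp
    simp only at hpp
    by_cases h1 : ((f p.1 : ℕ)) < ((f p.2 : ℕ)) <;>
      by_cases h2 : ((f p'.1 : ℕ)) < ((f p'.2 : ℕ))
    · rw [if_pos h1, if_pos h2, Prod.mk.injEq] at hpp
      exact Prod.ext (hf hpp.1) (hf hpp.2)
    · rw [if_pos h1, if_neg h2, Prod.mk.injEq] at hpp
      have e1 := hf hpp.1; have e2 := hf hpp.2
      exfalso
      rw [e1] at hlt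
      rw [← e2] at hlt'
      exact absurd hlt (by omega)
    · rw [if_neg h1, if_pos h2, Prod.mk.injEq] at hpp
      have e1 := hf hpp.1; have e2 := hf hpp.2
      exfalso
      rw [← e1] at hlt'
      rw [e2] at hlt
      exact absurd hlt (by omega)
    · rw [if_neg h1, if_neg h2, Prod.mk.injEq] at hpp
      exact Prod.ext (hf hpp.2) (hf hpp.1)
  have hBle : 10 * (k * k) + 2 * k + 1 ≤ T.card := by
    rw [hcardT]
    exact aux_P1_large k hk f hf
  calc (Finset.univ.filter
        (fun O : Fin (k * k) × Fin (k * k) → Bool => auxAligned k O f)).card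
          * 2 ^ (10 * (k * k) + 2 * k + 1)
      ≤ (Finset.univ.filter
        (fun O : Fin (k * k) × Fin (k * k) → Bool => ∀ q ∈ T, O q = g q)).card
          * 2 ^ (10 * (k * k) + 2 * k + 1) :=
        Nat.mul_le_mul_right _ (Finset.card_le_card hsub)
    _ ≤ (Finset.univ.filter
        (fun O : Fin (k * k) × Fin (k * k) → Bool => ∀ q ∈ T, O q = g q)).card
          * 2 ^ T.card :=
        Nat.mul_le_mul_left _ (Nat.pow_le_pow_right (by omega) hBle)
    _ = 2 ^ (Fintype.card (Fin (k * k) × Fin (k * k))) := aux_card_constrained_mul T g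

lemma aux_exists_good (k : ℕ) (hk : 0 < k) :
    ∃ O : Fin (k * k) × Fin (k * k) → Bool,
      ∀ f : Fin (5 * k + 1) → Fin (k * k), Function.Injective f → ¬ auxAligned k O f := by
  classical
  by_contra hcon
  push_neg at hcon
  have hBadCard : (Finset.univ : Finset (Fin (k * k) × Fin (k * k) → Bool)).card
      * 2 ^ (10 * (k * k) + 2 * k + 1)
      ≤ (k * k) ^ (5 * k + 1) * 2 ^ (Fintype.card (Fin (k * k) × Fin (k * k))) := by
    have hBadSub : (Finset.univ : Finset (Fin (k * k) × Fin (k * k) → Bool)) ⊆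
        (Finset.univ.filter
          (fun f : Fin (5 * k + 1) → Fin (k * k) => Function.Injective f)).biUnion
          (fun f => Finset.univ.filter
            (fun O : Fin (k * k) × Fin (k * k) → Bool => auxAligned k O f)) := by
      intro O _
      obtain ⟨f, hfinj, hfal⟩ := hcon O
      rw [Finset.mem_biUnion]
      exact ⟨f, Finset.mem_filter.mpr ⟨Finset.mem_univ _, hfinj⟩,
        Finset.mem_filter.mpr ⟨Finset.mem_univ _, hfal⟩⟩
    calc (Finset.univ : Finset (Fin (k * k) × Fin (k * k) → Bool)).card
          * 2 ^ (10 * (k * k) + 2 * k + 1)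
        ≤ ((Finset.univ.filter
            (fun f : Fin (5 * k + 1) → Fin (k * k) => Function.Injective f)).biUnion
            (fun f => Finset.univ.filter
              (fun O : Fin (k * k) × Fin (k * k) → Bool => auxAligned k O f))).card
            * 2 ^ (10 * (k * k) + 2 * k + 1) :=
          Nat.mul_le_mul_right _ (Finset.card_le_card hBadSub)
      _ ≤ (∑ f ∈ Finset.univ.filter
            (fun f : Fin (5 * k + 1) → Fin (k * k) => Function.Injective f),
            (Finset.univ.filter
              (fun O : Fin (k * k) × Fin (k * k) → Bool => auxAligned k O f)).card)
            * 2 ^ (10 * (k * k) + 2 * k + 1) :=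
          Nat.mul_le_mul_right _ Finset.card_biUnion_le
      _ = ∑ f ∈ Finset.univ.filter
            (fun f : Fin (5 * k + 1) → Fin (k * k) => Function.Injective f),
            ((Finset.univ.filter
              (fun O : Fin (k * k) × Fin (k * k) → Bool => auxAligned k O f)).card
              * 2 ^ (10 * (k * k) + 2 * k + 1)) := Finset.sum_mul _ _ _
      _ ≤ ∑ _f ∈ Finset.univ.filter
            (fun f : Fin (5 * k + 1) → Fin (k * k) => Function.Injective f),
            2 ^ (Fintype.card (Fin (k * k) × Fin (k * k))) :=
          Finset.sum_le_sum (fun f hfm => aux_key k hk f (Finset.mem_filter.mp hfm).2)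
      _ = (Finset.univ.filter
            (fun f : Fin (5 * k + 1) → Fin (k * k) => Function.Injective f)).card
            * 2 ^ (Fintype.card (Fin (k * k) × Fin (k * k))) := by
          rw [Finset.sum_const, smul_eq_mul]
      _ ≤ (k * k) ^ (5 * k + 1) * 2 ^ (Fintype.card (Fin (k * k) × Fin (k * k))) := by
          apply Nat.mul_le_mul_right
          calc (Finset.univ.filter
              (fun f : Fin (5 * k + 1) → Fin (k * k) => Function.Injective f)).card
              ≤ (Finset.univ : Finset (Fin (5 * k + 1) → Fin (k * k))).card :=
                Finset.card_le_univ _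
            _ = (k * k) ^ (5 * k + 1) := by
                rw [Finset.card_univ, Fintype.card_fun, Fintype.card_fin, Fintype.card_fin]
  have hpow : (k * k) ^ (5 * k + 1) < 2 ^ (10 * (k * k) + 2 * k + 1) := by
    have h1 : k * k ≤ 2 ^ (2 * k) := by
      have h2 := Nat.lt_two_pow_self (n := k)
      calc k * k ≤ 2 ^ k * 2 ^ k := Nat.mul_le_mul (le_of_lt h2) (le_of_lt h2)
        _ = 2 ^ (2 * k) := by rw [← pow_add]; ring_nf
    calc (k * k) ^ (5 * k + 1) ≤ (2 ^ (2 * k)) ^ (5 * k + 1) :=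
        Nat.pow_le_pow_left h1 _
      _ = 2 ^ (2 * k * (5 * k + 1)) := by rw [← pow_mul]
      _ < 2 ^ (10 * (k * k) + 2 * k + 1) := by
          apply Nat.pow_lt_pow_right (by omega)
          nlinarith
  have hcu : (Finset.univ : Finset (Fin (k * k) × Fin (k * k) → Bool)).card
      = 2 ^ (Fintype.card (Fin (k * k) × Fin (k * k))) := by
    rw [Finset.card_univ, Fintype.card_fun, Fintype.card_bool]
  rw [hcu] at hBadCard
  have h2N : 0 < (2:ℕ) ^ (Fintype.card (Fin (k * k) × Fin (k * k))) :=
    Nat.pow_pos (by omega)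
  nlinarith [hBadCard, hpow, h2N]

end AuxOrient2
section AuxMatrix

/-- The half-integral preference matrix of an orientation. -/
noncomputable def auxM (k : ℕ) (O : Fin (k * k) × Fin (k * k) → Bool) :
    Fin (k * k) → Fin (k * k) → ℝ := fun x y =>
  if x = y then 0 else if auxPart k x = auxPart k y then 1 / 2
    else if auxArc k O x y then 1 else 0

lemma auxM_same {k : ℕ} (O : Fin (k * k) × Fin (k * k) → Bool) {x y : Fin (k * k)}
    (hne : x ≠ y) (hp : auxPart k x = auxPart k y) : auxM k O x y = 1 / 2 := by
  unfold auxM; rw [if_neg hne, if_pos hp]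

lemma auxM_arc {k : ℕ} (O : Fin (k * k) × Fin (k * k) → Bool) {x y : Fin (k * k)}
    (hp : auxPart k x ≠ auxPart k y) (h : auxArc k O x y) : auxM k O x y = 1 := by
  have hne : x ≠ y := fun hxy => hp (by rw [hxy])
  unfold auxM; rw [if_neg hne, if_neg hp, if_pos h]

lemma auxM_noarc {k : ℕ} (O : Fin (k * k) × Fin (k * k) → Bool) {x y : Fin (k * k)}
    (hp : auxPart k x ≠ auxPart k y) (h : ¬ auxArc k O x y) : auxM k O x y = 0 := by
  have hne : x ≠ y := fun hxy => hp (by rw [hxy])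
  unfold auxM; rw [if_neg hne, if_neg hp, if_neg h]

lemma auxM_pref (k : ℕ) (O : Fin (k * k) × Fin (k * k) → Bool) :
    IsPrefMatrix (auxM k O) := by
  refine ⟨fun i => by unfold auxM; rw [if_pos rfl], fun i j => ?_, fun i j hij => ?_⟩
  · unfold auxM
    split
    · norm_num
    · split
      · norm_num
      · split <;> norm_num
  · by_cases hp : auxPart k i = auxPart k j
    · rw [auxM_same O hij hp, auxM_same O (Ne.symm hij) hp.symm]
      norm_num
    · rcases (auxArc_iff_not O hp) with hiff
      by_cases harc : auxArc k O i j
      · rw [auxM_arc O hp harc, auxM_noarc O (Ne.symm hp) (hiff.mp harc)]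
        norm_num
      · have harc' : auxArc k O j i := by
          by_contra hno
          exact harc (((auxArc_iff_not O hp)).mpr hno)
        rw [auxM_noarc O hp harc, auxM_arc O (Ne.symm hp) harc']
        norm_num

lemma auxM_halfIntegral (k : ℕ) (O : Fin (k * k) × Fin (k * k) → Bool) :
    HalfIntegral (auxM k O) := by
  intro i j
  unfold auxM
  split
  · left; rfl
  · split
    · right; left; rfl
    · split
      · right; right; rfl
      · left; rfl

lemma auxM_adj (k : ℕ) (O : Fin (k * k) × Fin (k * k) → Bool) (x y : Fin (k * k)) :
    (unanimityGraph (auxM k O)).Adj x y ↔ auxPart k x ≠ auxPart k y := by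
  constructor
  · rintro ⟨hne, h1 | h1⟩
    · intro hp
      rw [auxM_same O hne hp] at h1
      norm_num at h1
    · intro hp
      rw [auxM_same O (Ne.symm hne) hp.symm] at h1
      norm_num at h1
  · intro hp
    have hne : x ≠ y := fun hxy => hp (by rw [hxy])
    refine ⟨hne, ?_⟩
    by_cases harc : auxArc k O x y
    · exact Or.inl (auxM_arc O hp harc)
    · have harc' : auxArc k O y x := ((auxArc_iff_not O (Ne.symm hp))).mpr harc
      exact Or.inr (auxM_arc O (Ne.symm hp) harc')

lemma auxM_chrom (k : ℕ) (hk : 0 < k) (O : Fin (k * k) × Fin (k * k) → Bool) :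
    (unanimityGraph (auxM k O)).chromaticNumber = (k : ℕ∞) := by
  have hcol : (unanimityGraph (auxM k O)).Colorable k := by
    refine ⟨SimpleGraph.Coloring.mk (fun x => ⟨auxPart k x, auxPart_lt hk x⟩) ?_⟩
    intro x y hadj
    have hp := (auxM_adj k O x y).mp hadj
    intro hc
    exact hp (congrArg Fin.val hc)
  have hle := hcol.chromaticNumber_le
  have hnetop : (unanimityGraph (auxM k O)).chromaticNumber ≠ ⊤ :=
    ne_top_of_le_ne_top (WithTop.coe_ne_top) hle
  have hcol2 := (unanimityGraph (auxM k O)).colorable_chromaticNumber_of_fintype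
  -- lower bound : any coloring uses at least k colors
  have hlow : ∀ m : ℕ, (unanimityGraph (auxM k O)).Colorable m → k ≤ m := by
    intro m hm
    obtain ⟨C0⟩ := hm
    have hinj : Function.Injective
        (fun i : Fin k => C0 ⟨(i : ℕ) * k, by have := i.isLt; nlinarith⟩) := by
      intro i j hij
      by_contra hne
      have hpart : ∀ i : Fin k,
          auxPart k (⟨(i : ℕ) * k, by have := i.isLt; nlinarith⟩ : Fin (k * k)) = (i : ℕ) := by
        intro i
        unfold auxPart
        exact Nat.mul_div_cancel (i : ℕ) hk
      have hadj : (unanimityGraph (auxM k O)).Adj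
          ⟨(i : ℕ) * k, by have := i.isLt; nlinarith⟩
          ⟨(j : ℕ) * k, by have := j.isLt; nlinarith⟩ := by
        rw [auxM_adj]
        rw [hpart i, hpart j]
        exact fun h => hne (Fin.ext h)
      exact C0.valid hadj hij
    have := Fintype.card_le_of_injective _ hinj
    simpa using this
  have hkletoNat : k ≤ (unanimityGraph (auxM k O)).chromaticNumber.toNat := hlow _ hcol2
  have heq : ((unanimityGraph (auxM k O)).chromaticNumber.toNat : ℕ∞)
      = (unanimityGraph (auxM k O)).chromaticNumber := ENat.coe_toNat hnetop
  apply le_antisymm hle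
  rw [← heq]
  exact_mod_cast hkletoNat

/-- The completely indifferent voter shows rationalizability. -/
lemma aux_rationalizable (k : ℕ) (hk : 0 < k) (O : Fin (k * k) × Fin (k * k) → Bool) :
    Rationalizable (auxM k O) (k * k) := by
  classical
  have hpref := auxM_pref k O
  refine ⟨[⟨fun _ _ => False, fun i h => h, fun h _ => h.elim⟩], ⟨by simp, ?_⟩, ?_⟩
  · intro i j hij
    constructor
    · have h0 : countVoters [(⟨fun _ _ => False, fun i h => h, fun h _ => h.elim⟩ : Voter (Fin (k*k)))]
          (fun v => v.strong i j) = 0 := by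
        rw [countVoters_cons, countVoters_nil, if_neg]
        intro h
        exact h
      rw [h0]
      simp only [Nat.cast_zero, List.length_cons, List.length_nil]
      norm_num
      exact hpref.2.1 i j
    · have h1 : countVoters [(⟨fun _ _ => False, fun i h => h, fun h _ => h.elim⟩ : Voter (Fin (k*k)))]
          (fun v => v.weak i j) = 1 := by
        rw [countVoters_cons, countVoters_nil, if_pos]
        exact Or.inr ⟨fun h => h, fun h => h⟩
      rw [h1]
      simp only [Nat.cast_one, List.length_cons, List.length_nil]
      norm_num
      have hsum := hpref.2.2 i j hij
      have hge := hpref.2.1 j i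
      linarith
  · intro v hv
    rw [List.mem_singleton] at hv
    subst hv
    intro A _
    calc A.card ≤ (Finset.univ : Finset (Fin (k * k))).card := Finset.card_le_univ A
      _ = k * k := by rw [Finset.card_univ, Fintype.card_fin]

end AuxMatrix
section AuxLower

lemma aux_no_reversal {k : ℕ} {O : Fin (k * k) × Fin (k * k) → Bool}
    {V : List (Voter (Fin (k * k)))}
    (hcons : Consistent (auxM k O) V) {v : Voter (Fin (k * k))} (hv : v ∈ V)
    {x y : Fin (k * k)} (harc : auxArc k O x y) : ¬ v.rel y x := by
  intro hrel
  have hp : auxPart k x ≠ auxPart k y := harc.1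
  have hyx : y ≠ x := fun h => hp (by rw [h])
  have h0 : auxM k O y x = 0 :=
    auxM_noarc O (Ne.symm hp) ((auxArc_iff_not O hp).mp harc)
  obtain ⟨hne, hcons2⟩ := hcons
  have hc := (hcons2 y x hyx).1
  rw [h0] at hc
  have hlenpos : 0 < (V.length : ℝ) := by
    have hl0 : V.length ≠ 0 := fun h => hne (List.length_eq_zero_iff.mp h)
    have : 0 < V.length := Nat.pos_of_ne_zero hl0
    exact_mod_cast this
  have hcount : 1 ≤ countVoters V (fun w => w.strong y x) :=
    one_le_countVoters hv hrel
  have hcount' : (1 : ℝ) ≤ (countVoters V (fun w => w.strong y x) : ℝ) := by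
    exact_mod_cast hcount
  rw [div_le_iff₀ hlenpos] at hc
  nlinarith

lemma aux_chain_bound {k : ℕ} (hk : 0 < k) {O : Fin (k * k) × Fin (k * k) → Bool}
    (hO : ∀ f : Fin (5 * k + 1) → Fin (k * k), Function.Injective f → ¬ auxAligned k O f)
    {V : List (Voter (Fin (k * k)))} (hcons : Consistent (auxM k O) V)
    {v : Voter (Fin (k * k))} (hv : v ∈ V)
    (S : Finset (Fin (k * k)))
    (hcomp : ∀ x ∈ S, ∀ y ∈ S, x ≠ y → v.rel x y ∨ v.rel y x) :
    S.card ≤ 5 * k := by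
  by_contra hgt
  push_neg at hgt
  obtain ⟨S', hsub, hcard⟩ := Finset.exists_subset_card_eq (show 5 * k + 1 ≤ S.card by omega)
  obtain ⟨l, hnd, htf, hpw⟩ := aux_exists_sorted_list v.rel
    (fun {a b c} hab hbc => v.trans hab hbc) v.irrefl S'.card S' rfl
    (fun x hx y hy hxy => hcomp x (hsub hx) y (hsub hy) hxy)
  have hlen : l.length = 5 * k + 1 := by
    rw [← List.toFinset_card_of_nodup hnd, htf, hcard]
  have hinj : Function.Injective (fun i : Fin (5 * k + 1) => l.get (Fin.cast hlen.symm i)) := by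
    intro i j hij
    have h2 := List.nodup_iff_injective_get.mp hnd hij
    have hval := congrArg Fin.val h2
    exact Fin.ext hval
  have hal : auxAligned k O (fun i : Fin (5 * k + 1) => l.get (Fin.cast hlen.symm i)) := by
    intro i j hij hcross
    have hltc : Fin.cast hlen.symm i < Fin.cast hlen.symm j := by
      rw [Fin.lt_def]
      simp only [Fin.coe_cast]
      exact Fin.lt_def.mp hij
    have hrel : v.rel (l.get (Fin.cast hlen.symm i)) (l.get (Fin.cast hlen.symm j)) :=
      List.pairwise_iff_get.mp hpw _ _ hltc
    by_cases harc : auxArc k O (l.get (Fin.cast hlen.symm i)) (l.get (Fin.cast hlen.symm j))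
    · exact harc
    · have harc' := (auxArc_iff_not O (Ne.symm hcross)).mpr harc
      exact absurd hrel (aux_no_reversal hcons hv harc')
  exact hO _ hinj hal

/-- The predicate: `S` is a chain with top element `x`. -/
def auxQ {γ : Type} (v : Voter γ) (x : γ) (S : Finset γ) : Prop :=
  x ∈ S ∧ (∀ a ∈ S, ∀ b ∈ S, a ≠ b → v.rel a b ∨ v.rel b a) ∧
    (∀ y ∈ S, y = x ∨ v.rel x y)

/-- Height of `x`: the largest chain with top `x`. -/
noncomputable def auxH {γ : Type} [Fintype γ] (v : Voter γ) (x : γ) : ℕ :=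
  ((Finset.univ : Finset γ).powerset.filter (auxQ v x)).sup Finset.card

lemma auxQ_singleton {γ : Type} [Fintype γ] (v : Voter γ) (x : γ) :
    ({x} : Finset γ) ∈ (Finset.univ : Finset γ).powerset.filter (auxQ v x) := by
  rw [Finset.mem_filter]
  refine ⟨Finset.mem_powerset.mpr (Finset.subset_univ _), Finset.mem_singleton_self x, ?_, ?_⟩
  · intro a ha b hb hab
    rw [Finset.mem_singleton] at ha hb
    exact absurd (ha.trans hb.symm) hab
  · intro y hy
    rw [Finset.mem_singleton] at hy
    exact Or.inl hy

lemma auxH_pos {γ : Type} [Fintype γ] (v : Voter γ) (x : γ) : 1 ≤ auxH v x := by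
  have := Finset.le_sup (f := Finset.card) (auxQ_singleton v x)
  rw [Finset.card_singleton] at this
  exact this

lemma auxH_le {γ : Type} [Fintype γ] (v : Voter γ) (A : ℕ)
    (hchain : ∀ S : Finset γ, (∀ a ∈ S, ∀ b ∈ S, a ≠ b → v.rel a b ∨ v.rel b a) → S.card ≤ A)
    (x : γ) : auxH v x ≤ A := by
  apply Finset.sup_le
  intro S hS
  rw [Finset.mem_filter] at hS
  exact hchain S hS.2.2.1

lemma auxH_mono {γ : Type} [Fintype γ] (v : Voter γ) {x z : γ} (hzx : v.rel z x) :
    auxH v x + 1 ≤ auxH v z := by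
  obtain ⟨S0, hS0, hsup⟩ := Finset.exists_mem_eq_sup
    ((Finset.univ : Finset γ).powerset.filter (auxQ v x)) ⟨{x}, auxQ_singleton v x⟩
    Finset.card
  rw [Finset.mem_filter] at hS0
  obtain ⟨-, hxS0, hcomp0, htop0⟩ := hS0
  have hznot : z ∉ S0 := by
    intro hz
    rcases htop0 z hz with rfl | hxz
    · exact v.irrefl z hzx
    · exact v.irrefl z (v.trans hzx hxz)
  have hins : (insert z S0) ∈
      (Finset.univ : Finset γ).powerset.filter (auxQ v z) := by
    rw [Finset.mem_filter]
    refine ⟨Finset.mem_powerset.mpr (Finset.subset_univ _), Finset.mem_insert_self _ _,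
      ?_, ?_⟩
    · intro a ha b hb hab
      rcases Finset.mem_insert.mp ha with rfl | ha' <;>
        rcases Finset.mem_insert.mp hb with rfl | hb'
      · exact absurd rfl hab
      · rcases htop0 b hb' with rfl | hxb
        · exact Or.inl hzx
        · exact Or.inl (v.trans hzx hxb)
      · rcases htop0 a ha' with rfl | hxa
        · exact Or.inr hzx
        · exact Or.inr (v.trans hzx hxa)
      · exact hcomp0 a ha' b hb' hab
    · intro y hy
      rcases Finset.mem_insert.mp hy with rfl | hy'
      · exact Or.inl rfl
      · rcases htop0 y hy' with rfl | hxy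
        · exact Or.inr hzx
        · exact Or.inr (v.trans hzx hxy)
  have hle := Finset.le_sup (f := Finset.card) hins
  rw [Finset.card_insert_of_notMem hznot] at hle
  unfold auxH
  rw [hsup]
  exact hle

lemma aux_antichain_bound {k : ℕ} (hk : 0 < k) {O : Fin (k * k) × Fin (k * k) → Bool}
    (hO : ∀ f : Fin (5 * k + 1) → Fin (k * k), Function.Injective f → ¬ auxAligned k O f)
    {V : List (Voter (Fin (k * k)))} (hcons : Consistent (auxM k O) V)
    {v : Voter (Fin (k * k))} (hv : v ∈ V) {α : ℕ} (hrat : v.Rational α) :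
    k ≤ 5 * α := by
  classical
  have hle5k : ∀ x, auxH v x ≤ 5 * k :=
    auxH_le v (5 * k) (fun S hcomp => aux_chain_bound hk hO hcons hv S hcomp)
  have hlevel : ∀ x y : Fin (k * k), x ≠ y → auxH v x = auxH v y →
      ¬ v.rel x y ∧ ¬ v.rel y x := by
    intro x y hxy heq
    constructor
    · intro hr
      have := auxH_mono v hr
      omega
    · intro hr
      have := auxH_mono v hr
      omega
  have hmaps : ∀ x : Fin (k * k), x ∈ (Finset.univ : Finset (Fin (k * k))) →
      auxH v x ∈ Finset.Icc 1 (5 * k) := by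
    intro x _
    rw [Finset.mem_Icc]
    exact ⟨auxH_pos v x, hle5k x⟩
  have hsum := Finset.card_eq_sum_card_fiberwise hmaps
  have hfiber : ∀ b ∈ Finset.Icc 1 (5 * k),
      ((Finset.univ : Finset (Fin (k * k))).filter (fun x => auxH v x = b)).card ≤ α := by
    intro b _
    apply hrat
    intro i hi j hj hij
    rw [Finset.mem_filter] at hi hj
    exact hlevel i j hij (hi.2.trans hj.2.symm)
  have htot : k * k ≤ 5 * k * α := by
    have h1 : (Finset.univ : Finset (Fin (k * k))).card = k * k := by
      rw [Finset.card_univ, Fintype.card_fin]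
    calc k * k = ∑ b ∈ Finset.Icc 1 (5 * k),
          ((Finset.univ : Finset (Fin (k * k))).filter (fun x => auxH v x = b)).card := by
          rw [← hsum, h1]
      _ ≤ ∑ _b ∈ Finset.Icc 1 (5 * k), α := Finset.sum_le_sum hfiber
      _ = (Finset.Icc 1 (5 * k)).card * α := by rw [Finset.sum_const, smul_eq_mul]
      _ = 5 * k * α := by
          rw [Nat.card_Icc]
          have hic : 5 * k + 1 - 1 = 5 * k := by omega
          rw [hic]
  have hfin : k * k ≤ k * (5 * α) := by
    calc k * k ≤ 5 * k * α := htot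
      _ = k * (5 * α) := by ring
  exact Nat.le_of_mul_le_mul_left hfin hk

lemma aux_rat_lower (k : ℕ) (hk : 0 < k) (O : Fin (k * k) × Fin (k * k) → Bool)
    (hO : ∀ f : Fin (5 * k + 1) → Fin (k * k), Function.Injective f → ¬ auxAligned k O f) :
    k ≤ 5 * rationalityNumber (auxM k O) := by
  have hne : {α | Rationalizable (auxM k O) α}.Nonempty :=
    ⟨k * k, aux_rationalizable k hk O⟩
  have hmem := Nat.sInf_mem hne
  obtain ⟨V, hcons, hrat⟩ := hmem
  obtain ⟨v, hv⟩ := List.exists_mem_of_ne_nil V hcons.1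
  exact aux_antichain_bound hk hO hcons hv (hrat v hv)

end AuxLower
section AuxUpper

/-- A voter whose chains are the colour classes, ordered by `e`. -/
def auxVoter {C : Type} {m : ℕ} (c : C → Fin m) (e : C → ℕ) : Voter C :=
  ⟨fun x y => c x = c y ∧ e x < e y,
   fun _ h => lt_irrefl _ h.2,
   fun h1 h2 => ⟨h1.1.trans h2.1, h1.2.trans h2.2⟩⟩

lemma auxVoter_rel {C : Type} {m : ℕ} (c : C → Fin m) (e : C → ℕ) (x y : C) :
    (auxVoter c e).rel x y = (c x = c y ∧ e x < e y) := rfl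

lemma auxVoter_strong {C : Type} {m : ℕ} (c : C → Fin m) (e : C → ℕ) (x y : C) :
    (auxVoter c e).strong x y = (c x = c y ∧ e x < e y) := rfl

lemma auxVoter_weak {C : Type} {m : ℕ} (c : C → Fin m) (e : C → ℕ) (x y : C) :
    (auxVoter c e).weak x y =
      ((c x = c y ∧ e x < e y) ∨ (¬ (c x = c y ∧ e x < e y) ∧ ¬ (c y = c x ∧ e y < e x))) :=
  rfl

lemma auxVoter_rational {C : Type} [Fintype C] {m : ℕ} (c : C → Fin m) (e : C → ℕ)
    (hcomp : ∀ x y : C, x ≠ y → c x = c y → e x < e y ∨ e y < e x) :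
    (auxVoter c e).Rational m := by
  intro A hA
  have hinj : Set.InjOn c A := by
    intro x hx y hy hcxy
    by_contra hne
    have hab := hA x (Finset.mem_coe.mp hx) y (Finset.mem_coe.mp hy) hne
    rcases hcomp x y hne hcxy with h | h
    · exact hab.1 ⟨hcxy, h⟩
    · exact hab.2 ⟨hcxy.symm, h⟩
  calc A.card = (A.image c).card := (Finset.card_image_of_injOn hinj).symm
    _ ≤ (Finset.univ : Finset (Fin m)).card := Finset.card_le_univ _
    _ = m := by rw [Finset.card_univ, Fintype.card_fin]

lemma aux_upper {C : Type} [Fintype C] (M : C → C → ℝ)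
    (hpref : IsPrefMatrix M) (hhalf : HalfIntegral M) :
    (rationalityNumber M : ℕ∞) ≤ (unanimityGraph M).chromaticNumber := by
  classical
  obtain ⟨c⟩ := (unanimityGraph M).colorable_chromaticNumber_of_fintype
  set m : ℕ := (unanimityGraph M).chromaticNumber.toNat with hm
  set e : C → ℕ := fun x => ((Fintype.equivFin C) x : ℕ) with he
  have heinj : Function.Injective e := fun x y h =>
    (Fintype.equivFin C).injective (Fin.ext h)
  set ebound : ℕ := Fintype.card C with heb
  have helt : ∀ x, e x < ebound := fun x => ((Fintype.equivFin C) x).isLt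
  set e' : C → ℕ := fun x => ebound - e x with he'
  have he'iff : ∀ x y : C, (e' x < e' y ↔ e y < e x) := by
    intro x y
    have hx := helt x
    have hy := helt y
    simp only [he']
    constructor <;> intro h <;> omega
  set v1 : Voter C := auxVoter (fun x => c x) e with hv1
  set v2 : Voter C := auxVoter (fun x => c x) e' with hv2
  -- equal colours have no unanimity
  have hhalfpair : ∀ i j : C, i ≠ j → c i = c j → M i j = 1 / 2 := by
    intro i j hij hc
    rcases hhalf i j with h0 | hhalfv | h1
    · have h1 : M j i = 1 := by
        have := hpref.2.2 i j hij
        linarith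
      have hadj : (unanimityGraph M).Adj i j := ⟨hij, Or.inr h1⟩
      exact absurd hc (c.valid hadj)
    · exact hhalfv
    · have hadj : (unanimityGraph M).Adj i j := ⟨hij, Or.inl h1⟩
      exact absurd hc (c.valid hadj)
  have hMle1 : ∀ i j : C, i ≠ j → M i j ≤ 1 := by
    intro i j hij
    have hsum := hpref.2.2 i j hij
    have hge := hpref.2.1 j i
    linarith
  have hcons : Consistent M [v1, v2] := by
    refine ⟨by simp, ?_⟩
    intro i j hij
    have hlen : (([v1, v2] : List (Voter C)).length : ℝ) = 2 := by simp
    by_cases hc : c i = c j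
    · have hM := hhalfpair i j hij hc
      have hene : e i ≠ e j := fun h => hij (heinj h)
      rcases lt_or_gt_of_ne hene with hlt | hgt
      · have hs : countVoters [v1, v2] (fun v => v.strong i j) = 1 := by
          rw [countVoters_cons, countVoters_cons, countVoters_nil, hv1, hv2]
          rw [auxVoter_strong, auxVoter_strong]
          rw [if_pos ⟨hc, hlt⟩, if_neg (fun h => absurd ((he'iff i j).mp h.2) (by omega))]
        have hw : countVoters [v1, v2] (fun v => v.weak i j) = 1 := by
          rw [countVoters_cons, countVoters_cons, countVoters_nil, hv1, hv2]
          rw [auxVoter_weak, auxVoter_weak]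
          rw [if_pos (Or.inl ⟨hc, hlt⟩)]
          rw [if_neg]
          rintro (h | ⟨h1, h2⟩)
          · exact absurd ((he'iff i j).mp h.2) (by omega)
          · exact h2 ⟨hc.symm, (he'iff j i).mpr hlt⟩
        rw [hs, hw, hlen, hM]
        norm_num
      · have hs : countVoters [v1, v2] (fun v => v.strong i j) = 1 := by
          rw [countVoters_cons, countVoters_cons, countVoters_nil, hv1, hv2]
          rw [auxVoter_strong, auxVoter_strong]
          rw [if_neg (fun h : c i = c j ∧ e i < e j => absurd h.2 (by omega)),
            if_pos ⟨hc, (he'iff i j).mpr hgt⟩]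
        have hw : countVoters [v1, v2] (fun v => v.weak i j) = 1 := by
          rw [countVoters_cons, countVoters_cons, countVoters_nil, hv1, hv2]
          rw [auxVoter_weak, auxVoter_weak]
          rw [if_neg]
          · rw [if_pos (Or.inl ⟨hc, (he'iff i j).mpr hgt⟩)]
          rintro (h | ⟨h1, h2⟩)
          · exact absurd h.2 (by omega)
          · exact h2 ⟨hc.symm, hgt⟩
        rw [hs, hw, hlen, hM]
        norm_num
    · have hs : countVoters [v1, v2] (fun v => v.strong i j) = 0 := by
        rw [countVoters_cons, countVoters_cons, countVoters_nil, hv1, hv2]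
        rw [auxVoter_strong, auxVoter_strong]
        rw [if_neg (fun h => hc h.1), if_neg (fun h => hc h.1)]
      have hw : countVoters [v1, v2] (fun v => v.weak i j) = 2 := by
        rw [countVoters_cons, countVoters_cons, countVoters_nil, hv1, hv2]
        rw [auxVoter_weak, auxVoter_weak]
        rw [if_pos (Or.inr ⟨fun h => hc h.1, fun h => hc h.1.symm⟩),
          if_pos (Or.inr ⟨fun h => hc h.1, fun h => hc h.1.symm⟩)]
      rw [hs, hw, hlen]
      constructor
      · simpa using hpref.2.1 i j
      · have := hMle1 i j hij
        norm_num
        linarith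
  have hratl : ∀ v ∈ [v1, v2], v.Rational m := by
    intro v hv
    rcases List.mem_cons.mp hv with rfl | hv
    · apply auxVoter_rational
      intro x y hxy _
      have hene : e x ≠ e y := fun h => hxy (heinj h)
      omega
    · rcases List.mem_cons.mp hv with rfl | hv
      · apply auxVoter_rational
        intro x y hxy _
        have hene : e x ≠ e y := fun h => hxy (heinj h)
        have h1 := helt x
        have h2 := helt y
        simp only [he']
        omega
      · simp at hv
  have hineq : rationalityNumber M ≤ m :=
    Nat.sInf_le ⟨[v1, v2], hcons, hratl⟩
  have hnetop : (unanimityGraph M).chromaticNumber ≠ ⊤ :=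
    ne_top_of_le_ne_top (WithTop.coe_ne_top)
      ((unanimityGraph M).colorable_of_fintype.chromaticNumber_le)
  calc (rationalityNumber M : ℕ∞) ≤ (m : ℕ∞) := by exact_mod_cast hineq
    _ = (unanimityGraph M).chromaticNumber := ENat.coe_toNat hnetop

end AuxUpper
/-- Main theorem for half-integral matrices: every half-integral preference
matrix satisfies `α(M) ≤ χ(G_M)`, and for every positive `k` there is a half-integral
preference matrix with `χ(G_M) = k` and `(1/5)·χ(G_M) ≤ α(M)`. -/
theorem halfIntegral_main_theorem :
    (∀ {C : Type} [Fintype C] (M : C → C → ℝ), IsPrefMatrix M → HalfIntegral M →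
      (rationalityNumber M : ℕ∞) ≤ (unanimityGraph M).chromaticNumber) ∧
    (∀ k : ℕ, 0 < k → ∃ (n : ℕ) (M : Fin n → Fin n → ℝ), IsPrefMatrix M ∧ HalfIntegral M ∧
      (unanimityGraph M).chromaticNumber = (k : ℕ∞) ∧
      (k : ℝ) / 5 ≤ (rationalityNumber M : ℝ)) := by
  constructor
  · intro C _ M hpref hhalf
    exact aux_upper M hpref hhalf
  · intro k hk
    obtain ⟨O, hO⟩ := aux_exists_good k hk
    refine ⟨k * k, auxM k O, auxM_pref k O, auxM_halfIntegral k O, auxM_chrom k hk O, ?_⟩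
    have h5 : k ≤ 5 * rationalityNumber (auxM k O) := aux_rat_lower k hk O hO
    rw [div_le_iff₀ (by norm_num : (0:ℝ) < 5)]
    calc (k : ℝ) ≤ 5 * (rationalityNumber (auxM k O) : ℝ) := by exact_mod_cast h5
      _ = (rationalityNumber (auxM k O) : ℝ) * 5 := by ring
end
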